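/- arXiv:2502.05746 — 13 statements merged into one kernel-verified Lean document; each statement's English description precedes it below -/
import Mathlib

section
/- Let S and S' be completely simple semigroups, neither of which is a left zero semigroup or a right zero semigroup, and let ψ : P(S) → P(S') be an isomorphism of their power semigroups. Then the restriction of ψ to singletons is a bijection from S onto S': there exists a bijection f : S → S' such that ψ({a}) = {f(a)} for every a ∈ S. -/
open Pointwise

/-- A semigroup is completely regular if every element has a commuting
(pseudo-)inverse. -/
def CompletelyRegular (S : Type*) [Semigroup S] : Prop :=
  ∀ a : S, ∃ x : S, a = a * x * a ∧ a * x = x * a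

/-- A semigroup is simple if every element generates the whole semigroup as an
ideal. -/
def SimpleSemigroup (S : Type*) [Semigroup S] : Prop :=
  ∀ a b : S, ∃ x y : S, b = x * a * y

namespace CS0

variable {S : Type*} [Semigroup S]

/-- `a ∈ bS` -/
def rIn (a b : S) : Prop := ∃ x, a = b * x
/-- `a ∈ Sb` -/
def lIn (a b : S) : Prop := ∃ x, a = x * b

def rEq (a b : S) : Prop := rIn a b ∧ rIn b a
def lEq (a b : S) : Prop := lIn a b ∧ lIn b a
def hEq (a b : S) : Prop := rEq a b ∧ lEq a b

lemma rIn_trans {a b c : S} (h1 : rIn a b) (h2 : rIn b c) : rIn a c := by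
  obtain ⟨x, hx⟩ := h1; obtain ⟨y, hy⟩ := h2
  exact ⟨y * x, by rw [hx, hy, mul_assoc]⟩

lemma lIn_trans {a b c : S} (h1 : lIn a b) (h2 : lIn b c) : lIn a c := by
  obtain ⟨x, hx⟩ := h1; obtain ⟨y, hy⟩ := h2
  exact ⟨x * y, by rw [hx, hy, mul_assoc]⟩

lemma rEq_symm {a b : S} (h : rEq a b) : rEq b a := ⟨h.2, h.1⟩
lemma lEq_symm {a b : S} (h : lEq a b) : lEq b a := ⟨h.2, h.1⟩
lemma hEq_symm {a b : S} (h : hEq a b) : hEq b a := ⟨rEq_symm h.1, lEq_symm h.2⟩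

lemma rEq_trans {a b c : S} (h1 : rEq a b) (h2 : rEq b c) : rEq a c :=
  ⟨rIn_trans h1.1 h2.1, rIn_trans h2.2 h1.2⟩
lemma lEq_trans {a b c : S} (h1 : lEq a b) (h2 : lEq b c) : lEq a c :=
  ⟨lIn_trans h1.1 h2.1, lIn_trans h2.2 h1.2⟩
lemma hEq_trans {a b c : S} (h1 : hEq a b) (h2 : hEq b c) : hEq a c :=
  ⟨rEq_trans h1.1 h2.1, lEq_trans h1.2 h2.2⟩

lemma rIn_mul (a b : S) : rIn (a * b) a := ⟨b, rfl⟩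
lemma lIn_mul (a b : S) : lIn (a * b) b := ⟨a, rfl⟩

/-- idempotent is a left identity on its principal right ideal -/
lemma idem_left_id {e a : S} (he : e * e = e) (h : rIn a e) : e * a = a := by
  obtain ⟨x, hx⟩ := h; rw [hx, ← mul_assoc, he]

lemma idem_right_id {e a : S} (he : e * e = e) (h : lIn a e) : a * e = a := by
  obtain ⟨x, hx⟩ := h; rw [hx, mul_assoc, he]

section CR
variable (hCR : CompletelyRegular S)

/-- skolem witness -/
noncomputable def kk (hCR : CompletelyRegular S) (a : S) : S :=
  Classical.choose (hCR a)

lemma kk_spec1 (a : S) : a * kk hCR a * a = a :=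
  (Classical.choose_spec (hCR a)).1.symm

lemma kk_spec2 (a : S) : a * kk hCR a = kk hCR a * a :=
  (Classical.choose_spec (hCR a)).2

/-- the idempotent of the H-class of a -/
noncomputable def ee (hCR : CompletelyRegular S) (a : S) : S := a * kk hCR a

/-- group inverse of a (in its H-class) -/
noncomputable def iv (hCR : CompletelyRegular S) (a : S) : S :=
  kk hCR a * a * kk hCR a

lemma ee_mul_self (a : S) : ee hCR a * a = a := by
  unfold ee; rw [kk_spec1]

lemma self_mul_ee (a : S) : a * ee hCR a = a := by
  unfold ee; rw [kk_spec2, ← mul_assoc, kk_spec1]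

lemma ee_idem (a : S) : ee hCR a * ee hCR a = ee hCR a := by
  unfold ee
  calc a * kk hCR a * (a * kk hCR a) = a * kk hCR a * a * kk hCR a := by
        rw [mul_assoc (a * kk hCR a)]
    _ = a * kk hCR a := by rw [kk_spec1]

lemma mul_iv (a : S) : a * iv hCR a = ee hCR a := by
  unfold iv ee
  calc a * (kk hCR a * a * kk hCR a) = a * kk hCR a * a * kk hCR a := by
        rw [← mul_assoc, ← mul_assoc]
    _ = a * kk hCR a := by rw [kk_spec1]

lemma iv_mul (a : S) : iv hCR a * a = ee hCR a := by
  unfold iv ee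
  calc kk hCR a * a * kk hCR a * a = kk hCR a * (a * kk hCR a * a) := by
        simp only [mul_assoc]
    _ = kk hCR a * a := by rw [kk_spec1]
    _ = a * kk hCR a := (kk_spec2 hCR a).symm

include hCR in
lemma rEq_refl (a : S) : rEq a (a : S) := ⟨⟨kk hCR a * a, by rw [← mul_assoc, kk_spec1]⟩,
  ⟨kk hCR a * a, by rw [← mul_assoc, kk_spec1]⟩⟩

include hCR in
lemma lEq_refl (a : S) : lEq a (a : S) := ⟨⟨a * kk hCR a, by rw [kk_spec1]⟩,
  ⟨a * kk hCR a, by rw [kk_spec1]⟩⟩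

lemma rEq_ee (a : S) : rEq a (ee hCR a) :=
  ⟨⟨a, (ee_mul_self hCR a).symm⟩, ⟨kk hCR a, rfl⟩⟩

lemma lEq_ee (a : S) : lEq a (ee hCR a) := by
  refine ⟨⟨a, (self_mul_ee hCR a).symm⟩, ⟨kk hCR a, ?_⟩⟩
  unfold ee; rw [kk_spec2]

end CR

end CS0


namespace CS0

variable {S : Type*} [Semigroup S]

/-- every idempotent is primitive -/
lemma prim (hCR : CompletelyRegular S) (hSi : SimpleSemigroup S) {e f : S}
    (he : e * e = e) (hf : f * f = f) (hef : e * f = f) (hfe : f * e = f) :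
    f = e := by
  obtain ⟨x, y, hxy⟩ := hSi f e
  obtain ⟨a, ha⟩ : ∃ t : S, t = e * x * f := ⟨_, rfl⟩
  obtain ⟨b, hb⟩ : ∃ t : S, t = f * y * e := ⟨_, rfl⟩
  have hab : a * b = e := by
    rw [ha, hb]
    calc (e * x * f) * (f * y * e) = e * (x * ((f * f) * y)) * e := by
          simp only [mul_assoc]
      _ = e * (x * f * y) * e := by rw [hf]; simp only [mul_assoc]
      _ = e := by rw [← hxy, he, he]
  have hea : e * a = a := by
    rw [ha]
    calc e * (e * x * f) = (e * e) * x * f := by simp only [mul_assoc]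
      _ = e * x * f := by rw [he]
  have hae : a * e = a := by
    rw [ha]
    calc (e * x * f) * e = e * x * (f * e) := by simp only [mul_assoc]
      _ = e * x * f := by rw [hfe]
  have heb : e * b = b := by
    rw [hb]
    calc e * (f * y * e) = (e * f) * y * e := by simp only [mul_assoc]
      _ = f * y * e := by rw [hef]
  have haf : a * f = a := by
    rw [ha]
    calc (e * x * f) * f = e * x * (f * f) := by simp only [mul_assoc]
      _ = e * x * f := by rw [hf]
  obtain ⟨h, hh⟩ : ∃ t : S, t = b * a := ⟨_, rfl⟩
  have hahe : a * h = a := by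
    rw [hh]
    calc a * (b * a) = (a * b) * a := by rw [mul_assoc]
      _ = e * a := by rw [hab]
      _ = a := hea
  have hhe : h * e = h := by
    rw [hh]
    calc (b * a) * e = b * (a * e) := by rw [mul_assoc]
      _ = b * a := by rw [hae]
  have heh : e * h = h := by
    rw [hh]
    calc e * (b * a) = (e * b) * a := by rw [← mul_assoc]
      _ = b * a := by rw [heb]
  have hhf : h * f = h := by
    rw [hh]
    calc (b * a) * f = b * (a * f) := by rw [mul_assoc]
      _ = b * a := by rw [haf]
  have hie : ee hCR a * e = e := by
    calc ee hCR a * e = ee hCR a * (a * b) := by rw [hab]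
      _ = (ee hCR a * a) * b := by rw [mul_assoc]
      _ = a * b := by rw [ee_mul_self]
      _ = e := hab
  have hih : ee hCR a * h = ee hCR a := by
    have h1 : ee hCR a = kk hCR a * a := by unfold ee; rw [kk_spec2]
    calc ee hCR a * h = (kk hCR a * a) * h := by rw [← h1]
      _ = kk hCR a * (a * h) := by rw [mul_assoc]
      _ = kk hCR a * a := by rw [hahe]
      _ = ee hCR a := h1.symm
  have hi_eq_e : ee hCR a = e := by
    calc ee hCR a = ee hCR a * h := hih.symm
      _ = ee hCR a * (h * e) := by rw [hhe]
      _ = (ee hCR a * h) * e := by rw [mul_assoc]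
      _ = ee hCR a * e := by rw [hih]
      _ = e := hie
  have heh_e : e * h = e := by
    calc e * h = ee hCR a * h := by rw [hi_eq_e]
      _ = ee hCR a := hih
      _ = e := hi_eq_e
  have hh_eq_e : h = e := by rw [← heh, heh_e]
  calc f = e * f := hef.symm
    _ = h * f := by rw [hh_eq_e]
    _ = h := hhf
    _ = e := hh_eq_e

/-- KEY: a ∈ (a*c)S for all a c -/
lemma rIn_mul_right (hCR : CompletelyRegular S) (hSi : SimpleSemigroup S) (a c : S) :
    rIn a (a * c) := by
  obtain ⟨e, hee⟩ : ∃ t : S, t = ee hCR a := ⟨_, rfl⟩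
  have he : e * e = e := by rw [hee]; exact ee_idem hCR a
  have hea : e * a = a := by rw [hee]; exact ee_mul_self hCR a
  obtain ⟨x, y, hxy⟩ := hSi (a * c) e
  obtain ⟨α, hα⟩ : ∃ t : S, t = (a * c) * (y * e) := ⟨_, rfl⟩
  obtain ⟨β, hβ⟩ : ∃ t : S, t = e * x := ⟨_, rfl⟩
  have hba : β * α = e := by
    rw [hα, hβ]
    calc (e * x) * ((a * c) * (y * e)) = e * (x * (a * c) * y) * e := by
          simp only [mul_assoc]
      _ = e := by rw [← hxy, he, he]
  have hαe : α * e = α := by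
    rw [hα]
    calc ((a * c) * (y * e)) * e = (a * c) * (y * (e * e)) := by simp only [mul_assoc]
      _ = (a * c) * (y * e) := by rw [he]
  have heα : e * α = α := by
    rw [hα]
    calc e * ((a * c) * (y * e)) = (e * a) * (c * (y * e)) := by simp only [mul_assoc]
      _ = a * (c * (y * e)) := by rw [hea]
      _ = (a * c) * (y * e) := by rw [mul_assoc]
  obtain ⟨δ, hδ⟩ : ∃ t : S, t = α * β := ⟨_, rfl⟩
  have heδ : e * δ = δ := by
    rw [hδ, ← mul_assoc, heα]
  obtain ⟨q, hq⟩ : ∃ t : S, t = e * δ * e := ⟨_, rfl⟩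
  have hqe : q * e = q := by
    rw [hq]
    calc (e * δ * e) * e = e * δ * (e * e) := by rw [mul_assoc]
      _ = e * δ * e := by rw [he]
  have heq : e * q = q := by
    rw [hq]
    calc e * (e * δ * e) = (e * e) * δ * e := by simp only [mul_assoc]
      _ = e * δ * e := by rw [he]
  have hje : ee hCR q * e = ee hCR q := by
    have h1 : ee hCR q = kk hCR q * q := by unfold ee; rw [kk_spec2]
    calc ee hCR q * e = (kk hCR q * q) * e := by rw [← h1]
      _ = kk hCR q * (q * e) := by rw [mul_assoc]
      _ = kk hCR q * q := by rw [hqe]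
      _ = ee hCR q := h1.symm
  have hej : e * ee hCR q = ee hCR q := by
    unfold ee
    calc e * (q * kk hCR q) = (e * q) * kk hCR q := by rw [mul_assoc]
      _ = q * kk hCR q := by rw [heq]
  have hj_eq : ee hCR q = e := prim hCR hSi he (ee_idem hCR q) hej hje
  have hqk : q * kk hCR q = e := by
    have h2 := hj_eq; unfold ee at h2; exact h2
  have he_dS : e = δ * (e * kk hCR q) := by
    calc e = q * kk hCR q := hqk.symm
      _ = (e * δ) * (e * kk hCR q) := by rw [hq]; simp only [mul_assoc]
      _ = δ * (e * kk hCR q) := by rw [heδ]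
  refine ⟨(y * e) * ((e * x) * ((e * kk hCR q) * a)), ?_⟩
  calc a = e * a := hea.symm
    _ = (δ * (e * kk hCR q)) * a := by rw [← he_dS]
    _ = (a * c) * ((y * e) * ((e * x) * ((e * kk hCR q) * a))) := by
        rw [hδ, hα, hβ]; simp only [mul_assoc]

end CS0
namespace CS0

variable {S : Type*} [Semigroup S]

open MulOpposite

lemma opCR (hCR : CompletelyRegular S) : CompletelyRegular Sᵐᵒᵖ := by
  intro a
  obtain ⟨x, h1, h2⟩ := hCR a.unop
  refine ⟨op x, ?_, ?_⟩
  · apply unop_injective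
    simp only [unop_mul, unop_op]
    rw [mul_assoc] at h1
    exact h1
  · apply unop_injective
    simp only [unop_mul, unop_op]
    exact h2.symm

lemma opSimple (hSi : SimpleSemigroup S) : SimpleSemigroup Sᵐᵒᵖ := by
  intro a b
  obtain ⟨x, y, hxy⟩ := hSi a.unop b.unop
  refine ⟨op y, op x, ?_⟩
  apply unop_injective
  simp only [unop_mul, unop_op]
  rw [mul_assoc] at hxy
  exact hxy

lemma rIn_op {a b : S} : rIn (op a) (op b) ↔ lIn a b := by
  constructor
  · rintro ⟨x, hx⟩
    refine ⟨x.unop, ?_⟩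
    have := congrArg unop hx
    simpa using this
  · rintro ⟨x, hx⟩
    refine ⟨op x, ?_⟩
    rw [hx]
    rfl

lemma lIn_op {a b : S} : lIn (op a) (op b) ↔ rIn a b := by
  constructor
  · rintro ⟨x, hx⟩
    refine ⟨x.unop, ?_⟩
    have := congrArg unop hx
    simpa using this
  · rintro ⟨x, hx⟩
    refine ⟨op x, ?_⟩
    rw [hx]
    rfl

lemma lIn_mul_right (hCR : CompletelyRegular S) (hSi : SimpleSemigroup S) (a c : S) :
    lIn a (c * a) := by
  have h := rIn_mul_right (opCR hCR) (opSimple hSi) (op a) (op c)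
  obtain ⟨x, hx⟩ := h
  refine ⟨x.unop, ?_⟩
  have := congrArg unop hx
  simpa [mul_assoc] using this

lemma rEq_mul (hCR : CompletelyRegular S) (hSi : SimpleSemigroup S) (a b : S) :
    rEq (a * b) a := ⟨rIn_mul a b, rIn_mul_right hCR hSi a b⟩

lemma lEq_mul (hCR : CompletelyRegular S) (hSi : SimpleSemigroup S) (a b : S) :
    lEq (a * b) b := ⟨lIn_mul a b, lIn_mul_right hCR hSi b a⟩

lemma cancel_left (hCR : CompletelyRegular S) (hSi : SimpleSemigroup S) {a b x : S}
    (h : rEq a b) (hx : x * a = x * b) : a = b := by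
  obtain ⟨f, hf⟩ : ∃ t : S, t = ee hCR a := ⟨_, rfl⟩
  have hfa : f * a = a := by rw [hf]; exact ee_mul_self hCR a
  have hfb : f * b = b := by
    obtain ⟨y, hy⟩ := h.2
    calc f * b = f * (a * y) := by rw [← hy]
      _ = (f * a) * y := by rw [mul_assoc]
      _ = a * y := by rw [hfa]
      _ = b := hy.symm
  obtain ⟨w, hw⟩ : ∃ t : S, t = x * f := ⟨_, rfl⟩
  have hwa : w * a = x * a := by
    rw [hw]
    calc (x * f) * a = x * (f * a) := by rw [mul_assoc]
      _ = x * a := by rw [hfa]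
  have hwb : w * b = x * b := by
    rw [hw]
    calc (x * f) * b = x * (f * b) := by rw [mul_assoc]
      _ = x * b := by rw [hfb]
  have hwab : w * a = w * b := by rw [hwa, hwb, hx]
  have hewa : ee hCR w * a = ee hCR w * b := by
    have h1 : ee hCR w = kk hCR w * w := by unfold ee; rw [kk_spec2]
    rw [h1, mul_assoc, mul_assoc, hwab]
  have hfw : lIn f w := by rw [hw]; exact lIn_mul_right hCR hSi f x
  have hfew : f * ee hCR w = f := by
    obtain ⟨t, ht⟩ := hfw
    calc f * ee hCR w = (t * w) * ee hCR w := by rw [← ht]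
      _ = t * (w * ee hCR w) := by rw [mul_assoc]
      _ = t * w := by rw [self_mul_ee]
      _ = f := ht.symm
  calc a = f * a := hfa.symm
    _ = (f * ee hCR w) * a := by rw [hfew]
    _ = f * (ee hCR w * a) := by rw [mul_assoc]
    _ = f * (ee hCR w * b) := by rw [hewa]
    _ = (f * ee hCR w) * b := by rw [mul_assoc]
    _ = f * b := by rw [hfew]
    _ = b := hfb

lemma cancel_right (hCR : CompletelyRegular S) (hSi : SimpleSemigroup S) {a b x : S}
    (h : lEq a b) (hx : a * x = b * x) : a = b := by
  have h' : rEq (op a) (op b) := ⟨rIn_op.mpr h.1, rIn_op.mpr h.2⟩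
  have hx' : op x * op a = op x * op b := by
    apply unop_injective
    simp only [unop_mul, unop_op]
    exact hx
  have := cancel_left (opCR hCR) (opSimple hSi) h' hx'
  simpa using congrArg unop this

end CS0
namespace CS0

open Pointwise

variable {S : Type*} [Semigroup S]

/-- the full "rectangle" (union of H-classes) spanned by A -/
def sg (A : Set S) : Set S := {y | ∃ a ∈ A, ∃ b ∈ A, rEq y a ∧ lEq y b}

lemma mem_sg {A : Set S} {y : S} :
    y ∈ sg A ↔ ∃ a ∈ A, ∃ b ∈ A, rEq y a ∧ lEq y b := Iff.rfl

lemma mem_sg_self (hCR : CompletelyRegular S) {A : Set S} {a : S} (ha : a ∈ A) :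
    a ∈ sg A := ⟨a, ha, a, ha, rEq_refl hCR a, lEq_refl hCR a⟩

lemma sg_mono {A B : Set S} (h : A ⊆ B) : sg A ⊆ sg B := by
  rintro y ⟨a, ha, b, hb, h1, h2⟩
  exact ⟨a, h ha, b, h hb, h1, h2⟩

lemma sg_sg (hCR : CompletelyRegular S) (A : Set S) : sg (sg A) = sg A := by
  ext y
  constructor
  · rintro ⟨p, ⟨a, ha, _, _, hp1, _⟩, q, ⟨_, _, b, hb, _, hq2⟩, h1, h2⟩
    exact ⟨a, ha, b, hb, rEq_trans h1 hp1, lEq_trans h2 hq2⟩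
  · exact fun h => mem_sg_self hCR h

lemma sg_nonempty (hCR : CompletelyRegular S) {A : Set S} (h : A.Nonempty) :
    (sg A).Nonempty := ⟨h.choose, mem_sg_self hCR h.choose_spec⟩

lemma sg_hEq_closed {A : Set S} {z z' : S} (hz : z ∈ sg A) (h : hEq z' z) :
    z' ∈ sg A := by
  obtain ⟨a, ha, b, hb, h1, h2⟩ := hz
  exact ⟨a, ha, b, hb, rEq_trans h.1 h1, lEq_trans h.2 h2⟩

/-- absorbing sets: the P*-definable avatar of "full rectangles" -/
def Absorb (E : Set S) : Prop :=
  E.Nonempty ∧ ∀ Y : Set S, Y.Nonempty → E * Y * E = E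

/-- the key sandwich computation -/
lemma sandwich (hCR : CompletelyRegular S) (hSi : SimpleSemigroup S)
    {u v y : S} (z : S) (h1 : rEq y u) (h2 : lEq y v) :
    u * (z * iv hCR (u * z) * y * iv hCR (z * v) * z) * v = y := by
  have hyu : rIn y (ee hCR (u * z)) :=
    (rEq_trans (rEq_trans h1 (rEq_symm (rEq_mul hCR hSi u z))) (rEq_ee hCR (u * z))).1
  have hyv : lIn y (ee hCR (z * v)) :=
    (lEq_trans (lEq_trans h2 (lEq_symm (lEq_mul hCR hSi z v))) (lEq_ee hCR (z * v))).1
  calc u * (z * iv hCR (u * z) * y * iv hCR (z * v) * z) * v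
      = (u * z * iv hCR (u * z)) * (y * (iv hCR (z * v) * (z * v))) := by
        simp only [mul_assoc]
    _ = ee hCR (u * z) * (y * ee hCR (z * v)) := by rw [mul_iv, iv_mul]
    _ = ee hCR (u * z) * y := by rw [idem_right_id (ee_idem hCR (z * v)) hyv]
    _ = y := idem_left_id (ee_idem hCR (u * z)) hyu

/-- absorbing sets are "full": closed under passing to any H-class they span -/
lemma absorb_full (hCR : CompletelyRegular S) (hSi : SimpleSemigroup S)
    {X : Set S} (hX : Absorb X) {z z' t : S} (hz : z ∈ X) (hz' : z' ∈ X)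
    (h1 : rEq t z) (h2 : lEq t z') : t ∈ X := by
  have h := sandwich hCR hSi z h1 h2
  have hmem : z * (z * iv hCR (z * z) * t * iv hCR (z * z') * z) * z' ∈
      X * {z * iv hCR (z * z) * t * iv hCR (z * z') * z} * X :=
    Set.mul_mem_mul (Set.mul_mem_mul hz (Set.mem_singleton _)) hz'
  rw [hX.2 _ (Set.singleton_nonempty _)] at hmem
  rwa [h] at hmem

lemma mul_absorb (hCR : CompletelyRegular S) (hSi : SimpleSemigroup S)
    {A X : Set S} (hA : A.Nonempty) (hX : Absorb X) :
    A * X * A = sg A := by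
  ext y
  constructor
  · rintro ⟨w, ⟨a, ha, x, hx, rfl⟩, a', ha', rfl⟩
    refine ⟨a, ha, a', ha', ?_, lEq_mul hCR hSi (a * x) a'⟩
    exact rEq_trans (rEq_mul hCR hSi (a * x) a') (rEq_mul hCR hSi a x)
  · rintro ⟨a, ha, b, hb, h1, h2⟩
    obtain ⟨z, hz⟩ := hX.1
    have hxX : z * iv hCR (a * z) * y * iv hCR (z * b) * z ∈ X := by
      apply absorb_full hCR hSi hX hz hz
      · have heq : z * iv hCR (a * z) * y * iv hCR (z * b) * z
            = z * (iv hCR (a * z) * y * iv hCR (z * b) * z) := by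
          simp only [mul_assoc]
        rw [heq]
        exact rEq_mul hCR hSi z _
      · exact lEq_mul hCR hSi _ z
    have := sandwich hCR hSi (u := a) (v := b) z h1 h2
    rw [← this]
    exact Set.mul_mem_mul (Set.mul_mem_mul ha hxX) hb

lemma absorb_univ (hCR : CompletelyRegular S) (hSi : SimpleSemigroup S)
    [Nonempty S] : Absorb (Set.univ : Set S) := by
  refine ⟨Set.univ_nonempty, fun Y hY => ?_⟩
  apply Set.eq_of_subset_of_subset (Set.subset_univ _)
  intro s _
  obtain ⟨w, hw⟩ := hY
  have hkey : (s * iv hCR (w * s)) * w * s = s := by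
    have hs : lIn s (ee hCR (w * s)) :=
      (lEq_trans (lEq_symm (lEq_mul hCR hSi w s)) (lEq_ee hCR (w * s))).1
    calc (s * iv hCR (w * s)) * w * s = s * (iv hCR (w * s) * (w * s)) := by
          simp only [mul_assoc]
      _ = s * ee hCR (w * s) := by rw [iv_mul]
      _ = s := idem_right_id (ee_idem hCR (w * s)) hs
  rw [← hkey]
  exact Set.mul_mem_mul (Set.mul_mem_mul (Set.mem_univ _) hw) (Set.mem_univ _)

/-- the singleton of an idempotent satisfies the Q-property -/
lemma Q_of_idem (hCR : CompletelyRegular S) {e : S} (he : e * e = e) :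
    ({e} : Set S) * {e} = {e} ∧
      ∀ X : Set S, X.Nonempty → sg X = sg ({e} : Set S) →
        (({e} : Set S) * X = X ∧ X * ({e} : Set S) = X) := by
  constructor
  · rw [Set.singleton_mul_singleton, he]
  · intro X hX hsg
    have hmem : ∀ x ∈ X, rEq x e ∧ lEq x e := by
      intro x hx
      have h1 : x ∈ sg ({e} : Set S) := hsg ▸ mem_sg_self hCR hx
      obtain ⟨a, ha, b, hb, h2, h3⟩ := h1
      rw [Set.mem_singleton_iff] at ha hb
      exact ⟨ha ▸ h2, hb ▸ h3⟩
    constructor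
    · ext z
      constructor
      · rintro ⟨p, hp, x, hx, rfl⟩
        rw [Set.mem_singleton_iff] at hp
        subst hp
        show p * x ∈ X
        rw [idem_left_id he (hmem x hx).1.1]
        exact hx
      · intro hz
        refine ⟨e, rfl, z, hz, ?_⟩
        show e * z = z
        rw [idem_left_id he (hmem z hz).1.1]
    · ext z
      constructor
      · rintro ⟨x, hx, p, hp, rfl⟩
        rw [Set.mem_singleton_iff] at hp
        subst hp
        show x * p ∈ X
        rw [idem_right_id he (hmem x hx).2.1]
        exact hx
      · intro hz
        refine ⟨z, hz, e, rfl, ?_⟩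
        show z * e = z
        rw [idem_right_id he (hmem z hz).2.1]

/-- units at a singleton idempotent are singletons -/
lemma unit_singleton (hCR : CompletelyRegular S) (hSi : SimpleSemigroup S)
    {A B : Set S} {e : S} (hA : A.Nonempty) (hB : B.Nonempty)
    (hAe : A * {e} = A) (hAB : A * B = {e}) (hBA : B * A = {e}) :
    ∃ a, A = {a} := by
  obtain ⟨b₀, hb₀⟩ := hB
  have hlEq : ∀ a ∈ A, lEq a e := by
    intro a ha
    constructor
    · -- a ∈ A = A * {e}
      rw [← hAe] at ha
      obtain ⟨a₁, _, p, hp, rfl⟩ := ha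
      rw [Set.mem_singleton_iff] at hp
      exact ⟨a₁, by rw [hp]⟩
    · -- e = b₀ * a
      have : b₀ * a ∈ B * A := Set.mul_mem_mul hb₀ ha
      rw [hBA, Set.mem_singleton_iff] at this
      exact ⟨b₀, this.symm⟩
  obtain ⟨a₀, ha₀⟩ := hA
  refine ⟨a₀, ?_⟩
  apply Set.eq_singleton_iff_unique_mem.mpr
  refine ⟨ha₀, fun a ha => ?_⟩
  have h1 : a * b₀ = e := by
    have := Set.mul_mem_mul ha hb₀
    rw [hAB, Set.mem_singleton_iff] at this
    exact this
  have h2 : a₀ * b₀ = e := by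
    have := Set.mul_mem_mul ha₀ hb₀
    rw [hAB, Set.mem_singleton_iff] at this
    exact this
  exact cancel_right hCR hSi (lEq_trans (hlEq a ha) (lEq_symm (hlEq a₀ ha₀)))
    (by rw [h1, h2])

end CS0
namespace CS0

open Pointwise

variable {S : Type*} [Semigroup S]

def hSetoid (hCR : CompletelyRegular S) : Setoid S :=
  ⟨hEq, ⟨fun a => ⟨rEq_refl hCR a, lEq_refl hCR a⟩, hEq_symm, hEq_trans⟩⟩

noncomputable def ct (hCR : CompletelyRegular S) (t : S) : S :=
  (Quotient.mk (hSetoid hCR) t).out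

lemma ct_hEq (hCR : CompletelyRegular S) (t : S) : hEq (ct hCR t) t :=
  Quotient.exact (s := hSetoid hCR) (Quotient.out_eq _)

lemma ct_congr (hCR : CompletelyRegular S) {t t' : S} (h : hEq t t') :
    ct hCR t = ct hCR t' := by
  unfold ct
  rw [Quotient.sound (s := hSetoid hCR) h]

/-- construction of an `E`-shaped transversal with a prescribed value on one cell -/
lemma transversal (hCR : CompletelyRegular S) {E : Set S} {w y₀ : S}
    (hw : w ∈ sg E) (hy₀ : hEq y₀ w) :
    ∃ X : Set S, X.Nonempty ∧ sg X = sg E ∧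
      (∀ t ∈ X, hEq t w → t = y₀) ∧ y₀ ∈ X ∧
      (∀ z ∈ sg E, ¬ hEq z w → ct hCR z ∈ X) := by
  have hy₀sg : y₀ ∈ sg E := sg_hEq_closed hw hy₀
  have hctX : ∀ z ∈ sg E, ¬ hEq z w →
      (ct hCR z ∈ sg E ∧ ((hEq (ct hCR z) w ∧ ct hCR z = y₀) ∨
        (¬ hEq (ct hCR z) w ∧ ct hCR z = ct hCR (ct hCR z)))) := by
    intro z hz hzw
    refine ⟨sg_hEq_closed hz (ct_hEq hCR z), Or.inr ⟨?_, ?_⟩⟩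
    · exact fun h => hzw (hEq_trans (hEq_symm (ct_hEq hCR z)) h)
    · exact (ct_congr hCR (ct_hEq hCR z)).symm
  refine ⟨{t | t ∈ sg E ∧ ((hEq t w ∧ t = y₀) ∨ (¬ hEq t w ∧ t = ct hCR t))},
    ⟨y₀, ⟨hy₀sg, Or.inl ⟨hy₀, rfl⟩⟩⟩, ?_, ?_, ⟨hy₀sg, Or.inl ⟨hy₀, rfl⟩⟩, ?_⟩
  · -- sg X = sg E
    apply Set.eq_of_subset_of_subset
    · have h1 : {t | t ∈ sg E ∧ ((hEq t w ∧ t = y₀) ∨ (¬ hEq t w ∧ t = ct hCR t))}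
          ⊆ sg E := fun t ht => ht.1
      calc sg {t | t ∈ sg E ∧ ((hEq t w ∧ t = y₀) ∨ (¬ hEq t w ∧ t = ct hCR t))}
          ⊆ sg (sg E) := sg_mono h1
        _ = sg E := sg_sg hCR E
    · intro z hz
      by_cases hzw : hEq z w
      · have h2 : hEq z y₀ := hEq_trans hzw (hEq_symm hy₀)
        exact ⟨y₀, ⟨hy₀sg, Or.inl ⟨hy₀, rfl⟩⟩, y₀, ⟨hy₀sg, Or.inl ⟨hy₀, rfl⟩⟩,
          h2.1, h2.2⟩
      · obtain ⟨hmem, hbr⟩ := hctX z hz hzw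
        have h3 : hEq z (ct hCR z) := hEq_symm (ct_hEq hCR z)
        exact ⟨ct hCR z, ⟨hmem, hbr⟩, ct hCR z, ⟨hmem, hbr⟩, h3.1, h3.2⟩
  · -- uniqueness on the cell of w
    rintro t ⟨-, (⟨-, ht⟩ | ⟨hnt, -⟩)⟩ htw
    · exact ht
    · exact absurd htw hnt
  · -- ct-representatives belong
    intro z hz hzw
    exact hctX z hz hzw

/-- an idempotent set with the Q-property is a singleton (non-band case) -/
lemma Qpred_suff (hCR : CompletelyRegular S) (hSi : SimpleSemigroup S)
    (hnb : ∃ s : S, s * s ≠ s) {E : Set S}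
    (hE : E.Nonempty) (hQ1 : E * E = E)
    (hQ2 : ∀ X : Set S, X.Nonempty → sg X = sg E → (E * X = X ∧ X * E = X)) :
    ∃ e, E = {e} := by
  obtain ⟨s₀, hs₀⟩ := hnb
  have hdist : s₀ ≠ ee hCR s₀ := by
    intro h
    apply hs₀
    nth_rewrite 1 [h]
    exact ee_mul_self hCR s₀
  have hpair : hEq s₀ (ee hCR s₀) := ⟨rEq_ee hCR s₀, lEq_ee hCR s₀⟩
  have stepA : ∀ u ∈ E, ∀ y, hEq y u → u * y = y := by
    intro u hu y hy
    obtain ⟨X, hXne, hXsg, hXuniq, hXy, -⟩ := transversal hCR (mem_sg_self hCR hu) hy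
    have hmem : u * y ∈ X := by
      rw [← (hQ2 X hXne hXsg).1]
      exact Set.mul_mem_mul hu hXy
    exact hXuniq _ hmem
      ⟨rEq_mul hCR hSi u y, lEq_trans (lEq_mul hCR hSi u y) hy.2⟩
  have stepB : ∀ u ∈ E, ∀ y, hEq y u → y * u = y := by
    intro u hu y hy
    obtain ⟨X, hXne, hXsg, hXuniq, hXy, -⟩ := transversal hCR (mem_sg_self hCR hu) hy
    have hmem : y * u ∈ X := by
      rw [← (hQ2 X hXne hXsg).2]
      exact Set.mul_mem_mul hXy hu
    exact hXuniq _ hmem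
      ⟨rEq_trans (rEq_mul hCR hSi y u) hy.1, lEq_mul hCR hSi y u⟩
  have two : ∀ w : S, ∃ y₁ y₂, hEq y₁ w ∧ hEq y₂ w ∧ y₁ ≠ y₂ := by
    intro w
    refine ⟨w * s₀ * w, w * ee hCR s₀ * w, ?_, ?_, ?_⟩
    · exact ⟨rEq_trans (rEq_mul hCR hSi (w * s₀) w) (rEq_mul hCR hSi w s₀),
        lEq_mul hCR hSi (w * s₀) w⟩
    · exact ⟨rEq_trans (rEq_mul hCR hSi (w * ee hCR s₀) w) (rEq_mul hCR hSi w (ee hCR s₀)),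
        lEq_mul hCR hSi (w * ee hCR s₀) w⟩
    · intro h
      have hl : lEq (w * s₀) (w * ee hCR s₀) :=
        lEq_trans (lEq_trans (lEq_mul hCR hSi w s₀) hpair.2)
          (lEq_symm (lEq_mul hCR hSi w (ee hCR s₀)))
      have h2 : w * s₀ = w * ee hCR s₀ := cancel_right hCR hSi hl h
      exact hdist (cancel_left hCR hSi hpair.1 h2)
  have stepC : ∀ u₁ ∈ E, ∀ u₂ ∈ E, rEq u₁ u₂ := by
    intro u₁ hu₁ u₂ hu₂
    by_contra hr
    have hwE : u₁ * u₂ ∈ E := by rw [← hQ1]; exact Set.mul_mem_mul hu₁ hu₂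
    obtain ⟨y₁, y₂, hy₁, hy₂, hne12⟩ := two (u₁ * u₂)
    have hnu₂ : ¬ hEq u₂ (u₁ * u₂) := by
      intro h
      exact hr (rEq_trans (rEq_symm (rEq_mul hCR hSi u₁ u₂)) (rEq_symm h.1))
    have hctmem : ∀ y₀, hEq y₀ (u₁ * u₂) → u₁ * ct hCR u₂ = y₀ := by
      intro y₀ hy₀
      obtain ⟨X, hXne, hXsg, hXuniq, -, hXct⟩ :=
        transversal hCR (mem_sg_self hCR hwE) hy₀
      have hct : ct hCR u₂ ∈ X := hXct u₂ (mem_sg_self hCR hu₂) hnu₂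
      have hmem : u₁ * ct hCR u₂ ∈ X := by
        rw [← (hQ2 X hXne hXsg).1]
        exact Set.mul_mem_mul hu₁ hct
      refine hXuniq _ hmem ⟨?_, ?_⟩
      · exact rEq_trans (rEq_mul hCR hSi u₁ (ct hCR u₂))
          (rEq_symm (rEq_mul hCR hSi u₁ u₂))
      · exact lEq_trans (lEq_trans (lEq_mul hCR hSi u₁ (ct hCR u₂)) (ct_hEq hCR u₂).2)
          (lEq_symm (lEq_mul hCR hSi u₁ u₂))
    exact hne12 ((hctmem y₁ hy₁).symm.trans (hctmem y₂ hy₂))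
  have stepD : ∀ u₁ ∈ E, ∀ u₂ ∈ E, lEq u₁ u₂ := by
    intro u₁ hu₁ u₂ hu₂
    by_contra hl
    have hwE : u₂ * u₁ ∈ E := by rw [← hQ1]; exact Set.mul_mem_mul hu₂ hu₁
    obtain ⟨y₁, y₂, hy₁, hy₂, hne12⟩ := two (u₂ * u₁)
    have hnu₂ : ¬ hEq u₂ (u₂ * u₁) := by
      intro h
      exact hl (lEq_trans (lEq_symm (lEq_mul hCR hSi u₂ u₁)) (lEq_symm h.2))
    have hctmem : ∀ y₀, hEq y₀ (u₂ * u₁) → ct hCR u₂ * u₁ = y₀ := by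
      intro y₀ hy₀
      obtain ⟨X, hXne, hXsg, hXuniq, -, hXct⟩ :=
        transversal hCR (mem_sg_self hCR hwE) hy₀
      have hct : ct hCR u₂ ∈ X := hXct u₂ (mem_sg_self hCR hu₂) hnu₂
      have hmem : ct hCR u₂ * u₁ ∈ X := by
        rw [← (hQ2 X hXne hXsg).2]
        exact Set.mul_mem_mul hct hu₁
      refine hXuniq _ hmem ⟨?_, ?_⟩
      · exact rEq_trans (rEq_trans (rEq_mul hCR hSi (ct hCR u₂) u₁) (ct_hEq hCR u₂).1)
          (rEq_symm (rEq_mul hCR hSi u₂ u₁))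
      · exact lEq_trans (lEq_mul hCR hSi (ct hCR u₂) u₁)
          (lEq_symm (lEq_mul hCR hSi u₂ u₁))
    exact hne12 ((hctmem y₁ hy₁).symm.trans (hctmem y₂ hy₂))
  obtain ⟨u₀, hu₀⟩ := hE
  refine ⟨u₀, Set.eq_singleton_iff_unique_mem.mpr ⟨hu₀, fun v hv => ?_⟩⟩
  have h1 : hEq u₀ v := ⟨stepC u₀ hu₀ v hv, stepD u₀ hu₀ v hv⟩
  have h2 : v * u₀ = u₀ := stepA v hv u₀ h1
  have h3 : v * u₀ = v := stepB u₀ hu₀ v (hEq_symm h1)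
  rw [← h3, h2]

end CS0
namespace CS0

open Pointwise

variable {S : Type*} [Semigroup S]

lemma band_trivcell (hband : ∀ x : S, x * x = x) {a b : S} (h : hEq a b) : a = b := by
  obtain ⟨⟨-, ⟨x₂, hx₂⟩⟩, ⟨x₃, hx₃⟩, -⟩ := h
  have h1 : a * b = a := by rw [hx₃, mul_assoc, hband]
  have h2 : a * b = b := by rw [hx₂, ← mul_assoc, hband]
  rw [← h1, h2]

lemma band_sq (hCR : CompletelyRegular S) (hSi : SimpleSemigroup S)
    (hband : ∀ x : S, x * x = x) (A : Set S) : A * A = sg A := by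
  ext y
  constructor
  · rintro ⟨a, ha, b, hb, rfl⟩
    exact ⟨a, ha, b, hb, rEq_mul hCR hSi a b, lEq_mul hCR hSi a b⟩
  · rintro ⟨a, ha, b, hb, h1, h2⟩
    have hy : y = a * b := band_trivcell hband
      ⟨rEq_trans h1 (rEq_symm (rEq_mul hCR hSi a b)),
       lEq_trans h2 (lEq_symm (lEq_mul hCR hSi a b))⟩
    rw [hy]
    exact Set.mul_mem_mul ha hb

lemma band_sg_singleton (hCR : CompletelyRegular S)
    (hband : ∀ x : S, x * x = x) (a : S) : sg ({a} : Set S) = {a} := by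
  ext y
  constructor
  · rintro ⟨p, hp, q, hq, h1, h2⟩
    rw [Set.mem_singleton_iff] at hp hq
    subst hp; subst hq
    exact band_trivcell hband ⟨h1, h2⟩
  · intro h
    rw [Set.mem_singleton_iff] at h
    subst h
    exact mem_sg_self hCR rfl

def Thin (A : Set S) : Prop :=
  (∀ p ∈ A, ∀ q ∈ A, rEq p q) ∨ (∀ p ∈ A, ∀ q ∈ A, lEq p q)

lemma band_fib (hCR : CompletelyRegular S) (hSi : SimpleSemigroup S)
    (hband : ∀ x : S, x * x = x) {A : Set S} :
    (∀ W : Set S, W.Nonempty → sg W = sg A → W = sg A) ↔ Thin (sg A) := by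
  constructor
  · intro huniq
    by_contra hthin
    have hnr : ¬ ∀ p ∈ sg A, ∀ q ∈ sg A, rEq p q := fun h => hthin (Or.inl h)
    have hnl : ¬ ∀ p ∈ sg A, ∀ q ∈ sg A, lEq p q := fun h => hthin (Or.inr h)
    push_neg at hnr hnl
    obtain ⟨p, hp, q, hq, hpq⟩ := hnr
    obtain ⟨p', hp', q', hq', hpq'⟩ := hnl
    have hc : ∃ c ∈ sg A, ¬ lEq c p := by
      by_cases h1 : lEq p' p
      · exact ⟨q', hq', fun h => hpq' (lEq_trans h1 (lEq_symm h))⟩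
      · exact ⟨p', hp', h1⟩
    obtain ⟨c, hcsg, hcl⟩ := hc
    have hd : ∃ d ∈ sg A, ¬ rEq d p := ⟨q, hq, fun h => hpq (rEq_symm h)⟩
    obtain ⟨d, hdsg, hdr⟩ := hd
    have hqW : q ∈ sg A \ {p} := by
      refine ⟨hq, fun h => ?_⟩
      rw [Set.mem_singleton_iff] at h
      subst h
      exact hpq (rEq_refl hCR q)
    have hWsg : sg (sg A \ {p}) = sg A := by
      apply Set.eq_of_subset_of_subset
      · calc sg (sg A \ {p}) ⊆ sg (sg A) := sg_mono (fun t ht => ht.1)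
          _ = sg A := sg_sg hCR A
      · intro y hy
        by_cases hyp : y = p
        · subst hyp
          have hx_mem : y * c ∈ sg A := by
            obtain ⟨ay, hay, -, -, h1, -⟩ := hy
            obtain ⟨-, -, bc, hbc, -, h4⟩ := hcsg
            exact ⟨ay, hay, bc, hbc, rEq_trans (rEq_mul hCR hSi y c) h1,
              lEq_trans (lEq_mul hCR hSi y c) h4⟩
          have hx_ne : y * c ≠ y := by
            intro h
            exact hcl (lEq_symm (h ▸ lEq_mul hCR hSi y c))
          have hx'_mem : d * y ∈ sg A := by
            obtain ⟨-, -, byy, hby, -, h2⟩ := hy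
            obtain ⟨ad, had, -, -, h3, -⟩ := hdsg
            exact ⟨ad, had, byy, hby, rEq_trans (rEq_mul hCR hSi d y) h3,
              lEq_trans (lEq_mul hCR hSi d y) h2⟩
          have hx'_ne : d * y ≠ y := by
            intro h
            exact hdr (rEq_symm (h ▸ rEq_mul hCR hSi d y))
          refine ⟨y * c, ⟨hx_mem, ?_⟩, d * y, ⟨hx'_mem, ?_⟩, ?_, ?_⟩
          · exact fun h => hx_ne (Set.mem_singleton_iff.mp h)
          · exact fun h => hx'_ne (Set.mem_singleton_iff.mp h)
          · exact rEq_symm (rEq_mul hCR hSi y c)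
          · exact lEq_symm (lEq_mul hCR hSi d y)
        · exact ⟨y, ⟨hy, fun h => hyp (Set.mem_singleton_iff.mp h)⟩,
            y, ⟨hy, fun h => hyp (Set.mem_singleton_iff.mp h)⟩,
            rEq_refl hCR y, lEq_refl hCR y⟩
    have hW := huniq (sg A \ {p}) ⟨q, hqW⟩ hWsg
    have hpW : p ∈ sg A \ {p} := by rw [hW]; exact hp
    exact hpW.2 rfl
  · intro hthin W hWne hWsg
    apply Set.eq_of_subset_of_subset
    · intro w hw
      rw [← hWsg]
      exact mem_sg_self hCR hw
    · intro y hy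
      have hy' : y ∈ sg W := by rw [hWsg]; exact hy
      obtain ⟨x, hx, x', hx', h1, h2⟩ := hy'
      cases hthin with
      | inl hall =>
        have hx'sg : x' ∈ sg A := by rw [← hWsg]; exact mem_sg_self hCR hx'
        have h3 : y = x' := band_trivcell hband ⟨hall y hy x' hx'sg, h2⟩
        rw [h3]; exact hx'
      | inr hall =>
        have hxsg : x ∈ sg A := by rw [← hWsg]; exact mem_sg_self hCR hx
        have h3 : y = x := band_trivcell hband ⟨h1, hall y hy x hxsg⟩
        rw [h3]; exact hx

end CS0
namespace CS0

open Pointwise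

lemma key {S S' : Type*} [Semigroup S] [Semigroup S']
    (hCR : CompletelyRegular S) (hSi : SimpleSemigroup S)
    (hCR' : CompletelyRegular S') (hSi' : SimpleSemigroup S')
    (hS'lz : ¬ ∀ x y : S', x * y = x) (hS'rz : ¬ ∀ x y : S', x * y = y)
    (ψ : Set S → Set S')
    (hne : ∀ A : Set S, A.Nonempty → (ψ A).Nonempty)
    (hinj : ∀ A B : Set S, A.Nonempty → B.Nonempty → ψ A = ψ B → A = B)
    (hsurj : ∀ A' : Set S', A'.Nonempty → ∃ A : Set S, A.Nonempty ∧ ψ A = A')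
    (hmul : ∀ A B : Set S, A.Nonempty → B.Nonempty → ψ (A * B) = ψ A * ψ B) :
    ∀ a : S, ∃ b' : S', ψ {a} = {b'} := by
  intro a
  haveI hSne : Nonempty S := ⟨a⟩
  haveI hS'ne : Nonempty S' := by
    by_contra h
    exact hS'lz (fun x _ => absurd ⟨x⟩ h)
  have hUne : (Set.univ : Set S).Nonempty := Set.univ_nonempty
  have hU'ne : (Set.univ : Set S').Nonempty := Set.univ_nonempty
  have habsU : Absorb (Set.univ : Set S) := absorb_univ hCR hSi
  have habsψU : Absorb (ψ Set.univ) := by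
    refine ⟨hne _ hUne, fun Y' hY' => ?_⟩
    obtain ⟨Y, hYne, rfl⟩ := hsurj Y' hY'
    rw [← hmul _ _ hUne hYne, ← hmul _ _ (hUne.mul hYne) hUne, habsU.2 Y hYne]
  have hsg : ∀ A : Set S, A.Nonempty → ψ (sg A) = sg (ψ A) := by
    intro A hA
    have h1 : A * Set.univ * A = sg A := mul_absorb hCR hSi hA habsU
    have h2 : ψ A * ψ Set.univ * ψ A = sg (ψ A) :=
      mul_absorb hCR' hSi' (hne A hA) habsψU
    rw [← h1, hmul _ _ (hA.mul hUne) hA, hmul _ _ hA hUne, h2]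
  by_cases hband : ∀ x : S, x * x = x
  · -- band case
    have hband' : ∀ x' : S', x' * x' = x' := by
      intro s'
      obtain ⟨A, hAne, hA⟩ := hsurj {s'} (Set.singleton_nonempty s')
      have h1 : ψ A * ψ A = sg (ψ A) := by
        rw [← hmul _ _ hAne hAne, band_sq hCR hSi hband A, hsg A hAne]
      rw [hA] at h1
      have h3 : s' ∈ sg ({s'} : Set S') := mem_sg_self hCR' rfl
      rw [← h1, Set.singleton_mul_singleton, Set.mem_singleton_iff] at h3
      exact h3.symm
    have hA'ne := hne {a} (Set.singleton_nonempty a)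
    have hrows : ∀ p ∈ ψ {a}, ∀ q ∈ ψ {a}, rEq p q := by
      by_contra hcon
      push_neg at hcon
      obtain ⟨p, hp, q, hq, hpq⟩ := hcon
      have hthin : Thin (sg (ψ {a} * Set.univ)) := by
        obtain ⟨Y, hYne, hYeq⟩ := hsurj Set.univ hU'ne
        have hfibS : ∀ W : Set S, W.Nonempty → sg W = sg ({a} * Y) →
            W = sg (({a} : Set S) * Y) := by
          apply (band_fib hCR hSi hband).mpr
          left
          have haux : ∀ z ∈ sg (({a} : Set S) * Y), rEq z a := by
            rintro z ⟨t, ⟨a₁, ha₁, y₁, hy₁, rfl⟩, -, -, h1, -⟩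
            rw [Set.mem_singleton_iff] at ha₁
            subst ha₁
            exact rEq_trans h1 (rEq_mul hCR hSi _ _)
          intro z₁ hz₁ z₂ hz₂
          exact rEq_trans (haux z₁ hz₁) (rEq_symm (haux z₂ hz₂))
        have hTne : (({a} : Set S) * Y).Nonempty := (Set.singleton_nonempty a).mul hYne
        have hψT : ψ ({a} * Y) = ψ {a} * Set.univ := by
          rw [hmul _ _ (Set.singleton_nonempty a) hYne, hYeq]
        have hfibS' : ∀ W' : Set S', W'.Nonempty → sg W' = sg (ψ {a} * Set.univ) →
            W' = sg (ψ {a} * Set.univ) := by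
          intro W' hW'ne hW'sg
          obtain ⟨W, hWne, rfl⟩ := hsurj W' hW'ne
          have h4 : sg (ψ W) = sg (ψ ({a} * Y)) := by rw [hψT]; exact hW'sg
          rw [← hsg W hWne, ← hsg _ hTne] at h4
          have h5 : sg W = sg ({a} * Y) :=
            hinj _ _ (sg_nonempty hCR hWne) (sg_nonempty hCR hTne) h4
          rw [hfibS W hWne h5, hsg _ hTne, hψT]
        exact (band_fib hCR' hSi' hband' (A := ψ {a} * Set.univ)).mp hfibS'
      obtain ⟨w'⟩ := hS'ne
      cases hthin with
      | inl hall =>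
        have h1 : p * w' ∈ sg (ψ {a} * Set.univ) :=
          mem_sg_self hCR' (Set.mul_mem_mul hp (Set.mem_univ w'))
        have h2 : q * w' ∈ sg (ψ {a} * Set.univ) :=
          mem_sg_self hCR' (Set.mul_mem_mul hq (Set.mem_univ w'))
        exact hpq (rEq_trans (rEq_trans (rEq_symm (rEq_mul hCR' hSi' p w'))
          (hall _ h1 _ h2)) (rEq_mul hCR' hSi' q w'))
      | inr hall =>
        apply hS'lz
        intro x y
        have hxy : ∀ s t : S', lEq s t := by
          intro s t
          have h1 : p * s ∈ sg (ψ {a} * Set.univ) :=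
            mem_sg_self hCR' (Set.mul_mem_mul hp (Set.mem_univ s))
          have h2 : p * t ∈ sg (ψ {a} * Set.univ) :=
            mem_sg_self hCR' (Set.mul_mem_mul hp (Set.mem_univ t))
          exact lEq_trans (lEq_trans (lEq_symm (lEq_mul hCR' hSi' p s))
            (hall _ h1 _ h2)) (lEq_mul hCR' hSi' p t)
        exact band_trivcell hband'
          ⟨rEq_mul hCR' hSi' x y, lEq_trans (lEq_mul hCR' hSi' x y) (hxy y x)⟩
    have hcols : ∀ p ∈ ψ {a}, ∀ q ∈ ψ {a}, lEq p q := by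
      by_contra hcon
      push_neg at hcon
      obtain ⟨p, hp, q, hq, hpq⟩ := hcon
      have hthin : Thin (sg (Set.univ * ψ {a})) := by
        obtain ⟨Y, hYne, hYeq⟩ := hsurj Set.univ hU'ne
        have hfibS : ∀ W : Set S, W.Nonempty → sg W = sg (Y * {a}) →
            W = sg (Y * ({a} : Set S)) := by
          apply (band_fib hCR hSi hband).mpr
          right
          have haux : ∀ z ∈ sg (Y * ({a} : Set S)), lEq z a := by
            rintro z ⟨-, -, t, ⟨y₁, hy₁, a₁, ha₁, rfl⟩, -, h2⟩
            rw [Set.mem_singleton_iff] at ha₁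
            subst ha₁
            exact lEq_trans h2 (lEq_mul hCR hSi _ _)
          intro z₁ hz₁ z₂ hz₂
          exact lEq_trans (haux z₁ hz₁) (lEq_symm (haux z₂ hz₂))
        have hTne : (Y * ({a} : Set S)).Nonempty := hYne.mul (Set.singleton_nonempty a)
        have hψT : ψ (Y * {a}) = Set.univ * ψ {a} := by
          rw [hmul _ _ hYne (Set.singleton_nonempty a), hYeq]
        have hfibS' : ∀ W' : Set S', W'.Nonempty → sg W' = sg (Set.univ * ψ {a}) →
            W' = sg (Set.univ * ψ {a}) := by
          intro W' hW'ne hW'sg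
          obtain ⟨W, hWne, rfl⟩ := hsurj W' hW'ne
          have h4 : sg (ψ W) = sg (ψ (Y * {a})) := by rw [hψT]; exact hW'sg
          rw [← hsg W hWne, ← hsg _ hTne] at h4
          have h5 : sg W = sg (Y * {a}) :=
            hinj _ _ (sg_nonempty hCR hWne) (sg_nonempty hCR hTne) h4
          rw [hfibS W hWne h5, hsg _ hTne, hψT]
        exact (band_fib hCR' hSi' hband' (A := Set.univ * ψ {a})).mp hfibS'
      obtain ⟨w'⟩ := hS'ne
      cases hthin with
      | inr hall =>
        have h1 : w' * p ∈ sg (Set.univ * ψ {a}) :=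
          mem_sg_self hCR' (Set.mul_mem_mul (Set.mem_univ w') hp)
        have h2 : w' * q ∈ sg (Set.univ * ψ {a}) :=
          mem_sg_self hCR' (Set.mul_mem_mul (Set.mem_univ w') hq)
        exact hpq (lEq_trans (lEq_trans (lEq_symm (lEq_mul hCR' hSi' w' p))
          (hall _ h1 _ h2)) (lEq_mul hCR' hSi' w' q))
      | inl hall =>
        apply hS'rz
        intro x y
        have hxy : ∀ s t : S', rEq s t := by
          intro s t
          have h1 : s * p ∈ sg (Set.univ * ψ {a}) :=
            mem_sg_self hCR' (Set.mul_mem_mul (Set.mem_univ s) hp)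
          have h2 : t * p ∈ sg (Set.univ * ψ {a}) :=
            mem_sg_self hCR' (Set.mul_mem_mul (Set.mem_univ t) hp)
          exact rEq_trans (rEq_trans (rEq_symm (rEq_mul hCR' hSi' s p))
            (hall _ h1 _ h2)) (rEq_mul hCR' hSi' t p)
        exact band_trivcell hband'
          ⟨rEq_trans (rEq_mul hCR' hSi' x y) (hxy x y), lEq_mul hCR' hSi' x y⟩
    obtain ⟨b', hb'⟩ := hA'ne
    refine ⟨b', Set.eq_singleton_iff_unique_mem.mpr ⟨hb', fun c hc => ?_⟩⟩
    exact band_trivcell hband' ⟨hrows c hc b' hb', hcols c hc b' hb'⟩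
  · -- non-band case
    push_neg at hband
    have hnb' : ∃ s' : S', s' * s' ≠ s' := by
      by_contra h
      push_neg at h
      obtain ⟨s₀, hs₀⟩ := hband
      have h1 : ψ ({s₀} * {s₀}) = ψ (sg {s₀}) := by
        rw [hmul _ _ (Set.singleton_nonempty s₀) (Set.singleton_nonempty s₀),
          band_sq hCR' hSi' h (ψ {s₀}), ← hsg _ (Set.singleton_nonempty s₀)]
      have h2 : ({s₀} : Set S) * {s₀} = sg {s₀} :=
        hinj _ _ ((Set.singleton_nonempty s₀).mul (Set.singleton_nonempty s₀))
          (sg_nonempty hCR (Set.singleton_nonempty s₀)) h1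
      have h3 : s₀ ∈ ({s₀} : Set S) * {s₀} := by
        rw [h2]; exact mem_sg_self hCR rfl
      rw [Set.singleton_mul_singleton, Set.mem_singleton_iff] at h3
      exact hs₀ h3.symm
    have hQ := Q_of_idem hCR (ee_idem hCR a)
    have hEne : (ψ {ee hCR a}).Nonempty := hne _ (Set.singleton_nonempty _)
    have hQ1' : ψ {ee hCR a} * ψ {ee hCR a} = ψ {ee hCR a} := by
      rw [← hmul _ _ (Set.singleton_nonempty _) (Set.singleton_nonempty _), hQ.1]
    have hQ2' : ∀ X' : Set S', X'.Nonempty → sg X' = sg (ψ {ee hCR a}) →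
        (ψ {ee hCR a} * X' = X' ∧ X' * ψ {ee hCR a} = X') := by
      intro X' hX'ne hX'sg
      obtain ⟨X, hXne, rfl⟩ := hsurj X' hX'ne
      rw [← hsg X hXne, ← hsg _ (Set.singleton_nonempty _)] at hX'sg
      have h4 : sg X = sg ({ee hCR a} : Set S) :=
        hinj _ _ (sg_nonempty hCR hXne)
          (sg_nonempty hCR (Set.singleton_nonempty _)) hX'sg
      obtain ⟨h5, h6⟩ := hQ.2 X hXne h4
      constructor
      · rw [← hmul _ _ (Set.singleton_nonempty _) hXne, h5]
      · rw [← hmul _ _ hXne (Set.singleton_nonempty _), h6]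
    obtain ⟨e', he'⟩ := Qpred_suff hCR' hSi' hnb' hEne hQ1' hQ2'
    have hAE : ψ {a} * ψ {ee hCR a} = ψ {a} := by
      rw [← hmul _ _ (Set.singleton_nonempty a) (Set.singleton_nonempty _),
        Set.singleton_mul_singleton, self_mul_ee]
    have hAB : ψ {a} * ψ {iv hCR a} = ψ {ee hCR a} := by
      rw [← hmul _ _ (Set.singleton_nonempty a) (Set.singleton_nonempty _),
        Set.singleton_mul_singleton, mul_iv]
    have hBA : ψ {iv hCR a} * ψ {a} = ψ {ee hCR a} := by
      rw [← hmul _ _ (Set.singleton_nonempty _) (Set.singleton_nonempty a),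
        Set.singleton_mul_singleton, iv_mul]
    rw [he'] at hAE hAB hBA
    exact unit_singleton hCR' hSi' (hne _ (Set.singleton_nonempty a))
      (hne _ (Set.singleton_nonempty _)) hAE hAB hBA

end CS0

/-- If `S` and `S'` are completely simple semigroups, neither of which is a
left zero or right zero semigroup, then any isomorphism between their power
semigroups restricts to a bijection on singletons. -/
theorem strong_isomorphism_property_CS0
    {S S' : Type*} [Semigroup S] [Semigroup S']
    (hS : CompletelyRegular S) (hSsimple : SimpleSemigroup S)
    (hSlz : ¬ ∀ x y : S, x * y = x) (hSrz : ¬ ∀ x y : S, x * y = y)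
    (hS' : CompletelyRegular S') (hS'simple : SimpleSemigroup S')
    (hS'lz : ¬ ∀ x y : S', x * y = x) (hS'rz : ¬ ∀ x y : S', x * y = y)
    (ψ : Set S → Set S')
    (hne : ∀ A : Set S, A.Nonempty → (ψ A).Nonempty)
    (hinj : ∀ A B : Set S, A.Nonempty → B.Nonempty → ψ A = ψ B → A = B)
    (hsurj : ∀ A' : Set S', A'.Nonempty → ∃ A : Set S, A.Nonempty ∧ ψ A = A')
    (hmul : ∀ A B : Set S, A.Nonempty → B.Nonempty → ψ (A * B) = ψ A * ψ B) :
    ∃ f : S → S', Function.Bijective f ∧ ∀ a : S, ψ {a} = {f a} := by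
  have keyS := CS0.key hS hSsimple hS' hS'simple hS'lz hS'rz ψ hne hinj hsurj hmul
  choose f hf using keyS
  classical
  obtain ⟨φ, hφ1, hφ2⟩ : ∃ φ : Set S' → Set S,
      (∀ A' : Set S', A'.Nonempty → (φ A').Nonempty) ∧
      (∀ A' : Set S', A'.Nonempty → ψ (φ A') = A') := by
    refine ⟨fun A' => if h : A'.Nonempty then (hsurj A' h).choose else ∅,
      fun A' h => ?_, fun A' h => ?_⟩
    · simp only [dif_pos h]
      exact (hsurj A' h).choose_spec.1
    · simp only [dif_pos h]
      exact (hsurj A' h).choose_spec.2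
  have hφinj : ∀ A' B' : Set S', A'.Nonempty → B'.Nonempty → φ A' = φ B' → A' = B' := by
    intro A' B' hA hB h
    rw [← hφ2 A' hA, ← hφ2 B' hB, h]
  have hφsurj : ∀ A : Set S, A.Nonempty → ∃ A' : Set S', A'.Nonempty ∧ φ A' = A := by
    intro A hA
    refine ⟨ψ A, hne A hA, ?_⟩
    apply hinj _ _ (hφ1 _ (hne A hA)) hA
    rw [hφ2 _ (hne A hA)]
  have hφmul : ∀ A' B' : Set S', A'.Nonempty → B'.Nonempty →
      φ (A' * B') = φ A' * φ B' := by
    intro A' B' hA hB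
    apply hinj _ _ (hφ1 _ (hA.mul hB)) ((hφ1 _ hA).mul (hφ1 _ hB))
    rw [hφ2 _ (hA.mul hB), hmul _ _ (hφ1 _ hA) (hφ1 _ hB), hφ2 _ hA, hφ2 _ hB]
  have keyS' := CS0.key hS' hS'simple hS hSsimple hSlz hSrz φ hφ1 hφinj hφsurj hφmul
  refine ⟨f, ⟨?_, ?_⟩, fun a => hf a⟩
  · intro a b h
    have h1 : ψ {a} = ψ {b} := by rw [hf a, hf b, h]
    exact Set.singleton_eq_singleton_iff.mp
      (hinj _ _ (Set.singleton_nonempty a) (Set.singleton_nonempty b) h1)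
  · intro b'
    obtain ⟨c, hc⟩ := keyS' b'
    refine ⟨c, ?_⟩
    have h1 : ψ (φ {b'}) = {b'} := hφ2 _ (Set.singleton_nonempty b')
    rw [hc] at h1
    have h2 : ({f c} : Set S') = {b'} := by rw [← hf c, h1]
    exact Set.singleton_eq_singleton_iff.mp h2
end

section
/- Let S be a completely regular semigroup and let A ∈ A₃(S). If B is a subset of A such that B*B = A (pointwise product of sets), then B = A. -/
open Pointwise

/-- `A ∈ A₃(S)`: `A` is a (nonempty) subsemigroup of `S` such that the product
of any three of its elements is one of them. -/
def IsA3 {S : Type*} [Semigroup S] (A : Set S) : Prop :=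
  A.Nonempty ∧ (∀ a ∈ A, ∀ b ∈ A, a * b ∈ A) ∧
    ∀ a ∈ A, ∀ b ∈ A, ∀ c ∈ A, a * b * c ∈ ({a, b, c} : Set S)

/-- If `A ∈ A₃(S)` and `B ⊆ A` satisfies `B * B = A`, then `B = A`. -/
theorem a3_square_subset_eq
    {S : Type*} [Semigroup S] (hS : CompletelyRegular S)
    (A B : Set S) (hA : IsA3 A) (hBA : B ⊆ A) (hBB : B * B = A) :
    B = A := by
  obtain ⟨-, -, h3⟩ := hA
  apply Set.Subset.antisymm hBA
  intro a haA
  have ha' : a ∈ B * B := hBB ▸ haA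
  obtain ⟨b, hb, c, hc, hbc⟩ := Set.mem_mul.mp ha'
  have hbA : b ∈ A := hBA hb
  have hcA : c ∈ A := hBA hc
  -- a^3 = a
  have h3a : a * a * a = a := by
    have := h3 a haA a haA a haA
    simpa using this.symm
  -- a*a ∈ {a, b, c}
  have hsq : a * a ∈ ({a, b, c} : Set S) := by
    have := h3 a haA b hbA c hcA
    rwa [mul_assoc, hbc] at this
  simp only [Set.mem_insert_iff, Set.mem_singleton_iff] at hsq
  rcases hsq with hsq | hsq | hsq
  · -- a*a = a
    -- a*b ∈ {a, b}
    have hab : a * b ∈ ({a, b} : Set S) := by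
      have := h3 a haA a haA b hbA
      rw [hsq] at this
      simpa using this
    simp only [Set.mem_insert_iff, Set.mem_singleton_iff] at hab
    rcases hab with hab | hab
    · -- a = a*b = b*c*b ∈ {b,c}
      have he : a = b * c * b := by rw [hbc, hab]
      have := h3 b hbA c hcA b hbA
      rw [← he] at this
      simp only [Set.mem_insert_iff, Set.mem_singleton_iff] at this
      rcases this with h | h | h <;> [exact h ▸ hb; exact h ▸ hc; exact h ▸ hb]
    · -- a*b = b. Now b*a ∈ {a, b}
      have hba : b * a ∈ ({b, a} : Set S) := by
        have := h3 b hbA a haA a haA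
        rw [mul_assoc, hsq] at this
        simpa using this
      simp only [Set.mem_insert_iff, Set.mem_singleton_iff] at hba
      rcases hba with hba | hba
      · -- b*a = b. Then b*b ∈ {b, a}
        have hbb : b * b ∈ ({b, a} : Set S) := by
          have := h3 b hbA b hbA a haA
          rw [mul_assoc, hba] at this
          simpa using this
        simp only [Set.mem_insert_iff, Set.mem_singleton_iff] at hbb
        rcases hbb with hbb | hbb
        · -- b*b = b ⇒ a = b
          have : a = b := by
            calc a = b * c := hbc.symm
            _ = b * b * c := by rw [hbb]
            _ = b * (b * c) := mul_assoc _ _ _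
            _ = b * a := by rw [hbc]
            _ = b := hba
          exact this ▸ hb
        · -- b*b = a. Use b = x*y with x,y ∈ B.
          have hb' : b ∈ B * B := hBB ▸ hbA
          obtain ⟨x, hx, y, hy, hxy⟩ := Set.mem_mul.mp hb'
          have h' := h3 x (hBA hx) y (hBA hy) b hbA
          rw [mul_assoc] at h'
          have hxyb : x * (y * b) = a := by
            rw [← mul_assoc, hxy, hbb]
          rw [hxyb] at h'
          simp only [Set.mem_insert_iff, Set.mem_singleton_iff] at h'
          rcases h' with h | h | h <;> [exact h ▸ hx; exact h ▸ hy; exact h ▸ hb]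
      · -- b*a = a ⇒ a = b*b*c ∈ {b,c}
        have he : a = b * b * c := by
          rw [mul_assoc, hbc, hba]
        have := h3 b hbA b hbA c hcA
        rw [← he] at this
        simp only [Set.mem_insert_iff, Set.mem_singleton_iff] at this
        rcases this with h | h | h <;> [exact h ▸ hb; exact h ▸ hb; exact h ▸ hc]
  · -- a*a = b: a = a*(a*a) = a*b = (b*c)*b ∈ {b,c}
    have he : a = b * c * b := by
      calc a = a * a * a := h3a.symm
      _ = a * (a * a) := mul_assoc _ _ _
      _ = a * b := by rw [hsq]
      _ = b * c * b := by rw [hbc]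
    have := h3 b hbA c hcA b hbA
    rw [← he] at this
    simp only [Set.mem_insert_iff, Set.mem_singleton_iff] at this
    rcases this with h | h | h <;> [exact h ▸ hb; exact h ▸ hc; exact h ▸ hb]
  · -- a*a = c: a = (a*a)*a = c*a = c*(b*c) = (c*b)*c ∈ {b,c}
    have he : a = c * b * c := by
      calc a = a * a * a := h3a.symm
      _ = c * a := by rw [hsq]
      _ = c * (b * c) := by rw [hbc]
      _ = c * b * c := (mul_assoc _ _ _).symm
    have := h3 c hcA b hbA c hcA
    rw [← he] at this
    simp only [Set.mem_insert_iff, Set.mem_singleton_iff] at this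
    rcases this with h | h | h <;> [exact h ▸ hc; exact h ▸ hb; exact h ▸ hc]
end

section
/- Let S be a completely regular semigroup, let A ∈ A₃(S), and let B be a nonempty subset of S. If B*A = A and B*B = A (pointwise products of sets), then B = A. -/
open Pointwise

/-- If `A ∈ A₃(S)` and `B` is a nonempty subset of `S` with `B * A = A` and
`B * B = A`, then `B = A`. -/
theorem a3_BA_BB_eq
    {S : Type*} [Semigroup S] (hS : CompletelyRegular S)
    (A B : Set S) (hA : IsA3 A) (hB : B.Nonempty)
    (hBA : B * A = A) (hBB : B * B = A) :
    B = A := by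
  have cube : ∀ a ∈ A, a * a * a = a := by
    intro a ha
    have := hA.2.2 a ha a ha a ha
    simpa using this
  -- first: B ⊆ A
  have hBsubA : B ⊆ A := by
    intro b hb
    have h2 : b * b ∈ A := hBB ▸ Set.mul_mem_mul hb hb
    have h3 : b * (b * b) ∈ A := hBA ▸ Set.mul_mem_mul hb h2
    have h62 := cube _ h2
    have h93 := cube _ h3
    simp only [mul_assoc] at h62 h93
    -- h62 : b^6 = b^2, h93 : b^9 = b^3
    rw [h62] at h93
    -- h93 : b^5 = b^3
    rw [h93] at h62
    -- h62 : b^4 = b^2, i.e. b*(b*(b*b)) = b*b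
    obtain ⟨x, hx, hc⟩ := hS b
    have hb_eq : b = x * (b * b) := by
      rw [hc, mul_assoc] at hx; exact hx
    have hb3 : b = b * (b * b) := by
      calc b = x * (b * b) := hb_eq
        _ = x * (b * (b * (b * b))) := by rw [h62]
        _ = (x * (b * b)) * (b * b) := by simp only [mul_assoc]
        _ = b * (b * b) := by rw [← hb_eq]
    rw [hb3]; exact h3
  -- second: A ⊆ B
  have hAsubB : A ⊆ B := by
    intro a ha
    have : a ∈ B * (B * B) := by rw [hBB, hBA]; exact ha
    obtain ⟨b₁, hb₁, y, hy, hprod⟩ := this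
    obtain ⟨b₂, hb₂, b₃, hb₃, hy'⟩ := hy
    have : b₁ * b₂ * b₃ ∈ ({b₁, b₂, b₃} : Set S) :=
      hA.2.2 b₁ (hBsubA hb₁) b₂ (hBsubA hb₂) b₃ (hBsubA hb₃)
    have ha_eq : a = b₁ * b₂ * b₃ := by
      rw [← hprod, ← hy', mul_assoc]
    rw [ha_eq]
    simp only [Set.mem_insert_iff, Set.mem_singleton_iff] at this
    rcases this with h | h | h <;> rw [h] <;> assumption
  exact Set.Subset.antisymm hBsubA hAsubB
end

section
/- Let S be a completely regular semigroup and let A be a nonempty subset of S with A*A = A such that, for every nonempty subset B of S, B*A = A and B*B = A imply B = A. Then for all a, b ∈ A one has a*a*a = a and a*b ∈ {a, b, a*a, b*b}. (Since a*a*a = a, the element a*a is the identity a⁰ of the group H-class of a.) -/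
open Pointwise

/-- If `A` is a nonempty idempotent subset of a completely regular semigroup
such that the only nonempty `B` with `B * A = B * B = A` is `A` itself, then
every `a ∈ A` satisfies `a * a * a = a` and for all `a, b ∈ A` one has
`a * b ∈ {a, b, a * a, b * b}`. -/
theorem minimal_idempotent_subset_props
    {S : Type*} [Semigroup S] (hS : CompletelyRegular S)
    (A : Set S) (hA : A.Nonempty) (hAA : A * A = A)
    (hmin : ∀ B : Set S, B.Nonempty → B * A = A → B * B = A → B = A) :
    ∀ a ∈ A, ∀ b ∈ A, a * a * a = a ∧ a * b ∈ ({a, b, a * a, b * b} : Set S) := by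
  have hmem : ∀ x ∈ A, ∀ y ∈ A, x * y ∈ A := by
    intro x hx y hy
    rw [← hAA]; exact Set.mul_mem_mul hx hy
  have key : ∀ a ∈ A, ∀ b ∈ A, a * b ∈ ({a, b, a * a, b * b} : Set S) := by
    intro a ha b hb
    by_contra hc
    simp only [Set.mem_insert_iff, Set.mem_singleton_iff, not_or] at hc
    obtain ⟨h1, h2, h3, h4⟩ := hc
    have haB : a ∈ A \ {a * b} := ⟨ha, fun h => h1 (Set.mem_singleton_iff.1 h).symm⟩
    have hbB : b ∈ A \ {a * b} := ⟨hb, fun h => h2 (Set.mem_singleton_iff.1 h).symm⟩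
    have hBA : (A \ {a * b}) * A = A := by
      apply Set.Subset.antisymm
      · calc (A \ {a * b}) * A ⊆ A * A := Set.mul_subset_mul Set.diff_subset (subset_refl A)
          _ = A := hAA
      · intro z hz
        rw [← hAA] at hz
        obtain ⟨u, hu, v, hv, huv⟩ := Set.mem_mul.1 hz
        by_cases h : u = a * b
        · exact Set.mem_mul.2 ⟨a, haB, b * v, hmem b hb v hv, by
            rw [← mul_assoc, ← h, huv]⟩
        · exact Set.mem_mul.2 ⟨u, ⟨hu, fun hh => h (Set.mem_singleton_iff.1 hh)⟩, v, hv, huv⟩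
    have hBB : (A \ {a * b}) * (A \ {a * b}) = A := by
      apply Set.Subset.antisymm
      · calc (A \ {a * b}) * (A \ {a * b}) ⊆ A * A :=
              Set.mul_subset_mul Set.diff_subset Set.diff_subset
          _ = A := hAA
      · intro z hz
        rw [← hAA] at hz
        obtain ⟨u, hu, v, hv, huv⟩ := Set.mem_mul.1 hz
        have hrep : ∃ u' ∈ A \ {a * b}, ∃ v' ∈ A, u' * v' = z := by
          by_cases h : u = a * b
          · exact ⟨a, haB, b * v, hmem b hb v hv, by rw [← mul_assoc, ← h, huv]⟩
          · exact ⟨u, ⟨hu, fun hh => h (Set.mem_singleton_iff.1 hh)⟩, v, hv, huv⟩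
        obtain ⟨u', hu', v', hv', huv'⟩ := hrep
        by_cases h : v' = a * b
        · by_cases h' : u' * a = a * b
          · refine Set.mem_mul.2 ⟨a, haB, b * b,
              ⟨hmem b hb b hb, fun hh => h4 (Set.mem_singleton_iff.1 hh).symm⟩, ?_⟩
            rw [← mul_assoc, ← h', mul_assoc, ← h, huv']
          · refine Set.mem_mul.2 ⟨u' * a,
              ⟨hmem u' hu'.1 a ha, fun hh => h' (Set.mem_singleton_iff.1 hh)⟩, b, hbB, ?_⟩
            rw [mul_assoc, ← h, huv']
        · exact Set.mem_mul.2 ⟨u', hu', v', ⟨hv', fun hh => h (Set.mem_singleton_iff.1 hh)⟩, huv'⟩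
    have hB := hmin (A \ {a * b}) ⟨a, haB⟩ hBA hBB
    have hcA : a * b ∈ A := hmem a ha b hb
    rw [← hB] at hcA
    exact hcA.2 rfl
  intro a ha b hb
  refine ⟨?_, key a ha b hb⟩
  obtain ⟨x, hax, hcomm⟩ := hS a
  have hxa : x * a * a = a := by rw [← hcomm]; exact hax.symm
  have hx2 : x * (a * a) = a := by rw [← mul_assoc]; exact hxa
  have hx3 : x * (a * (a * a)) = a * a := by rw [← mul_assoc, ← mul_assoc, hxa]
  have hx4 : x * (a * a * (a * a)) = a * (a * a) := by rw [← mul_assoc, hx2]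
  have haa : a * a ∈ A := hmem a ha a ha
  have h3 := key a ha (a * a) haa
  simp only [Set.mem_insert_iff, Set.mem_singleton_iff] at h3
  rcases h3 with h | h | h | h
  · rw [mul_assoc]; exact h
  · have h5 := congrArg (fun t => x * t) h
    simp only [hx3, hx2] at h5
    rw [h5]; exact h5
  · have h5 := congrArg (fun t => x * t) h
    simp only [hx3, hx2] at h5
    rw [h5]; exact h5
  · have h5 := congrArg (fun t => x * t) h
    simp only [hx3, hx4] at h5
    have h6 := congrArg (fun t => x * t) h5
    simp only [hx2, hx3] at h6
    rw [← h6, ← h6]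
end

section
/- Let S be a completely regular semigroup and let A be a nonempty subset of S with A*A = A such that, for every nonempty subset B of S, B*A = A and B*B = A imply B = A. If a ∈ A satisfies a*a ≠ a, then the set of elements of A that are 𝓗-related to a in S equals {a, a*a}, i.e., {x ∈ A : x*S = a*S and S*x = S*a} = {a, a*a}. -/
open Pointwise

/-- The principal right ideal `aS = {a * s : s ∈ S}`. -/
def rIdeal {S : Type*} [Semigroup S] (a : S) : Set S := Set.range (fun s => a * s)

/-- The principal left ideal `Sa = {s * a : s ∈ S}`. -/
def lIdeal {S : Type*} [Semigroup S] (a : S) : Set S := Set.range (fun s => s * a)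

lemma mem_rIdeal {S : Type*} [Semigroup S] {w t : S} : t ∈ rIdeal w ↔ ∃ s, w * s = t :=
  Iff.rfl

lemma mem_lIdeal {S : Type*} [Semigroup S] {w t : S} : t ∈ lIdeal w ↔ ∃ s, s * w = t :=
  Iff.rfl

/-- If `A` is a nonempty idempotent subset of a completely regular semigroup
such that the only nonempty `B` with `B * A = B * B = A` is `A` itself, and if
`a ∈ A` satisfies `a * a ≠ a`, then the elements of `A` that are `𝓗`-related
to `a` in `S` are exactly `a` and `a * a`. -/
theorem minimal_idempotent_subset_Hclass
    {S : Type*} [Semigroup S] (hS : CompletelyRegular S)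
    (A : Set S) (hA : A.Nonempty) (hAA : A * A = A)
    (hmin : ∀ B : Set S, B.Nonempty → B * A = A → B * B = A → B = A)
    (a : S) (ha : a ∈ A) (haa : a * a ≠ a) :
    {x : S | x ∈ A ∧ rIdeal x = rIdeal a ∧ lIdeal x = lIdeal a}
      = ({a, a * a} : Set S) := by
  obtain ⟨x₀, hx1, hx2⟩ := hS a
  obtain ⟨e, abar, he_a, ha_e, hee, haab, haba⟩ :
      ∃ e abar : S, e * a = a ∧ a * e = a ∧ e * e = e ∧ a * abar = e ∧ abar * a = e := by
    refine ⟨a * x₀, x₀ * (a * x₀), hx1.symm, ?_, ?_, ?_, ?_⟩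
    · rw [hx2, ← mul_assoc, ← hx1]
    · rw [← mul_assoc, ← hx1]
    · rw [← mul_assoc, ← mul_assoc, ← hx1]
    · rw [mul_assoc, ← hx1, ← hx2]
  -- basic closure facts
  have haA2 : ∀ {u v : S}, u ∈ A → v ∈ A → u * v ∈ A := by
    intro u v hu hv; rw [← hAA]; exact Set.mul_mem_mul hu hv
  have memA_fac : ∀ z ∈ A, ∃ x ∈ A, ∃ y ∈ A, x * y = z := by
    intro z hz; rw [← hAA] at hz; exact Set.mem_mul.mp hz
  have trip : ∀ z ∈ A, ∃ x₁ ∈ A, ∃ x₂ ∈ A, ∃ x₃ ∈ A, x₁ * (x₂ * x₃) = z := by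
    intro z hz
    obtain ⟨x₁, h1, w, hw, hxw⟩ := memA_fac z hz
    obtain ⟨x₂, h2, x₃, h3, hw'⟩ := memA_fac w hw
    exact ⟨x₁, h1, x₂, h2, x₃, h3, by rw [hw', hxw]⟩
  -- the witness lemma coming from minimality
  have wit : ∀ d ∈ A, ∀ b ∈ A, b ≠ d →
      ∃ z ∈ A, ∀ x ∈ A, ∀ y ∈ A, x * y = z → x = d ∨ y = d := by
    intro d hd b hb hbd
    by_contra hcon
    push_neg at hcon
    have hBB : (A \ {d}) * (A \ {d}) = A := by
      apply Set.Subset.antisymm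
      · intro z hz
        rw [← hAA]
        exact Set.mul_subset_mul Set.diff_subset Set.diff_subset hz
      · intro z hz
        obtain ⟨x, hx, y, hy, hxy, hxd, hyd⟩ := hcon z hz
        rw [← hxy]
        exact Set.mul_mem_mul ⟨hx, hxd⟩ ⟨hy, hyd⟩
    have hBA : (A \ {d}) * A = A := by
      apply Set.Subset.antisymm
      · intro z hz
        rw [← hAA]
        exact Set.mul_subset_mul Set.diff_subset (subset_refl A) hz
      · intro z hz
        rw [← hBB] at hz
        exact Set.mul_subset_mul (subset_refl _) Set.diff_subset hz
    have hBne : (A \ {d}).Nonempty := ⟨b, hb, hbd⟩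
    have hBeq := hmin _ hBne hBA hBB
    have hdB : d ∈ A \ {d} := by rw [hBeq]; exact hd
    exact hdB.2 rfl
  -- Green-type lemmas for the H-class of `a`
  have G1 : ∀ w : S, rIdeal w = rIdeal a → lIdeal w = lIdeal a →
      e * w = w ∧ w * e = w := by
    intro w hwr hwl
    obtain ⟨y, hy1, -⟩ := hS w
    have hwR : w ∈ rIdeal a := by
      rw [← hwr]
      exact mem_rIdeal.mpr ⟨y * w, by rw [← mul_assoc]; exact hy1.symm⟩
    have hwL : w ∈ lIdeal a := by
      rw [← hwl]
      exact mem_lIdeal.mpr ⟨w * y, hy1.symm⟩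
    obtain ⟨s, hs⟩ := mem_rIdeal.mp hwR
    obtain ⟨t, ht⟩ := mem_lIdeal.mp hwL
    constructor
    · calc e * w = e * (a * s) := by rw [hs]
        _ = (e * a) * s := (mul_assoc _ _ _).symm
        _ = a * s := by rw [he_a]
        _ = w := hs
    · calc w * e = (t * a) * e := by rw [ht]
        _ = t * (a * e) := mul_assoc _ _ _
        _ = t * a := by rw [ha_e]
        _ = w := ht
  have G2 : ∀ w : S, rIdeal w = rIdeal a → lIdeal w = lIdeal a →
      ∃ wb, w * wb = e ∧ wb * w = e := by
    intro w hwr hwl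
    obtain ⟨hew, hwe⟩ := G1 w hwr hwl
    have heR : e ∈ rIdeal w := by rw [hwr]; exact mem_rIdeal.mpr ⟨abar, haab⟩
    have heL : e ∈ lIdeal w := by rw [hwl]; exact mem_lIdeal.mpr ⟨abar, haba⟩
    obtain ⟨s, hs⟩ := mem_rIdeal.mp heR
    obtain ⟨t, ht⟩ := mem_lIdeal.mp heL
    have hr : w * (e * (s * e)) = e := by
      calc w * (e * (s * e)) = (w * e) * (s * e) := (mul_assoc _ _ _).symm
        _ = w * (s * e) := by rw [hwe]
        _ = (w * s) * e := (mul_assoc _ _ _).symm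
        _ = e * e := by rw [hs]
        _ = e := hee
    have hl : (e * (t * e)) * w = e := by
      calc (e * (t * e)) * w = e * ((t * e) * w) := mul_assoc _ _ _
        _ = e * (t * (e * w)) := by rw [mul_assoc t]
        _ = e * (t * w) := by rw [hew]
        _ = e * e := by rw [ht]
        _ = e := hee
    have hle : (e * (t * e)) * e = e * (t * e) := by
      calc (e * (t * e)) * e = e * ((t * e) * e) := mul_assoc _ _ _
        _ = e * (t * (e * e)) := by rw [mul_assoc t]
        _ = e * (t * e) := by rw [hee]
    have hlr : e * (t * e) = e * (s * e) := by
      calc e * (t * e) = (e * (t * e)) * e := hle.symm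
        _ = (e * (t * e)) * (w * (e * (s * e))) := by rw [hr]
        _ = ((e * (t * e)) * w) * (e * (s * e)) := (mul_assoc _ _ _).symm
        _ = e * (e * (s * e)) := by rw [hl]
        _ = (e * e) * (s * e) := (mul_assoc _ _ _).symm
        _ = e * (s * e) := by rw [hee]
    exact ⟨e * (s * e), hr, by rw [← hlr]; exact hl⟩
  have Gmul : ∀ v w : S, rIdeal v = rIdeal a → lIdeal v = lIdeal a →
      rIdeal w = rIdeal a → lIdeal w = lIdeal a →
      rIdeal (v * w) = rIdeal a ∧ lIdeal (v * w) = lIdeal a := by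
    intro v w hvr hvl hwr hwl
    obtain ⟨vb, hvvb, hvbv⟩ := G2 v hvr hvl
    obtain ⟨wb, hwwb, hwbw⟩ := G2 w hwr hwl
    obtain ⟨hev, hve⟩ := G1 v hvr hvl
    obtain ⟨hew, hwe⟩ := G1 w hwr hwl
    have h1 : (v * w) * (wb * vb) = e := by
      calc (v * w) * (wb * vb) = v * (w * (wb * vb)) := mul_assoc _ _ _
        _ = v * ((w * wb) * vb) := by rw [← mul_assoc w wb vb]
        _ = v * (e * vb) := by rw [hwwb]
        _ = (v * e) * vb := (mul_assoc _ _ _).symm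
        _ = v * vb := by rw [hve]
        _ = e := hvvb
    have h2 : (wb * vb) * (v * w) = e := by
      calc (wb * vb) * (v * w) = wb * (vb * (v * w)) := mul_assoc _ _ _
        _ = wb * ((vb * v) * w) := by rw [← mul_assoc vb v w]
        _ = wb * (e * w) := by rw [hvbv]
        _ = wb * w := by rw [hew]
        _ = e := hwbw
    constructor
    · apply Set.Subset.antisymm
      · intro u hu
        obtain ⟨s, hs⟩ := mem_rIdeal.mp hu
        rw [← hvr]
        exact mem_rIdeal.mpr ⟨w * s, by rw [← mul_assoc]; exact hs⟩
      · intro u hu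
        obtain ⟨s, hs⟩ := mem_rIdeal.mp hu
        refine mem_rIdeal.mpr ⟨(wb * vb) * (a * s), ?_⟩
        calc (v * w) * ((wb * vb) * (a * s))
            = ((v * w) * (wb * vb)) * (a * s) := (mul_assoc _ _ _).symm
          _ = e * (a * s) := by rw [h1]
          _ = (e * a) * s := (mul_assoc _ _ _).symm
          _ = a * s := by rw [he_a]
          _ = u := hs
    · apply Set.Subset.antisymm
      · intro u hu
        obtain ⟨s, hs⟩ := mem_lIdeal.mp hu
        rw [← hwl]
        exact mem_lIdeal.mpr ⟨s * v, by rw [mul_assoc]; exact hs⟩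
      · intro u hu
        obtain ⟨s, hs⟩ := mem_lIdeal.mp hu
        refine mem_lIdeal.mpr ⟨(s * a) * (wb * vb), ?_⟩
        calc ((s * a) * (wb * vb)) * (v * w)
            = (s * a) * ((wb * vb) * (v * w)) := mul_assoc _ _ _
          _ = (s * a) * e := by rw [h2]
          _ = s * (a * e) := mul_assoc _ _ _
          _ = s * a := by rw [ha_e]
          _ = u := hs
  have Gidem : ∀ w : S, rIdeal w = rIdeal a → lIdeal w = lIdeal a → w * w = w → w = e := by
    intro w hwr hwl hww
    obtain ⟨wb, hwwb, hwbw⟩ := G2 w hwr hwl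
    obtain ⟨hew, hwe⟩ := G1 w hwr hwl
    calc w = e * w := hew.symm
      _ = (wb * w) * w := by rw [hwbw]
      _ = wb * (w * w) := mul_assoc _ _ _
      _ = wb * w := by rw [hww]
      _ = e := hwbw
  have ha2A : a * a ∈ A := haA2 ha ha
  -- existence of a one-sided identity for the H-class of `a` inside `A`
  have stab : ∃ m ∈ A, e * m = e ∨ m * e = e := by
    obtain ⟨z, hzA, hwit⟩ := wit a ha (a * a) ha2A haa
    have lstab : ∀ u ∈ A, a * u = a → e * u = e := by
      intro u hu hau
      calc e * u = (abar * a) * u := by rw [haba]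
        _ = abar * (a * u) := mul_assoc _ _ _
        _ = abar * a := by rw [hau]
        _ = e := haba
    have rstab : ∀ u ∈ A, u * a = a → u * e = e := by
      intro u hu hua
      calc u * e = u * (a * abar) := by rw [haab]
        _ = (u * a) * abar := (mul_assoc _ _ _).symm
        _ = a * abar := by rw [hua]
        _ = e := haab
    have mixed : ∀ w ∈ A, a * (w * a) = z → ∃ m ∈ A, e * m = e ∨ m * e = e := by
      intro w hw hzw
      obtain ⟨u, hu, v, hv, huv⟩ := memA_fac w hw
      have hfac : (a * u) * (v * a) = z := by
        rw [mul_assoc, ← mul_assoc u v a, huv]; exact hzw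
      rcases hwit (a * u) (haA2 ha hu) (v * a) (haA2 hv ha) hfac with h | h
      · exact ⟨u, hu, Or.inl (lstab u hu h)⟩
      · exact ⟨v, hv, Or.inr (rstab v hv h)⟩
    obtain ⟨x₁, h1, x₂, h2, x₃, h3, hfac⟩ := trip z hzA
    have hfac' : (x₁ * x₂) * x₃ = z := by rw [mul_assoc]; exact hfac
    rcases hwit x₁ h1 (x₂ * x₃) (haA2 h2 h3) hfac with W1 | W1
    · rcases hwit (x₁ * x₂) (haA2 h1 h2) x₃ h3 hfac' with W2 | W2
      · rw [W1] at W2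
        exact ⟨x₂, h2, Or.inl (lstab x₂ h2 W2)⟩
      · apply mixed x₂ h2
        have heq : x₁ * (x₂ * x₃) = a * (x₂ * a) := by rw [W1, W2]
        rw [← heq]; exact hfac
    · rcases hwit (x₁ * x₂) (haA2 h1 h2) x₃ h3 hfac' with W2 | W2
      · obtain ⟨u, hu, v, hv, huv⟩ := memA_fac x₁ h1
        have hz2 : u * (v * a) = z := by
          rw [← mul_assoc, huv, ← W1]; exact hfac
        rcases hwit u hu (v * a) (haA2 hv ha) hz2 with h | h
        · apply mixed v hv
          have heq : u * (v * a) = a * (v * a) := by rw [h]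
          rw [← heq]; exact hz2
        · exact ⟨v, hv, Or.inr (rstab v hv h)⟩
      · rw [W2] at W1
        exact ⟨x₂, h2, Or.inr (rstab x₂ h2 W1)⟩
  -- the main contradiction lemma
  have MAIN : ∀ d ∈ A, rIdeal d = rIdeal a → lIdeal d = lIdeal a → d * d ≠ d →
      ∀ p ∈ A, ∀ q ∈ A, p * q = d → p ≠ d → q ≠ d → False := by
    obtain ⟨m, hmA, hm | hm⟩ := stab
    · -- `m` is a right identity for the H-class
      intro d hdA hdr hdl hdd p hp q hq hpq hpd hqd
      obtain ⟨hed, hde⟩ := G1 d hdr hdl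
      have hdm : d * m = d := by
        calc d * m = (d * e) * m := by rw [hde]
          _ = d * (e * m) := mul_assoc _ _ _
          _ = d * e := by rw [hm]
          _ = d := hde
      have hmd : m ≠ d := by
        intro hmd
        apply hdd
        have hdE : d = e := by
          calc d = e * d := hed.symm
            _ = e := by rw [← hmd]; exact hm
        rw [hdE]; exact hee
      obtain ⟨z, hzA, hwit⟩ := wit d hdA p hp hpd
      have claim1 : ∀ x ∈ A, x * d = z → False := by
        intro x hx hxd
        have hfz : (x * d) * m = z := by rw [mul_assoc, hdm]; exact hxd
        rcases hwit (x * d) (haA2 hx hdA) m hmA hfz with h | h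
        · have hzd : z = d := by rw [← hfz, h, hdm]
          rcases hwit p hp q hq (by rw [hpq, hzd]) with h' | h'
          · exact hpd h'
          · exact hqd h'
        · exact hmd h
      have claim2 : ∀ y ∈ A, d * y = z → False := by
        intro y hy hdy
        have hfz : p * (q * y) = z := by rw [← mul_assoc, hpq]; exact hdy
        rcases hwit p hp (q * y) (haA2 hq hy) hfz with h | h
        · exact hpd h
        · exact claim1 p hp (by rw [← h]; exact hfz)
      obtain ⟨x, hx, y, hy, hxy⟩ := memA_fac z hzA
      rcases hwit x hx y hy hxy with h | h
      · exact claim2 y hy (by rw [← h]; exact hxy)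
      · exact claim1 x hx (by rw [← h]; exact hxy)
    · -- `m` is a left identity for the H-class
      intro d hdA hdr hdl hdd p hp q hq hpq hpd hqd
      obtain ⟨hed, hde⟩ := G1 d hdr hdl
      have hmd' : m * d = d := by
        calc m * d = m * (e * d) := by rw [hed]
          _ = (m * e) * d := (mul_assoc _ _ _).symm
          _ = e * d := by rw [hm]
          _ = d := hed
      have hmd : m ≠ d := by
        intro hmd
        apply hdd
        have hdE : d = e := by
          calc d = d * e := hde.symm
            _ = e := by rw [← hmd]; exact hm
        rw [hdE]; exact hee
      obtain ⟨z, hzA, hwit⟩ := wit d hdA p hp hpd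
      have claim1 : ∀ y ∈ A, d * y = z → False := by
        intro y hy hdy
        have hfz : m * (d * y) = z := by rw [← mul_assoc, hmd']; exact hdy
        rcases hwit m hmA (d * y) (haA2 hdA hy) hfz with h | h
        · exact hmd h
        · have hzd : z = d := by rw [← hfz, h, hmd']
          rcases hwit p hp q hq (by rw [hpq, hzd]) with h' | h'
          · exact hpd h'
          · exact hqd h'
      have claim2 : ∀ x ∈ A, x * d = z → False := by
        intro x hx hxd
        have hfz : (x * p) * q = z := by rw [mul_assoc, hpq]; exact hxd
        rcases hwit (x * p) (haA2 hx hp) q hq hfz with h | h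
        · exact claim1 q hq (by rw [← h]; exact hfz)
        · exact hqd h
      obtain ⟨x, hx, y, hy, hxy⟩ := memA_fac z hzA
      rcases hwit x hx y hy hxy with h | h
      · exact claim1 y hy (by rw [← h]; exact hxy)
      · exact claim2 x hx (by rw [← h]; exact hxy)
  have Ga2 := Gmul a a rfl rfl rfl rfl
  -- `a * a` is the identity of the H-class of `a`
  have ha2e : a * a = e := by
    by_contra h2e
    have hdd : (a * a) * (a * a) ≠ a * a := by
      intro hid
      exact h2e (Gidem (a * a) Ga2.1 Ga2.2 hid)
    exact MAIN (a * a) ha2A Ga2.1 Ga2.2 hdd a ha a ha rfl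
      (fun h => haa h.symm) (fun h => haa h.symm)
  have hae : a ≠ e := by intro h; apply haa; rw [h]; exact hee
  -- every element of `A` H-related to `a` is `a` or `a * a`
  have main : ∀ c ∈ A, rIdeal c = rIdeal a → lIdeal c = lIdeal a →
      c = a ∨ c = a * a := by
    intro c hc hcr hcl
    by_contra hcon
    push_neg at hcon
    obtain ⟨hca, hca2⟩ := hcon
    have hce : c ≠ e := by rw [← ha2e]; exact hca2
    obtain ⟨cb, hccb, hcbc⟩ := G2 c hcr hcl
    obtain ⟨hec, hcE⟩ := G1 c hcr hcl
    have hdG := Gmul a c rfl rfl hcr hcl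
    have hdA : a * c ∈ A := haA2 ha hc
    have hdd : (a * c) * (a * c) ≠ a * c := by
      intro hid
      have hde : a * c = e := Gidem (a * c) hdG.1 hdG.2 hid
      apply hca
      calc c = e * c := hec.symm
        _ = (a * a) * c := by rw [ha2e]
        _ = a * (a * c) := mul_assoc _ _ _
        _ = a * e := by rw [hde]
        _ = a := ha_e
    have hpd : a ≠ a * c := by
      intro h
      apply hce
      calc c = e * c := hec.symm
        _ = (a * a) * c := by rw [ha2e]
        _ = a * (a * c) := mul_assoc _ _ _
        _ = a * a := by rw [← h]
        _ = e := ha2e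
    have hqd : c ≠ a * c := by
      intro h
      apply hae
      calc a = a * e := ha_e.symm
        _ = a * (c * cb) := by rw [hccb]
        _ = (a * c) * cb := (mul_assoc _ _ _).symm
        _ = c * cb := by rw [← h]
        _ = e := hccb
    exact MAIN (a * c) hdA hdG.1 hdG.2 hdd a ha c hc rfl hpd hqd
  ext x
  simp only [Set.mem_setOf_eq, Set.mem_insert_iff, Set.mem_singleton_iff]
  constructor
  · rintro ⟨hxA, hxr, hxl⟩
    exact main x hxA hxr hxl
  · rintro (rfl | rfl)
    · exact ⟨ha, rfl, rfl⟩
    · exact ⟨ha2A, Ga2.1, Ga2.2⟩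
end

section
/- Let S be a completely regular semigroup and let A be a nonempty subset of S with A*A = A. Then A ∈ A₃(S) (i.e., A is a subsemigroup with a*b*c ∈ {a, b, c} for all a, b, c ∈ A) if and only if for every nonempty subset B of S, B*B = A and B*A = A imply B = A. -/
open Pointwise

/-- A nonempty idempotent subset `A` of a completely regular semigroup belongs
to `A₃(S)` if and only if for every nonempty `B`, `B * B = A` and `B * A = A`
imply `B = A`. -/
theorem a3_characterization
    {S : Type*} [Semigroup S] (hS : CompletelyRegular S)
    (A : Set S) (hA : A.Nonempty) (hAA : A * A = A) :
    IsA3 A ↔ ∀ B : Set S, B.Nonempty → B * B = A → B * A = A → B = A := by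
  have memA : ∀ {x y : S}, x ∈ A → y ∈ A → x * y ∈ A := by
    intro x y hx hy
    have : x * y ∈ A * A := Set.mul_mem_mul hx hy
    rwa [hAA] at this
  constructor
  · rintro ⟨-, hcl, h3⟩ B hBne hBB hBA
    -- cube law on A
    have cube : ∀ x ∈ A, x * x * x = x := by
      intro x hx
      have := h3 x hx x hx x hx
      simpa using this
    -- Step 1 : B ⊆ A
    have hBsubA : B ⊆ A := by
      intro b hb
      have hb2 : b * b ∈ A := by
        have : b * b ∈ B * B := Set.mul_mem_mul hb hb
        rwa [hBB] at this
      have hb3 : b * (b * b) ∈ A := by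
        have : b * (b * b) ∈ B * A := Set.mul_mem_mul hb hb2
        rwa [hBA] at this
      obtain ⟨x, hx1, hx2⟩ := hS b
      -- b = x * (b * b)
      have e1 : b = x * (b * b) := by
        conv_lhs => rw [hx1, hx2]
        rw [mul_assoc]
      -- b * b = (b*b) * ((b*b)*(b*b))
      have e2 : b * b = b * b * (b * b * (b * b)) := by
        have := cube (b * b) hb2
        rw [mul_assoc] at this
        exact this.symm
      have e3 : b = b * (b * b) * (b * b) := by
        conv_lhs => rw [e1, e2]
        rw [← mul_assoc, ← e1, ← mul_assoc]
      rw [e3]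
      exact memA hb3 hb2
    -- Step 2 : A ⊆ B
    have hAsubB : A ⊆ B := by
      intro a ha
      by_contra haB
      obtain ⟨b₁, hb₁, b₂, hb₂, hfac⟩ : ∃ x ∈ B, ∃ y ∈ B, x * y = a := by
        rw [← hBB] at ha
        exact Set.mem_mul.mp ha
      have hb₁A : b₁ ∈ A := hBsubA hb₁
      have hb₂A : b₂ ∈ A := hBsubA hb₂
      have hne1 : a ≠ b₁ := fun h => haB (h ▸ hb₁)
      have hne2 : a ≠ b₂ := fun h => haB (h ▸ hb₂)
      -- (i) a = a * a
      have haa : a = a * a := by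
        have hmem := h3 b₁ hb₁A b₂ hb₂A (a * a) (memA ha ha)
        have hval : b₁ * b₂ * (a * a) = a := by
          rw [hfac, ← mul_assoc]; exact cube a ha
        rw [hval] at hmem
        simp only [Set.mem_insert_iff, Set.mem_singleton_iff] at hmem
        rcases hmem with h | h | h
        · exact absurd h hne1
        · exact absurd h hne2
        · exact h
      -- (ii) a = b₂ * b₁
      have hba : a = b₂ * b₁ := by
        have hmem := h3 b₁ hb₁A (b₂ * b₁) (memA hb₂A hb₁A) b₂ hb₂A
        have hval : b₁ * (b₂ * b₁) * b₂ = a := by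
          rw [← mul_assoc, mul_assoc (b₁ * b₂) b₁ b₂, hfac, ← haa]
        rw [hval] at hmem
        simp only [Set.mem_insert_iff, Set.mem_singleton_iff] at hmem
        rcases hmem with h | h | h
        · exact absurd h hne1
        · exact h
        · exact absurd h hne2
      -- (iii) a = b₁ * b₁
      have h11 : a = b₁ * b₁ := by
        have hmem := h3 b₂ hb₂A (b₁ * b₁) (memA hb₁A hb₁A) b₂ hb₂A
        have hval : b₂ * (b₁ * b₁) * b₂ = a := by
          rw [← mul_assoc, mul_assoc (b₂ * b₁) b₁ b₂, hfac, ← hba, ← haa]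
        rw [hval] at hmem
        simp only [Set.mem_insert_iff, Set.mem_singleton_iff] at hmem
        rcases hmem with h | h | h
        · exact absurd h hne2
        · exact h
        · exact absurd h hne2
      -- (iv) a = b₂ * b₂
      have h22 : a = b₂ * b₂ := by
        have hmem := h3 b₁ hb₁A (b₂ * b₂) (memA hb₂A hb₂A) b₁ hb₁A
        have hval : b₁ * (b₂ * b₂) * b₁ = a := by
          rw [← mul_assoc, mul_assoc (b₁ * b₂) b₂ b₁, hfac, ← hba, ← haa]
        rw [hval] at hmem
        simp only [Set.mem_insert_iff, Set.mem_singleton_iff] at hmem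
        rcases hmem with h | h | h
        · exact absurd h hne1
        · exact h
        · exact absurd h hne1
      -- (v) b₁ = b₂
      have h12 : b₁ = b₂ := by
        calc b₁ = b₁ * b₁ * b₁ := (cube b₁ hb₁A).symm
          _ = b₁ * (b₁ * b₁) := by rw [mul_assoc]
          _ = b₁ * a := by rw [← h11]
          _ = b₁ * (b₁ * b₂) := by rw [← hfac]
          _ = b₁ * b₁ * b₂ := by rw [mul_assoc]
          _ = a * b₂ := by rw [← h11]
          _ = b₂ * b₂ * b₂ := by rw [h22]
          _ = b₂ := cube b₂ hb₂A
      -- (vi) contradiction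
      obtain ⟨u, hu, v, hv, huv⟩ : ∃ x ∈ B, ∃ y ∈ B, x * y = b₁ := by
        rw [← hBB] at hb₁A
        exact Set.mem_mul.mp hb₁A
      have hmem := h3 u (hBsubA hu) v (hBsubA hv) b₁ hb₁A
      have hval : u * v * b₁ = a := by
        rw [huv]; exact h11.symm
      rw [hval] at hmem
      simp only [Set.mem_insert_iff, Set.mem_singleton_iff] at hmem
      rcases hmem with h | h | h
      · exact haB (h ▸ hu)
      · exact haB (h ▸ hv)
      · exact hne1 h
    exact Set.Subset.antisymm hBsubA hAsubB
  · intro hP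
    refine ⟨hA, fun a ha b hb => memA ha hb, ?_⟩
    intro a ha b hb c hc
    by_contra hd
    simp only [Set.mem_insert_iff, Set.mem_singleton_iff] at hd
    push_neg at hd
    obtain ⟨hda, hdb, hdc⟩ := hd
    set d := a * b * c with hddef
    have hdA : d ∈ A := memA (memA ha hb) hc
    -- key representation lemma
    have rep : ∀ e ∈ A, ∃ u ∈ A, ∃ v ∈ A, u ≠ d ∧ v ≠ d ∧ u * v = e := by
      intro e he
      by_contra hcon
      push_neg at hcon
      -- hcon : ∀ u ∈ A, ∀ v ∈ A, u ≠ d → v ≠ d → u * v ≠ e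
      have h : ∀ u ∈ A, ∀ v ∈ A, u * v = e → u = d ∨ v = d := by
        intro u hu v hv huv
        by_contra hb'
        push_neg at hb'
        exact hcon u hu v hv hb'.1 hb'.2 huv
      -- e ≠ d
      have hed : e ≠ d := by
        intro hED
        by_cases hab : a * b = d
        · rcases h a ha b hb (by rw [hED]; exact hab) with h' | h'
          · exact hda h'.symm
          · exact hdb h'.symm
        · rcases h (a * b) (memA ha hb) c hc (by rw [hED]) with h' | h'
          · exact hab h'
          · exact hdc h'.symm
      -- f1 : d * y = e → e = a * d
      have f1 : ∀ y ∈ A, d * y = e → e = a * d := by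
        intro y hy hdy
        have hassoc : d * y = a * (b * (c * y)) := by
          rw [hddef, mul_assoc, mul_assoc]
        have hmem : b * (c * y) ∈ A := memA hb (memA hc hy)
        rcases h a ha (b * (c * y)) hmem (by rw [← hassoc, hdy]) with h' | h'
        · exact absurd h'.symm hda
        · rw [← hdy, hassoc, h']
      -- f2 : x * d = e → e = d * c and (x*a)*b = d
      have f2 : ∀ x ∈ A, x * d = e → e = d * c ∧ x * a * b = d := by
        intro x hx hxd
        have hassoc : x * d = x * a * b * c := by
          rw [hddef, ← mul_assoc, ← mul_assoc]
        have hmem : x * a * b ∈ A := memA (memA hx ha) hb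
        rcases h (x * a * b) hmem c hc (by rw [← hassoc, hxd]) with h' | h'
        · constructor
          · rw [← hxd, hassoc, h']
          · exact h'
        · exact absurd h'.symm hdc
      -- get a factorization of e
      obtain ⟨x, hx, y, hy, hxy⟩ : ∃ x ∈ A, ∃ y ∈ A, x * y = e := by
        rw [← hAA] at he
        exact Set.mem_mul.mp he
      have key : e = a * d ∧ a * a * b = d := by
        rcases h x hx y hy hxy with hX | hY
        · -- x = d : e = d * y
          have ead : e = a * d := f1 y hy (by rw [← hX, hxy])
          exact ⟨ead, ((f2 a ha ead.symm).2)⟩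
        · -- y = d : e = x * d
          have edc : e = d * c := (f2 x hx (by rw [← hY, hxy])).1
          have ead : e = a * d := f1 c hc edc.symm
          exact ⟨ead, ((f2 a ha ead.symm).2)⟩
      obtain ⟨ead, haab⟩ := key
      -- a * a = d
      have haad : a * a = d := by
        have hassoc : a * d = a * a * (b * c) := by
          rw [hddef, ← mul_assoc, ← mul_assoc, mul_assoc (a*a)]
        rcases h (a * a) (memA ha ha) (b * c) (memA hb hc) (by rw [← hassoc, ← ead]) with h' | h'
        · exact h'
        · exfalso
          apply hed
          rw [ead]
          conv_rhs => rw [hddef, mul_assoc, h']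
      -- d * b = d
      have hdbd : d * b = d := by
        conv_lhs => rw [← haad]
        exact haab
      -- e * b = e
      have hebe : e * b = e := by rw [ead, mul_assoc, hdbd]
      rcases h e he b hb hebe with h' | h'
      · exact hed h'
      · exact hdb h'.symm
    -- build B
    set B : Set S := A \ {d} with hBdef
    have haB : a ∈ B := ⟨ha, fun h => hda (Set.mem_singleton_iff.mp h).symm⟩
    have hBne : B.Nonempty := ⟨a, haB⟩
    have hBsub : B ⊆ A := Set.diff_subset
    have hBB : B * B = A := by
      apply Set.Subset.antisymm
      · intro z hz
        obtain ⟨u, hu, v, hv, huv⟩ := Set.mem_mul.mp hz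
        rw [← huv]; exact memA (hBsub hu) (hBsub hv)
      · intro e he
        obtain ⟨u, hu, v, hv, hund, hvnd, huv⟩ := rep e he
        rw [← huv]
        exact Set.mul_mem_mul ⟨hu, by simp [hund]⟩ ⟨hv, by simp [hvnd]⟩
    have hBA : B * A = A := by
      apply Set.Subset.antisymm
      · intro z hz
        obtain ⟨u, hu, v, hv, huv⟩ := Set.mem_mul.mp hz
        rw [← huv]; exact memA (hBsub hu) hv
      · intro e he
        obtain ⟨x, hx, y, hy, hxy⟩ : ∃ x ∈ A, ∃ y ∈ A, x * y = e := by
          rw [← hAA] at he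
          exact Set.mem_mul.mp he
        by_cases hxd : x = d
        · have hassoc : e = a * (b * (c * y)) := by
            rw [← hxy, hxd, hddef, mul_assoc, mul_assoc]
          rw [hassoc]
          exact Set.mul_mem_mul haB (memA hb (memA hc hy))
        · rw [← hxy]
          exact Set.mul_mem_mul ⟨hx, by simp [hxd]⟩ hy
    have := hP B hBne hBB hBA
    have : d ∈ B := this.symm ▸ hdA
    exact this.2 rfl
end

section
/- Let S and S' be completely regular semigroups and let ψ : P(S) → P(S') be an isomorphism of their power semigroups. Then for every nonempty subset A of S, A ∈ A₃(S) if and only if ψ(A) ∈ A₃(S'); hence the restriction of ψ to A₃(S) is a bijection from A₃(S) onto A₃(S'). -/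
open Pointwise

private lemma pow7_of {M : Type*} [Monoid M] (β ξ : M)
    (h1 : β = ξ * β ^ 2) (h9 : β ^ 9 = β ^ 3) : β ^ 7 = β := by
  have h8 : β ^ 8 = β ^ 2 := by
    calc β ^ 8 = β * β ^ 7 := by rw [← pow_succ']
      _ = ξ * β ^ 2 * β ^ 7 := by rw [← h1]
      _ = ξ * (β ^ 2 * β ^ 7) := by rw [mul_assoc]
      _ = ξ * β ^ 9 := by rw [← pow_add]
      _ = ξ * (β ^ 2 * β) := by rw [h9, pow_succ]
      _ = ξ * β ^ 2 * β := by rw [mul_assoc]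
      _ = β * β := by rw [← h1]
      _ = β ^ 2 := (sq β).symm
  calc β ^ 7 = β * β ^ 6 := by rw [← pow_succ']
    _ = ξ * β ^ 2 * β ^ 6 := by rw [← h1]
    _ = ξ * (β ^ 2 * β ^ 6) := by rw [mul_assoc]
    _ = ξ * β ^ 8 := by rw [← pow_add]
    _ = ξ * β ^ 2 := by rw [h8]
    _ = β := h1.symm

section Aux
variable {T : Type*} [Semigroup T]

/-- In any semigroup, from complete regularity data for `b` and `b⁹ = b³`
we get `b⁷ = b`, written without powers. -/
private lemma seventh {b x : T} (hx1 : b = b * x * b) (hx2 : b * x = x * b)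
    (h9 : (b * b * b) * (b * b * b) * (b * b * b) = b * b * b) :
    (b * b * b) * (b * b * b) * b = b := by
  have e1 : b = x * (b * b) := by
    calc b = b * x * b := hx1
      _ = x * b * b := by rw [hx2]
      _ = x * (b * b) := mul_assoc _ _ _
  have h1 : (b : WithOne T) = (x : WithOne T) * (b : WithOne T) ^ 2 := by
    rw [sq]; exact_mod_cast e1
  have p3 : (b : WithOne T) ^ 3 = (b : WithOne T) * (b : WithOne T) * (b : WithOne T) := by
    rw [pow_succ, sq]
  have h9' : (b : WithOne T) ^ 9 = (b : WithOne T) ^ 3 := by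
    have h9c : ((b : WithOne T) * b * b) * ((b : WithOne T) * b * b) * ((b : WithOne T) * b * b)
        = (b : WithOne T) * b * b := by exact_mod_cast h9
    calc (b : WithOne T) ^ 9 = ((b : WithOne T) ^ 3) ^ 3 := by rw [← pow_mul]
      _ = (b : WithOne T) ^ 3 := by rw [p3]; exact h9c
  have key : (b : WithOne T) ^ 7 = (b : WithOne T) := pow7_of _ _ h1 h9'
  have final : ((b : WithOne T) * b * b) * ((b : WithOne T) * b * b) * (b : WithOne T)
      = (b : WithOne T) := by
    calc ((b : WithOne T) * b * b) * ((b : WithOne T) * b * b) * (b : WithOne T)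
        = (b : WithOne T) ^ 3 * (b : WithOne T) ^ 3 * (b : WithOne T) ^ 1 := by
          rw [p3, pow_one]
      _ = (b : WithOne T) ^ 7 := by rw [← pow_add, ← pow_add]
      _ = (b : WithOne T) := key
  exact_mod_cast final

/-- Necessity: if `A ∈ A₃` then every nonempty `B` with `B³ = A` and `A·B = A`
equals `A`. -/
private lemma char_nec (hCR : CompletelyRegular T) {A B : Set T} (h3 : IsA3 A)
    (hBne : B.Nonempty) (hcube : B * B * B = A) (habs : A * B = A) : B = A := by
  obtain ⟨hne, hcl, htr⟩ := h3
  have hcube_fix : ∀ z ∈ A, z * z * z = z := by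
    intro z hz
    have h := htr z hz z hz z hz
    simpa using h
  have hBsub : B ⊆ A := by
    intro b hb
    have hb3 : b * b * b ∈ A := by
      rw [← hcube]; exact Set.mul_mem_mul (Set.mul_mem_mul hb hb) hb
    have h9 := hcube_fix _ hb3
    obtain ⟨x, hx1, hx2⟩ := hCR b
    have h7 := seventh hx1 hx2 h9
    have h6A : (b * b * b) * (b * b * b) ∈ A := hcl _ hb3 _ hb3
    rw [← habs]
    exact h7 ▸ Set.mul_mem_mul h6A hb
  have hAsub : A ⊆ B := by
    intro z hz
    rw [← hcube] at hz
    obtain ⟨u, hu, c3, hc3, huc⟩ := Set.mem_mul.mp hz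
    obtain ⟨c1, hc1, c2, hc2, hcc⟩ := Set.mem_mul.mp hu
    have hz' : c1 * c2 * c3 = z := by rw [hcc, huc]
    have hmem := htr c1 (hBsub hc1) c2 (hBsub hc2) c3 (hBsub hc3)
    rw [hz'] at hmem
    simp only [Set.mem_insert_iff, Set.mem_singleton_iff] at hmem
    rcases hmem with h | h | h
    · exact h ▸ hc1
    · exact h ▸ hc2
    · exact h ▸ hc3
  exact Set.Subset.antisymm hBsub hAsub

/-- Sufficiency: a nonempty idempotent `A` all of whose "absorbed cube roots"
are trivial is in `A₃`. -/
private lemma char_suf (hCR : CompletelyRegular T) {A : Set T} (hAne : A.Nonempty)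
    (hidem : A * A = A)
    (hmin : ∀ B : Set T, B.Nonempty → B * B * B = A → A * B = A → B = A) :
    IsA3 A := by
  have hcl : ∀ u ∈ A, ∀ v ∈ A, u * v ∈ A := by
    intro u hu v hv
    rw [← hidem]; exact Set.mul_mem_mul hu hv
  refine ⟨hAne, hcl, ?_⟩
  intro a ha b hb c hc
  by_contra hd
  set d := a * b * c with hd_def
  simp only [Set.mem_insert_iff, Set.mem_singleton_iff, not_or] at hd
  obtain ⟨hda, hdb, hdc⟩ := hd
  set B : Set T := A \ {d} with hB_def
  have hmemB : ∀ z, z ∈ A → z ≠ d → z ∈ B := by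
    intro z hz hzd
    exact ⟨hz, by simpa using hzd⟩
  have haB : a ∈ B := hmemB a ha fun h => hda h.symm
  have hbB : b ∈ B := hmemB b hb fun h => hdb h.symm
  have hcB : c ∈ B := hmemB c hc fun h => hdc h.symm
  have hBsubA : B ⊆ A := Set.diff_subset
  have hdA : d ∈ A := hcl _ (hcl a ha b hb) c hc
  have hBne : B.Nonempty := ⟨a, haB⟩
  -- A * B = A
  have hAB : A * B = A := by
    apply Set.Subset.antisymm
    · intro z hz
      obtain ⟨u, hu, v, hv, huv⟩ := Set.mem_mul.mp hz
      exact huv ▸ hcl u hu v (hBsubA hv)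
    · intro y hy
      have hy2 : y ∈ A * A := by rw [hidem]; exact hy
      obtain ⟨u, hu, v, hv, huv⟩ := Set.mem_mul.mp hy2
      by_cases hvd : v = d
      · refine Set.mem_mul.mpr ⟨u * (a * b), hcl u hu _ (hcl a ha b hb), c, hcB, ?_⟩
        rw [← huv, hvd, hd_def]
        simp only [mul_assoc]
      · exact Set.mem_mul.mpr ⟨u, hu, v, hmemB v hv hvd, huv⟩
  -- B * A = A
  have hBA : B * A = A := by
    apply Set.Subset.antisymm
    · intro z hz
      obtain ⟨u, hu, v, hv, huv⟩ := Set.mem_mul.mp hz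
      exact huv ▸ hcl u (hBsubA hu) v hv
    · intro y hy
      have hy2 : y ∈ A * A := by rw [hidem]; exact hy
      obtain ⟨u, hu, v, hv, huv⟩ := Set.mem_mul.mp hy2
      by_cases hud : u = d
      · refine Set.mem_mul.mpr ⟨a, haB, b * (c * v), hcl b hb _ (hcl c hc v hv), ?_⟩
        rw [← huv, hud, hd_def]
        simp only [mul_assoc]
      · exact Set.mem_mul.mpr ⟨u, hmemB u hu hud, v, hv, huv⟩
  -- B³ ⊆ A
  have hBBB_sub : B * B * B ⊆ A := by
    intro z hz
    obtain ⟨u, hu, w, hw, huw⟩ := Set.mem_mul.mp hz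
    obtain ⟨p, hp, q, hq, hpq⟩ := Set.mem_mul.mp hu
    rw [← huw, ← hpq]
    exact hcl _ (hcl p (hBsubA hp) q (hBsubA hq)) w (hBsubA hw)
  -- B³ ≠ A, since otherwise hmin forces B = A but d ∉ B
  have hcube_ne : B * B * B ≠ A := by
    intro hcube
    have hBA' := hmin B hBne hcube hAB
    have : d ∈ B := hBA' ▸ hdA
    exact this.2 rfl
  obtain ⟨y, hyA, hyn⟩ : ∃ y, y ∈ A ∧ y ∉ B * B * B := by
    by_contra h
    push_neg at h
    exact hcube_ne (Set.Subset.antisymm hBBB_sub h)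
  have hNB : ∀ p q r' : T, p ∈ B → q ∈ B → r' ∈ B → p * q * r' ≠ y := by
    intro p q r' hp hq hr' hE
    exact hyn (hE ▸ Set.mul_mem_mul (Set.mul_mem_mul hp hq) hr')
  -- find a frame y = r * d * t
  obtain ⟨r, hr, s1, hs1, hrs1⟩ := Set.mem_mul.mp (by rw [hBA]; exact hyA : y ∈ B * A)
  obtain ⟨s, hs, t, ht, hst⟩ := Set.mem_mul.mp (by rw [hAB]; exact hs1 : s1 ∈ A * B)
  have hsd : s = d := by
    by_contra hsd
    exact hNB r s t hr (hmemB s hs hsd) ht (by rw [mul_assoc, hst, hrs1])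
  have hy : r * (d * t) = y := by
    have hdt' : d * t = s1 := by rw [← hsd]; exact hst
    rw [hdt', hrs1]
  -- (6a): b*c*t = d
  have h6a : b * c * t = d := by
    by_contra hne1
    apply hNB r a (b * c * t) hr haB
      (hmemB _ (hcl _ (hcl b hb c hc) t (hBsubA ht)) hne1)
    rw [← hy, hd_def]
    simp only [mul_assoc]
  have hdt2 : d * t = a * d := by
    conv_rhs => rw [← h6a]
    conv_lhs => rw [hd_def]
    simp only [mul_assoc]
  have hyad : r * (a * d) = y := by rw [← hdt2]; exact hy
  -- (7): a*a*b = d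
  have h7 : a * a * b = d := by
    by_contra hne1
    apply hNB r (a * a * b) c hr (hmemB _ (hcl _ (hcl a ha a ha) b hb) hne1) hcB
    rw [← hyad]
    conv_rhs => rw [hd_def]
    simp only [mul_assoc]
  -- (8): a*a*a = d
  have h8 : a * a * a = d := by
    by_contra hne1
    apply hNB r (a * a * a) b hr (hmemB _ (hcl _ (hcl a ha a ha) a ha) hne1) hbB
    rw [← hyad]
    conv_rhs => rw [← h7]
    simp only [mul_assoc]
  have hy_aaa : r * ((a * a * a) * t) = y := by rw [h8]; exact hy
  -- (11): a*a*t = d and r*(a*a) = d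
  have h11a : a * a * t = d := by
    by_contra hne1
    apply hNB r a (a * a * t) hr haB
      (hmemB _ (hcl _ (hcl a ha a ha) t (hBsubA ht)) hne1)
    rw [← hy_aaa]
    simp only [mul_assoc]
  have h11b : r * (a * a) = d := by
    by_contra hne1
    apply hNB (r * (a * a)) a t
      (hmemB _ (hcl r (hBsubA hr) _ (hcl a ha a ha)) hne1) haB ht
    rw [← hy_aaa]
    simp only [mul_assoc]
  -- complete regularity of a
  obtain ⟨x, hx1, hx2⟩ := hCR a
  have hxaa : x * (a * a) = a := by
    calc x * (a * a) = x * a * a := (mul_assoc _ _ _).symm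
      _ = a * x * a := by rw [hx2]
      _ = a := hx1.symm
  have haax : a * a * x = a := by
    calc a * a * x = a * (a * x) := mul_assoc _ _ _
      _ = a * (x * a) := by rw [hx2]
      _ = a * x * a := (mul_assoc _ _ _).symm
      _ = a := hx1.symm
  -- (14): a*t = a*a and r*a = a*a
  have h14a : a * t = a * a := by
    have hE : a * a * t = a * a * a := by rw [h11a, h8]
    calc a * t = x * (a * a) * t := by rw [hxaa]
      _ = x * (a * a * t) := by simp only [mul_assoc]
      _ = x * (a * a * a) := by rw [hE]
      _ = x * (a * a) * a := by simp only [mul_assoc]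
      _ = a * a := by rw [hxaa]
  have h14b : r * a = a * a := by
    have hE : r * (a * a) = a * a * a := by rw [h11b, h8]
    calc r * a = r * (a * a * x) := by rw [haax]
      _ = r * (a * a) * x := by simp only [mul_assoc]
      _ = a * a * a * x := by rw [hE]
      _ = a * (a * a * x) := by simp only [mul_assoc]
      _ = a * a := by rw [haax]
  -- (15): a*a = d
  have h15 : a * a = d := by
    by_contra hne1
    apply hNB (a * a) a (a * a) (hmemB _ (hcl a ha a ha) hne1) haB
      (hmemB _ (hcl a ha a ha) hne1)
    calc (a * a) * a * (a * a) = (r * a) * a * (a * t) := by rw [h14a, h14b]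
      _ = r * ((a * a * a) * t) := by simp only [mul_assoc]
      _ = y := hy_aaa
  -- conclusion: y = d ∈ B³, contradiction
  have hdt_d : d * t = d := by
    calc d * t = a * a * t := by rw [h15]
      _ = d := h11a
  have hrd : r * d = d := by
    calc r * d = r * (a * a) := by rw [h15]
      _ = d := h11b
  have hyd : y = d := by rw [← hy, hdt_d, hrd]
  exact hyn (by
    rw [hyd, hd_def]
    exact Set.mul_mem_mul (Set.mul_mem_mul haB hbB) hcB)

/-- The power-semigroup characterization of membership in `A₃` for completely
regular semigroups. -/
private lemma char_A3 (hCR : CompletelyRegular T) (A : Set T) (hA : A.Nonempty) :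
    IsA3 A ↔ (A * A = A ∧
      ∀ B : Set T, B.Nonempty → B * B * B = A → A * B = A → B = A) := by
  constructor
  · intro h3
    have hAA : A * A = A := by
      obtain ⟨hne', hcl, htr⟩ := h3
      apply Set.Subset.antisymm
      · intro z hz
        obtain ⟨u, hu, v, hv, huv⟩ := Set.mem_mul.mp hz
        exact huv ▸ hcl u hu v hv
      · intro z hz
        have h9 := htr z hz z hz z hz
        simp only [Set.mem_insert_iff, Set.mem_singleton_iff, or_self] at h9
        exact h9 ▸ Set.mul_mem_mul (hcl z hz z hz) hz
    exact ⟨hAA, fun B hB hc ha => char_nec hCR h3 hB hc ha⟩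
  · rintro ⟨h1, h2⟩
    exact char_suf hCR hA h1 h2

end Aux

/-- An isomorphism of the power semigroups of two completely regular
semigroups preserves the property of belonging to `A₃`; hence it restricts to
a bijection from `A₃(S)` onto `A₃(S')`. -/
theorem psi_restricts_to_A3
    {S S' : Type*} [Semigroup S] [Semigroup S']
    (hS : CompletelyRegular S) (hS' : CompletelyRegular S')
    (ψ : Set S → Set S')
    (hne : ∀ A : Set S, A.Nonempty → (ψ A).Nonempty)
    (hinj : ∀ A B : Set S, A.Nonempty → B.Nonempty → ψ A = ψ B → A = B)
    (hsurj : ∀ A' : Set S', A'.Nonempty → ∃ A : Set S, A.Nonempty ∧ ψ A = A')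
    (hmul : ∀ A B : Set S, A.Nonempty → B.Nonempty → ψ (A * B) = ψ A * ψ B) :
    (∀ A : Set S, A.Nonempty → (IsA3 A ↔ IsA3 (ψ A))) ∧
    ∃ g : {A : Set S // IsA3 A} → {A' : Set S' // IsA3 A'},
      Function.Bijective g ∧ ∀ A : {A : Set S // IsA3 A}, (g A : Set S') = ψ (A : Set S) := by
  have main : ∀ A : Set S, A.Nonempty → (IsA3 A ↔ IsA3 (ψ A)) := by
    intro A hA
    rw [char_A3 hS A hA, char_A3 hS' (ψ A) (hne A hA)]
    constructor
    · rintro ⟨h1, h2⟩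
      constructor
      · have h := hmul A A hA hA
        rw [h1] at h
        exact h.symm
      · intro B' hB' hcube' habs'
        obtain ⟨B, hB, rfl⟩ := hsurj B' hB'
        have hc : B * B * B = A := by
          apply hinj _ _ ((hB.mul hB).mul hB) hA
          rw [hmul _ _ (hB.mul hB) hB, hmul _ _ hB hB]
          exact hcube'
        have ha : A * B = A := by
          apply hinj _ _ (hA.mul hB) hA
          rw [hmul _ _ hA hB]
          exact habs'
        rw [h2 B hB hc ha]
    · rintro ⟨h1, h2⟩
      constructor
      · apply hinj (A * A) A (hA.mul hA) hA
        rw [hmul A A hA hA, h1]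
      · intro B hB hcube habs
        apply hinj B A hB hA
        apply h2 (ψ B) (hne B hB)
        · rw [← hmul B B hB hB, ← hmul _ _ (hB.mul hB) hB, hcube]
        · rw [← hmul A B hA hB, habs]
  refine ⟨main, ?_⟩
  refine ⟨fun A => ⟨ψ (A : Set S), (main A A.2.1).mp A.2⟩, ⟨?_, ?_⟩, fun A => rfl⟩
  · intro A1 A2 h
    have h' : ψ (A1 : Set S) = ψ (A2 : Set S) := congrArg Subtype.val h
    exact Subtype.ext (hinj _ _ A1.2.1 A2.2.1 h')
  · rintro ⟨A', h3'⟩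
    obtain ⟨A, hAne, hψ⟩ := hsurj A' h3'.1
    have h3 : IsA3 A := (main A hAne).mpr (by rw [hψ]; exact h3')
    exact ⟨⟨A, h3⟩, Subtype.ext hψ⟩
end

section
/- Let S and S' be completely regular semigroups and let ψ : P(S) → P(S') be an isomorphism of their power semigroups. Let A and B be nonempty subsets of S such that for every a ∈ A there exists b ∈ B with a*S = b*S (i.e., a 𝓡 b in S), and for every b ∈ B there exists a ∈ A with a*S = b*S. Then A*S = B*S, and ψ(A)*S' = ψ(B)*S'. -/
open Pointwise

theorem self_mem_rIdeal' {S : Type*} [Semigroup S] (hS : CompletelyRegular S) (a : S) :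
    a ∈ rIdeal a := by
  obtain ⟨x, h1, _⟩ := hS a
  exact ⟨x * a, by show a * (x * a) = a; rw [← mul_assoc, ← h1]⟩

/-- If every element of `A` is `𝓡`-related to an element of `B` and vice
versa, then `A * S = B * S` and `ψ(A) * S' = ψ(B) * S'`. -/
theorem rRelated_sets_same_right_ideal
    {S S' : Type*} [Semigroup S] [Semigroup S']
    (hS : CompletelyRegular S) (hS' : CompletelyRegular S')
    (ψ : Set S → Set S')
    (hne : ∀ A : Set S, A.Nonempty → (ψ A).Nonempty)
    (hinj : ∀ A B : Set S, A.Nonempty → B.Nonempty → ψ A = ψ B → A = B)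
    (hsurj : ∀ A' : Set S', A'.Nonempty → ∃ A : Set S, A.Nonempty ∧ ψ A = A')
    (hmul : ∀ A B : Set S, A.Nonempty → B.Nonempty → ψ (A * B) = ψ A * ψ B)
    (A B : Set S) (hA : A.Nonempty) (hB : B.Nonempty)
    (hAB : ∀ a ∈ A, ∃ b ∈ B, rIdeal a = rIdeal b)
    (hBA : ∀ b ∈ B, ∃ a ∈ A, rIdeal a = rIdeal b) :
    A * (Set.univ : Set S) = B * (Set.univ : Set S) ∧
      ψ A * (Set.univ : Set S') = ψ B * (Set.univ : Set S') := by
  -- from `rIdeal a = rIdeal b`, extract `m` with `b * m = a`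
  have hdiv : ∀ a b : S, rIdeal a = rIdeal b → ∃ m : S, b * m = a := by
    intro a b hab
    have : a ∈ rIdeal b := hab ▸ self_mem_rIdeal' hS a
    exact this
  -- Part 1
  have part1 : A * (Set.univ : Set S) = B * (Set.univ : Set S) := by
    have key : ∀ (X Y : Set S), (∀ a ∈ X, ∃ b ∈ Y, rIdeal a = rIdeal b) →
        X * (Set.univ : Set S) ⊆ Y * (Set.univ : Set S) := by
      rintro X Y hXY y ⟨a, ha, s, -, rfl⟩
      obtain ⟨b, hb, hab⟩ := hXY a ha
      obtain ⟨m, hm⟩ := hdiv a b hab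
      exact ⟨b, hb, m * s, trivial, by show b * (m * s) = a * s; rw [← mul_assoc, hm]⟩
    exact le_antisymm (key A B hAB)
      (key B A (fun b hb => (hBA b hb).imp (fun a ⟨ha, h⟩ => ⟨ha, h.symm⟩)))
  refine ⟨part1, ?_⟩
  -- S' is nonempty
  obtain ⟨q0, -⟩ := hne A hA
  have huniv' : (Set.univ : Set S').Nonempty := ⟨q0, trivial⟩
  obtain ⟨C, hCne, hC⟩ := hsurj Set.univ huniv'
  -- crux: one inclusion on the ψ-side
  have key : ∀ a b : S, rIdeal a = rIdeal b → ψ ({a} * C) ⊆ ψ ({b} * C) := by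
    intro a b hab
    obtain ⟨m, hm⟩ := hdiv a b hab
    have h1 : ({a} : Set S) * C = {b} * ({m} * C) := by
      rw [← mul_assoc, Set.singleton_mul_singleton, hm]
    calc ψ ({a} * C) = ψ {b} * ψ ({m} * C) := by
          rw [h1, hmul _ _ (Set.singleton_nonempty b)
            ((Set.singleton_nonempty m).mul hCne)]
      _ ⊆ ψ {b} * (Set.univ : Set S') :=
          Set.mul_subset_mul_left (Set.subset_univ _)
      _ = ψ {b} * ψ C := by rw [hC]
      _ = ψ ({b} * C) := (hmul _ _ (Set.singleton_nonempty b) hCne).symm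
  have crux : ∀ a b : S, rIdeal a = rIdeal b → ({a} : Set S) * C = {b} * C := by
    intro a b hab
    exact hinj _ _ ((Set.singleton_nonempty a).mul hCne)
      ((Set.singleton_nonempty b).mul hCne)
      (le_antisymm (key a b hab) (key b a hab.symm))
  -- A * C = B * C
  have hACBC : A * C = B * C := by
    apply le_antisymm
    · rintro y ⟨a, ha, c, hc, rfl⟩
      obtain ⟨b, hb, hab⟩ := hAB a ha
      have : a * c ∈ ({b} : Set S) * C := by
        rw [← crux a b hab]; exact ⟨a, rfl, c, hc, rfl⟩
      obtain ⟨b', hb', c', hc', h⟩ := this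
      exact ⟨b', by rw [Set.eq_of_mem_singleton hb']; exact hb, c', hc', h⟩
    · rintro y ⟨b, hb, c, hc, rfl⟩
      obtain ⟨a, ha, hab⟩ := hBA b hb
      have : b * c ∈ ({a} : Set S) * C := by
        rw [crux a b hab]; exact ⟨b, rfl, c, hc, rfl⟩
      obtain ⟨a', ha', c', hc', h⟩ := this
      exact ⟨a', by rw [Set.eq_of_mem_singleton ha']; exact ha, c', hc', h⟩
  calc ψ A * (Set.univ : Set S') = ψ A * ψ C := by rw [hC]
    _ = ψ (A * C) := (hmul _ _ hA hCne).symm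
    _ = ψ (B * C) := by rw [hACBC]
    _ = ψ B * ψ C := hmul _ _ hB hCne
    _ = ψ B * (Set.univ : Set S') := by rw [hC]
end

section
/- Let S be a completely regular semigroup and let A ∈ A₃(S). Then A ∈ A₂(S) if and only if for every nonempty subset B of S with A*S = B*S and B*A = A*B = A, one has B*B = B. -/
open Pointwise

/-- `A ∈ A₂(S)`: `A` is a (nonempty) subsemigroup of `S` such that the product
of any two of its elements is one of them. -/
def IsA2 {S : Type*} [Semigroup S] (A : Set S) : Prop :=
  A.Nonempty ∧ ∀ a ∈ A, ∀ b ∈ A, a * b ∈ ({a, b} : Set S)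

/-- For `A ∈ A₃(S)`, `A ∈ A₂(S)` if and only if every nonempty `B` with
`A * S = B * S` and `B * A = A * B = A` satisfies `B * B = B`. -/
theorem a2_characterization
    {S : Type*} [Semigroup S] (hS : CompletelyRegular S)
    (A : Set S) (hA : IsA3 A) :
    IsA2 A ↔ ∀ B : Set S, B.Nonempty →
      A * (Set.univ : Set S) = B * (Set.univ : Set S) →
      B * A = A → A * B = A → B * B = B := by
  obtain ⟨hAne, hAmul, hA3⟩ := hA
  have cube : ∀ a ∈ A, a * a * a = a := by
    intro a ha
    have := hA3 a ha a ha a ha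
    simpa using this
  constructor
  · rintro ⟨-, h2⟩ B ⟨b0, hb0⟩ hBS hBA hAB
    -- every element of B lies in A
    have hsub : B ⊆ A := by
      intro b hb
      obtain ⟨x, hx, -⟩ := hS b
      have hbin : b ∈ B * (Set.univ : Set S) :=
        Set.mem_mul.mpr ⟨b, hb, x * b, trivial, by rw [← mul_assoc, ← hx]⟩
      rw [← hBS] at hbin
      obtain ⟨a, ha, s, -, has⟩ := hbin
      have haa : a * a = a := by
        have := h2 a ha a ha; simpa using this
      have hab : a * b = b := by rw [← has, ← mul_assoc, haa]
      rw [← hab, ← hAB]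
      exact Set.mem_mul.mpr ⟨a, ha, b, hb, rfl⟩
    ext y
    constructor
    · rintro ⟨b1, hb1, b2, hb2, rfl⟩
      show b1 * b2 ∈ B
      rcases h2 b1 (hsub hb1) b2 (hsub hb2) with h | h
      · rw [h]; exact hb1
      · rw [Set.mem_singleton_iff] at h; rw [h]; exact hb2
    · intro hy
      have hyy : y * y = y := by
        have := h2 y (hsub hy) y (hsub hy); simpa using this
      exact Set.mem_mul.mpr ⟨y, hy, y, hy, hyy⟩
  · intro hB
    refine ⟨hAne, ?_⟩
    by_contra hcon
    push_neg at hcon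
    obtain ⟨u, hu, v, hv, hc⟩ := hcon
    have hcu : u * v ≠ u := fun h => hc (by rw [h]; exact Set.mem_insert _ _)
    have hcv : u * v ≠ v := fun h => hc (by rw [h]; exact Set.mem_insert_of_mem _ rfl)
    set B : Set S := A \ {u * v} with hBdef
    have huB : u ∈ B := ⟨hu, fun h => hcu (Set.mem_singleton_iff.mp h).symm⟩
    have hvB : v ∈ B := ⟨hv, fun h => hcv (Set.mem_singleton_iff.mp h).symm⟩
    have hBS : A * (Set.univ : Set S) = B * (Set.univ : Set S) := by
      ext y
      constructor
      · rintro ⟨a, ha, s, -, rfl⟩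
        by_cases h : a = u * v
        · subst h
          exact Set.mem_mul.mpr ⟨u, huB, v * s, trivial, by rw [← mul_assoc]⟩
        · exact Set.mem_mul.mpr ⟨a, ⟨ha, h⟩, s, trivial, rfl⟩
      · rintro ⟨b, hb, s, -, rfl⟩
        exact Set.mem_mul.mpr ⟨b, hb.1, s, trivial, rfl⟩
    have hBA : B * A = A := by
      ext y
      constructor
      · rintro ⟨b, hb, a, ha, rfl⟩
        exact hAmul b hb.1 a ha
      · intro ha
        by_cases h : y = u * v
        · subst h
          exact Set.mem_mul.mpr ⟨u, huB, v, hv, rfl⟩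
        · exact Set.mem_mul.mpr ⟨y, ⟨ha, h⟩, y * y, hAmul y ha y ha,
            by rw [← mul_assoc]; exact cube y ha⟩
    have hAB : A * B = A := by
      ext y
      constructor
      · rintro ⟨a, ha, b, hb, rfl⟩
        exact hAmul a ha b hb.1
      · intro ha
        by_cases h : y = u * v
        · subst h
          exact Set.mem_mul.mpr ⟨u, hu, v, hvB, rfl⟩
        · exact Set.mem_mul.mpr ⟨y * y, hAmul y ha y ha, y, ⟨ha, h⟩, cube y ha⟩
    have hBB := hB B ⟨u, huB⟩ hBS hBA hAB
    have : u * v ∈ B * B := Set.mem_mul.mpr ⟨u, huB, v, hvB, rfl⟩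
    rw [hBB] at this
    exact this.2 rfl
end

section
/- Let S and S' be completely regular semigroups and let ψ : P(S) → P(S') be an isomorphism of their power semigroups. Then for every nonempty subset A of S, A ∈ A₂(S) if and only if ψ(A) ∈ A₂(S'); hence the restriction of ψ to A₂(S) is a bijection from A₂(S) onto A₂(S'). -/
open Pointwise

def PhiA2 {S : Type*} [Semigroup S] (A : Set S) : Prop :=
  A * A = A ∧
  (∀ B : Set S, B.Nonempty → B * B = A → A * B = A → B = A) ∧
  (∀ B : Set S, B.Nonempty → B * B * B = A → A * B = A → B = A) ∧
  (∀ B : Set S, B.Nonempty → A * B = A → B * A = A → B * B * B = B → B * B ≠ B →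
    ∃ C : Set S, C.Nonempty ∧ C ≠ A ∧ C * C = C ∧ C * B = C ∧ B * C = C ∧
      C * A = A ∧ A * C = A)

section Aux
variable {S : Type*} [Semigroup S]

lemma creg_sq (hS : CompletelyRegular S) (b : S) : ∃ y : S, b * b * y = b := by
  obtain ⟨y, h1, h2⟩ := hS b
  refine ⟨y, ?_⟩
  calc b * b * y = b * (b * y) := mul_assoc _ _ _
    _ = b * (y * b) := by rw [h2]
    _ = b * y * b := (mul_assoc _ _ _).symm
    _ = b := h1.symm

lemma isA2_phi (hS : CompletelyRegular S) {A : Set S} (hA2 : IsA2 A) : PhiA2 A := by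
  obtain ⟨hAne, hp⟩ := hA2
  have hpair : ∀ u ∈ A, ∀ v ∈ A, u * v = u ∨ u * v = v := by
    intro u hu v hv
    have := hp u hu v hv
    simpa [Set.mem_insert_iff, Set.mem_singleton_iff] using this
  have hidem : ∀ a ∈ A, a * a = a := by
    intro a ha
    rcases hpair a ha a ha with h | h <;> exact h
  have hAA : A * A = A := by
    apply Set.Subset.antisymm
    · rintro w ⟨u, hu, v, hv, rfl⟩
      rcases hpair u hu v hv with h | h
      · show u * v ∈ A; rw [h]; exact hu
      · show u * v ∈ A; rw [h]; exact hv
    · intro w hw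
      exact ⟨w, hw, w, hw, hidem w hw⟩
  have hBsubA2 : ∀ B : Set S, B ⊆ A → B * B = B := by
    intro B hBA
    apply Set.Subset.antisymm
    · rintro w ⟨u, hu, v, hv, rfl⟩
      rcases hpair u (hBA hu) v (hBA hv) with h | h
      · show u * v ∈ B; rw [h]; exact hu
      · show u * v ∈ B; rw [h]; exact hv
    · intro b hb
      exact ⟨b, hb, b, hb, hidem b (hBA hb)⟩
  refine ⟨hAA, ?_, ?_, ?_⟩
  · -- square roots
    intro B hBne hBB hAB
    have hBsub : B ⊆ A := by
      intro b hb
      have hb2 : b * b ∈ A := by rw [← hBB]; exact Set.mul_mem_mul hb hb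
      have hb2i : (b * b) * (b * b) = b * b := hidem _ hb2
      obtain ⟨y, hy⟩ := creg_sq hS b
      have hb3 : b = (b * b) * b := by
        calc b = b * b * y := hy.symm
          _ = ((b * b) * (b * b)) * y := by rw [hb2i]
          _ = (b * b) * ((b * b) * y) := mul_assoc _ _ _
          _ = (b * b) * b := by rw [hy]
      rw [← hAB]
      exact hb3 ▸ Set.mul_mem_mul hb2 hb
    have hAsub : A ⊆ B := by
      intro a ha
      rw [← hBB] at ha
      obtain ⟨u, hu, v, hv, rfl⟩ := ha
      rcases hpair u (hBsub hu) v (hBsub hv) with h | h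
      · show u * v ∈ B; rw [h]; exact hu
      · show u * v ∈ B; rw [h]; exact hv
    exact Set.Subset.antisymm hBsub hAsub
  · -- cube roots
    intro B hBne hBBB hAB
    have hBsub : B ⊆ A := by
      intro b hb
      have hb3 : b * b * b ∈ A := by
        rw [← hBBB]; exact Set.mul_mem_mul (Set.mul_mem_mul hb hb) hb
      have hb3i : (b * b * b) * (b * b * b) = b * b * b := hidem _ hb3
      obtain ⟨y, hy⟩ := creg_sq hS b
      have hy2 : (b * b * b) * y = b * b := by
        calc (b * b * b) * y = (b * b) * (b * y) := mul_assoc _ _ _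
          _ = b * (b * (b * y)) := mul_assoc _ _ _
          _ = b * (b * b * y) := by rw [mul_assoc b b y]
          _ = b * b := by rw [hy]
      have hyy : (b * b * b) * (y * y) = b := by
        calc (b * b * b) * (y * y) = ((b * b * b) * y) * y := (mul_assoc _ _ _).symm
          _ = (b * b) * y := by rw [hy2]
          _ = b := hy
      have hb4 : b = (b * b * b) * b := by
        calc b = b * b * y := hy.symm
          _ = ((b * b * b) * y) * y := by rw [hy2]
          _ = (b * b * b) * (y * y) := mul_assoc _ _ _
          _ = ((b * b * b) * (b * b * b)) * (y * y) := by rw [hb3i]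
          _ = (b * b * b) * ((b * b * b) * (y * y)) := mul_assoc _ _ _
          _ = (b * b * b) * b := by rw [hyy]
      rw [← hAB]
      exact hb4 ▸ Set.mul_mem_mul hb3 hb
    have hAsub : A ⊆ B := by
      intro a ha
      rw [← hBBB] at ha
      obtain ⟨q, hq, v, hv, rfl⟩ := ha
      obtain ⟨u, hu, u', hu', rfl⟩ := hq
      have h1 : u * u' ∈ B := by
        rcases hpair u (hBsub hu) u' (hBsub hu') with h | h
        · show u * u' ∈ B; rw [h]; exact hu
        · show u * u' ∈ B; rw [h]; exact hu'
      rcases hpair (u * u') (hBsub h1) v (hBsub hv) with h | h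
      · show u * u' * v ∈ B; rw [h]; exact h1
      · show u * u' * v ∈ B; rw [h]; exact hv
    exact Set.Subset.antisymm hBsub hAsub
  · -- existential clause
    intro B hBne hAB hBA hB3 hBB
    refine ⟨A ∪ (B ∪ B * B), hAne.mono Set.subset_union_left, ?_, ?_, ?_, ?_, ?_, ?_⟩
    · intro hCA
      apply hBB
      apply hBsubA2 B
      intro b hb
      have : b ∈ A ∪ (B ∪ B * B) := Or.inr (Or.inl hb)
      rwa [hCA] at this
    · have e1 : A * (B * B) = A := by rw [← mul_assoc, hAB, hAB]
      have e2 : (B * B) * A = A := by rw [mul_assoc, hBA, hBA]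
      have e3 : B * (B * B) = B := by rw [← mul_assoc, hB3]
      have e4 : (B * B) * (B * B) = B * B := by
        rw [mul_assoc, e3]
      simp only [Set.union_mul, Set.mul_union, hAA, hAB, hBA, e1, e2, e3, e4, hB3]
      ext w
      simp only [Set.mem_union]
      tauto
    · simp only [Set.union_mul, hAB, hB3]
      ext w
      simp only [Set.mem_union]
      tauto
    · have e3 : B * (B * B) = B := by rw [← mul_assoc, hB3]
      simp only [Set.mul_union, hBA, e3]
      ext w
      simp only [Set.mem_union]
      tauto
    · have e2 : (B * B) * A = A := by rw [mul_assoc, hBA, hBA]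
      simp only [Set.union_mul, hAA, hBA, e2]
      ext w
      simp only [Set.mem_union]
      tauto
    · have e1 : A * (B * B) = A := by rw [← mul_assoc, hAB, hAB]
      simp only [Set.mul_union, hAA, hAB, e1]
      ext w
      simp only [Set.mem_union]
      tauto

end Aux

section Aux2
variable {S : Type*} [Semigroup S]

lemma phi_isA2 (hS : CompletelyRegular S) {A : Set S} (hAne : A.Nonempty)
    (hφ : PhiA2 A) : IsA2 A := by
  obtain ⟨hAA, h2, h3, h4⟩ := hφ
  have hcl : ∀ {u v : S}, u ∈ A → v ∈ A → u * v ∈ A := by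
    intro u v hu hv
    rw [← hAA]; exact Set.mul_mem_mul hu hv
  have hABfromBB : ∀ B : Set S, B ⊆ A → B * B = A → A * B = A := by
    intro B hBA hBB
    apply Set.Subset.antisymm
    · rintro w ⟨u, hu, v, hv, rfl⟩
      exact hcl hu (hBA hv)
    · intro w hw
      rw [← hBB] at hw
      obtain ⟨u, hu, v, hv, rfl⟩ := hw
      exact Set.mul_mem_mul (hBA hu) hv
  -- STEP 1 : every element of A is idempotent
  have hidem : ∀ x ∈ A, x * x = x := by
    intro x hx
    by_contra hxx
    obtain ⟨y, hy⟩ := creg_sq hS x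
    have hx2A : x * x ∈ A := hcl hx hx
    have hx3A : x * x * x ∈ A := hcl hx2A hx
    have hx4A : x * x * x * x ∈ A := hcl hx3A hx
    -- y-identities
    have k2 : (x * x * x) * y = x * x := by
      calc (x * x * x) * y = (x * x) * (x * y) := mul_assoc _ _ _
        _ = x * (x * (x * y)) := mul_assoc _ _ _
        _ = x * (x * x * y) := by rw [mul_assoc x x y]
        _ = x * x := by rw [hy]
    have k3 : (x * x * x * x) * y = x * x * x := by
      calc (x * x * x * x) * y = ((x * x) * (x * x)) * y := by
            rw [mul_assoc (x * x) x x]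
        _ = (x * x) * ((x * x) * y) := mul_assoc _ _ _
        _ = (x * x) * x := by rw [hy]
    have d23 : x * x ≠ x * x * x := by
      intro h
      apply hxx
      have t := k2
      rw [← h, hy] at t
      exact t.symm
    have d34 : x * x * x ≠ x * x * x * x := by
      intro h
      apply d23
      have t := k3
      rw [← h, k2] at t
      exact t
    by_cases hx3 : x * x * x = x
    · -- ===== Case A-II =====
      have hee : (x * x) * (x * x) = x * x := by
        calc (x * x) * (x * x) = (x * x * x) * x := by simp only [mul_assoc]
          _ = x * x := by rw [hx3]
      have hxe : x * (x * x) = x := by rw [← mul_assoc]; exact hx3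
      have hexne : x * x ≠ x := hxx
      have hxnee : x ≠ x * x := fun h => hxx h.symm
      by_cases hfree : ∃ u, u ∈ A ∧ u ≠ x ∧ ∃ v, v ∈ A ∧ v ≠ x ∧ u * v = x
      · -- Case II.a : remove x
        have hB2 : (A \ {x}) * (A \ {x}) = A := by
          apply Set.Subset.antisymm
          · rintro w ⟨u, hu, v, hv, rfl⟩
            exact hcl hu.1 hv.1
          · intro w hw
            have hw' := hw
            rw [← hAA] at hw'
            obtain ⟨u, hu, v, hv, huv⟩ := hw'
            by_cases hwx : w = x
            · obtain ⟨u', hu', hu'x, v', hv', hv'x, hev⟩ := hfree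
              refine ⟨u', ⟨hu', by simpa using hu'x⟩, v', ⟨hv', by simpa using hv'x⟩, ?_⟩
              show u' * v' = w
              rw [hev, hwx]
            · by_cases hu' : u = x
              · refine ⟨x * x, ⟨hx2A, by simpa using hexne⟩, w, ⟨hw, by simpa using hwx⟩, ?_⟩
                rw [← huv, hu']
                calc (x * x) * (x * v) = ((x * x) * x) * v := (mul_assoc _ _ _).symm
                  _ = x * v := by rw [hx3]
              · by_cases hv' : v = x
                · refine ⟨w, ⟨hw, by simpa using hwx⟩, x * x, ⟨hx2A, by simpa using hexne⟩, ?_⟩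
                  rw [← huv, hv']
                  calc (u * x) * (x * x) = u * (x * (x * x)) := by simp only [mul_assoc]
                    _ = u * x := by rw [hxe]
                · exact ⟨u, ⟨hu, by simpa using hu'⟩, v, ⟨hv, by simpa using hv'⟩, huv⟩
        have hBeq := h2 (A \ {x}) ⟨x * x, hx2A, by simpa using hexne⟩ hB2
          (hABfromBB _ Set.diff_subset hB2)
        have : x ∈ A \ {x} := by rw [hBeq]; exact hx
        exact this.2 rfl
      · -- Case II.b
        have hrig : ∀ u ∈ A, ∀ v ∈ A, u * v = x → u = x ∨ v = x := by
          intro u hu v hv huv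
          by_contra hcon
          push_neg at hcon
          exact hfree ⟨u, hu, hcon.1, v, hv, hcon.2, huv⟩
        have hxB : x ∈ A \ {x * x} := ⟨hx, by simpa using hxnee⟩
        by_cases halpha : x ∈ (A \ {x * x}) * (A \ {x * x})
        · -- Case II.b-α : remove x*x
          have hB2 : (A \ {x * x}) * (A \ {x * x}) = A := by
            apply Set.Subset.antisymm
            · rintro w ⟨u, hu, v, hv, rfl⟩
              exact hcl hu.1 hv.1
            · intro w hw
              have hw' := hw
              rw [← hAA] at hw'
              obtain ⟨u, hu, v, hv, huv⟩ := hw'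
              by_cases hwx : w = x
              · rw [hwx]; exact halpha
              · by_cases hu' : u = x * x
                · refine ⟨x, hxB, x * v, ⟨hcl hx hv, ?_⟩, ?_⟩
                  · simp only [Set.mem_singleton_iff]
                    intro hxv
                    apply hwx
                    rw [← huv, hu']
                    calc (x * x) * v = x * (x * v) := mul_assoc _ _ _
                      _ = x * (x * x) := by rw [hxv]
                      _ = x := hxe
                  · rw [← huv, hu']; exact (mul_assoc _ _ _).symm
                · by_cases hv' : v = x * x
                  · refine ⟨u * x, ⟨hcl hu hx, ?_⟩, x, hxB, ?_⟩
                    · simp only [Set.mem_singleton_iff]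
                      intro hux
                      apply hwx
                      rw [← huv, hv']
                      calc u * (x * x) = (u * x) * x := (mul_assoc _ _ _).symm
                        _ = (x * x) * x := by rw [hux]
                        _ = x := hx3
                    · rw [← huv, hv']; exact mul_assoc _ _ _
                  · exact ⟨u, ⟨hu, by simpa using hu'⟩, v, ⟨hv, by simpa using hv'⟩, huv⟩
          have hBeq := h2 (A \ {x * x}) ⟨x, hxB⟩ hB2 (hABfromBB _ Set.diff_subset hB2)
          have : x * x ∈ A \ {x * x} := by rw [hBeq]; exact hx2A
          exact this.2 rfl
        · -- Case II.b-β
          have hfac : ∀ u ∈ A, ∀ v ∈ A, u * v = x →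
              (u = x * x ∧ v = x) ∨ (u = x ∧ v = x * x) := by
            intro u hu v hv huv
            rcases hrig u hu v hv huv with h | h
            · right
              refine ⟨h, ?_⟩
              by_contra hv'
              apply halpha
              refine ⟨u, ⟨hu, ?_⟩, v, ⟨hv, by simpa using hv'⟩, huv⟩
              rw [h]; simpa using hxnee
            · left
              refine ⟨?_, h⟩
              by_contra hu'
              apply halpha
              refine ⟨u, ⟨hu, by simpa using hu'⟩, v, ⟨hv, ?_⟩, huv⟩
              rw [h]; simpa using hxnee
          have hB2 : (A \ {x * x}) * (A \ {x * x}) = A \ {x} := by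
            apply Set.Subset.antisymm
            · rintro w ⟨u, hu, v, hv, rfl⟩
              refine ⟨hcl hu.1 hv.1, ?_⟩
              simp only [Set.mem_singleton_iff]
              intro hwx
              rcases hfac u hu.1 v hv.1 hwx with ⟨h1, _⟩ | ⟨_, h2'⟩
              · exact hu.2 (by simpa using h1)
              · exact hv.2 (by simpa using h2')
            · rintro w ⟨hwA, hwx⟩
              simp only [Set.mem_singleton_iff] at hwx
              have hw' := hwA
              rw [← hAA] at hw'
              obtain ⟨u, hu, v, hv, huv⟩ := hw'
              by_cases hv' : v = x * x
              · refine ⟨u * x, ⟨hcl hu hx, ?_⟩, x, hxB, ?_⟩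
                · simp only [Set.mem_singleton_iff]
                  intro hux
                  apply hwx
                  rw [← huv, hv']
                  calc u * (x * x) = (u * x) * x := (mul_assoc _ _ _).symm
                    _ = (x * x) * x := by rw [hux]
                    _ = x := hx3
                · rw [← huv, hv']; exact mul_assoc _ _ _
              · by_cases hu' : u = x * x
                · refine ⟨x, hxB, x * v, ⟨hcl hx hv, ?_⟩, ?_⟩
                  · simp only [Set.mem_singleton_iff]
                    intro hxv
                    apply hwx
                    rw [← huv, hu']
                    calc (x * x) * v = x * (x * v) := mul_assoc _ _ _
                      _ = x * (x * x) := by rw [hxv]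
                      _ = x := hxe
                  · rw [← huv, hu']; exact (mul_assoc _ _ _).symm
                · exact ⟨u, ⟨hu, by simpa using hu'⟩, v, ⟨hv, by simpa using hv'⟩, huv⟩
          have hAB : A * (A \ {x * x}) = A := by
            apply Set.Subset.antisymm
            · rintro w ⟨u, hu, v, hv, rfl⟩
              exact hcl hu hv.1
            · intro w hw
              have hw' := hw
              rw [← hAA] at hw'
              obtain ⟨u, hu, v, hv, huv⟩ := hw'
              by_cases hv' : v = x * x
              · refine ⟨u * x, hcl hu hx, x, hxB, ?_⟩
                rw [← huv, hv']; exact mul_assoc _ _ _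
              · exact ⟨u, hu, v, ⟨hv, by simpa using hv'⟩, huv⟩
          have hBA : (A \ {x * x}) * A = A := by
            apply Set.Subset.antisymm
            · rintro w ⟨u, hu, v, hv, rfl⟩
              exact hcl hu.1 hv
            · intro w hw
              have hw' := hw
              rw [← hAA] at hw'
              obtain ⟨u, hu, v, hv, huv⟩ := hw'
              by_cases hu' : u = x * x
              · refine ⟨x, hxB, x * v, hcl hx hv, ?_⟩
                rw [← huv, hu']; exact (mul_assoc _ _ _).symm
              · exact ⟨u, ⟨hu, by simpa using hu'⟩, v, hv, huv⟩
          -- generic membership in (A\{x}) * (A\{x*x}) for w ∉ {x, x*x}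
          have hQgen : ∀ w ∈ A, w ≠ x → w ≠ x * x →
              w ∈ (A \ {x}) * (A \ {x * x}) := by
            intro w hw hwx hwe
            have hw' := hw
            rw [← hAA] at hw'
            obtain ⟨u, hu, v, hv, huv⟩ := hw'
            by_cases hv' : v = x * x
            · refine ⟨u * x, ⟨hcl hu hx, ?_⟩, x, hxB, ?_⟩
              · simp only [Set.mem_singleton_iff]
                intro hux
                rcases hfac u hu x hx hux with ⟨h1, _⟩ | ⟨_, h2'⟩
                · apply hwe
                  rw [← huv, hv', h1]; exact hee
                · exact hxx h2'.symm
              · rw [← huv, hv']; exact mul_assoc _ _ _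
            · by_cases hu' : u = x
              · refine ⟨x * x, ⟨hx2A, by simpa using hxx⟩, w, ⟨hw, by simpa using hwe⟩, ?_⟩
                conv_rhs => rw [← huv, hu']
                nth_rewrite 1 [← huv, hu']
                calc (x * x) * (x * v) = ((x * x) * x) * v := (mul_assoc _ _ _).symm
                  _ = x * v := by rw [hx3]
              · by_cases hv'' : v = x
                · refine ⟨u * (x * x), ⟨hcl hu hx2A, ?_⟩, x, hxB, ?_⟩
                  · simp only [Set.mem_singleton_iff]
                    intro hue
                    rcases hfac u hu (x * x) hx2A hue with ⟨_, h2'⟩ | ⟨h1, _⟩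
                    · exact hxx h2'
                    · apply hwe
                      rw [← huv, hv'', h1]
                  · rw [← huv, hv'']
                    calc (u * (x * x)) * x = u * ((x * x) * x) := mul_assoc _ _ _
                      _ = u * x := by rw [hx3]
                · exact ⟨u, ⟨hu, by simpa using hu'⟩, v, ⟨hv, by simpa using hv'⟩, huv⟩
          have hQx : x ∈ (A \ {x}) * (A \ {x * x}) := by
            refine ⟨x * x, ⟨hx2A, by simpa using hxx⟩, x, hxB, hx3⟩
          by_cases hZ : x * x ∈ (A \ {x * x}) * (A \ {x * x}) * (A \ {x * x})
          · -- Case Z1 : B*B*B = A, apply cube-root rigidity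
            have hQA : (A \ {x * x}) * (A \ {x * x}) * (A \ {x * x}) = A := by
              rw [hB2]
              apply Set.Subset.antisymm
              · rintro w ⟨u, hu, v, hv, rfl⟩
                exact hcl hu.1 hv.1
              · intro w hw
                by_cases hwx : w = x
                · rw [hwx]; exact hQx
                · by_cases hwe : w = x * x
                  · rw [hB2] at hZ
                    rw [hwe]; exact hZ
                  · exact hQgen w hw hwx hwe
            have hBeq := h3 (A \ {x * x}) ⟨x, hxB⟩ hQA hAB
            have : x * x ∈ A \ {x * x} := by rw [hBeq]; exact hx2A
            exact this.2 rfl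
          · -- Case Z2 : B*B*B = B, apply the existential clause
            have hQB : (A \ {x * x}) * (A \ {x * x}) * (A \ {x * x}) = A \ {x * x} := by
              rw [hB2]
              apply Set.Subset.antisymm
              · rintro w ⟨u, hu, v, hv, rfl⟩
                refine ⟨hcl hu.1 hv.1, ?_⟩
                simp only [Set.mem_singleton_iff]
                intro hwe
                apply hZ
                rw [hB2]
                exact ⟨u, hu, v, hv, hwe⟩
              · rintro w ⟨hwA, hwe⟩
                simp only [Set.mem_singleton_iff] at hwe
                by_cases hwx : w = x
                · rw [hwx]; exact hQx
                · exact hQgen w hwA hwx hwe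
            have hBBne : (A \ {x * x}) * (A \ {x * x}) ≠ A \ {x * x} := by
              rw [hB2]
              intro h
              have : x ∈ A \ {x} := by rw [h]; exact hxB
              exact this.2 rfl
            obtain ⟨C, hCne, hCneA, hCC, hCB, hBC, hCAA, hACA⟩ :=
              h4 (A \ {x * x}) ⟨x, hxB⟩ hAB hBA hQB hBBne
            have hCsub : C ⊆ A := by
              intro c hc
              rw [← hCB] at hc
              obtain ⟨c', hc', b, hb, rfl⟩ := hc
              have : c' * b ∈ C * A := Set.mul_mem_mul hc' hb.1
              rwa [hCAA] at this
            have hxC : x ∈ C := by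
              have hx' : x ∈ A * C := by rw [hACA]; exact hx
              obtain ⟨a, ha, c, hc, hac⟩ := hx'
              rcases hfac a ha c (hCsub hc) hac with ⟨_, h2'⟩ | ⟨_, h2'⟩
              · rw [← h2']; exact hc
              · have : (x * x) * x ∈ C * (A \ {x * x}) :=
                  Set.mul_mem_mul (h2' ▸ hc) hxB
                rw [hCB] at this
                rwa [hx3] at this
            have heC : x * x ∈ C := by
              have : x * x ∈ C * (A \ {x * x}) := Set.mul_mem_mul hxC hxB
              rwa [hCB] at this
            apply hCneA
            apply Set.Subset.antisymm hCsub
            intro w hw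
            have hw' : w ∈ A * C := by rw [hACA]; exact hw
            obtain ⟨a, ha, c, hc, hac⟩ := hw'
            by_cases ha' : a = x * x
            · rw [← hac, ha']
              have : (x * x) * c ∈ C * C := Set.mul_mem_mul heC hc
              rwa [hCC] at this
            · rw [← hac]
              have : a * c ∈ (A \ {x * x}) * C :=
                Set.mul_mem_mul ⟨ha, by simpa using ha'⟩ hc
              rwa [hBC] at this
    · -- ===== Case A-I : remove x*x*x =====
      have dx3 : x ≠ x * x * x := fun h => hx3 h.symm
      have hB2 : (A \ {x * x * x}) * (A \ {x * x * x}) = A := by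
        apply Set.Subset.antisymm
        · rintro w ⟨u, hu, v, hv, rfl⟩
          exact hcl hu.1 hv.1
        · intro w hw
          have hw' := hw
          rw [← hAA] at hw'
          obtain ⟨u, hu, v, hv, huv⟩ := hw'
          by_cases hu' : u = x * x * x
          · by_cases hv' : v = x * x * x
            · -- w = x^6 = x^2 * x^4
              refine ⟨x * x, ⟨hx2A, by simpa using d23⟩,
                x * x * x * x, ⟨hx4A, by simpa using fun h => d34 h.symm⟩, ?_⟩
              rw [← huv, hu', hv']
              simp only [mul_assoc]
            · by_cases hxv : (x * x) * v = x * x * x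
              · -- w = x^4 = x^2 * x^2
                refine ⟨x * x, ⟨hx2A, by simpa using d23⟩,
                  x * x, ⟨hx2A, by simpa using d23⟩, ?_⟩
                have huv' : u * v = w := huv
                show (x * x) * (x * x) = w
                rw [← huv', hu']
                have t : (x * x * x) * v = x * ((x * x) * v) := by
                  simp only [mul_assoc]
                rw [t, hxv]
                simp only [mul_assoc]
              · refine ⟨x, ⟨hx, by simpa using dx3⟩,
                  (x * x) * v, ⟨hcl hx2A hv, by simpa using hxv⟩, ?_⟩
                rw [← huv, hu']
                simp only [mul_assoc]
          · by_cases hv' : v = x * x * x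
            · by_cases hux : u * x = x * x * x
              · -- w = x^5 = x * x^4
                refine ⟨x, ⟨hx, by simpa using dx3⟩,
                  x * x * x * x, ⟨hx4A, by simpa using fun h => d34 h.symm⟩, ?_⟩
                have huv' : u * v = w := huv
                show x * (x * x * x * x) = w
                rw [← huv', hv']
                have t : u * (x * x * x) = (u * x) * (x * x) := by
                  simp only [mul_assoc]
                rw [t, hux]
                simp only [mul_assoc]
              · refine ⟨u * x, ⟨hcl hu hx, by simpa using hux⟩,
                  x * x, ⟨hx2A, by simpa using d23⟩, ?_⟩
                rw [← huv, hv']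
                simp only [mul_assoc]
            · exact ⟨u, ⟨hu, by simpa using hu'⟩, v, ⟨hv, by simpa using hv'⟩, huv⟩
      have hBeq := h2 (A \ {x * x * x}) ⟨x, hx, by simpa using dx3⟩ hB2
        (hABfromBB _ Set.diff_subset hB2)
      have : x * x * x ∈ A \ {x * x * x} := by rw [hBeq]; exact hx3A
      exact this.2 rfl
  -- STEP 2 : the pair property
  refine ⟨hAne, ?_⟩
  intro a ha b hb
  by_contra habmem
  simp only [Set.mem_insert_iff, Set.mem_singleton_iff, not_or] at habmem
  obtain ⟨hna, hnb⟩ := habmem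
  have habA : a * b ∈ A := hcl ha hb
  have haB : a ∈ A \ {a * b} := ⟨ha, by simpa using fun h => hna h.symm⟩
  have hbB : b ∈ A \ {a * b} := ⟨hb, by simpa using fun h => hnb h.symm⟩
  have hB2 : (A \ {a * b}) * (A \ {a * b}) = A := by
    apply Set.Subset.antisymm
    · rintro w ⟨u, hu, v, hv, rfl⟩
      exact hcl hu.1 hv.1
    · intro w hw
      by_cases hwc : w = a * b
      · exact ⟨a, haB, b, hbB, hwc.symm⟩
      · exact ⟨w, ⟨hw, by simpa using hwc⟩, w, ⟨hw, by simpa using hwc⟩, hidem w hw⟩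
  have hBeq := h2 (A \ {a * b}) ⟨a, haB⟩ hB2 (hABfromBB _ Set.diff_subset hB2)
  have : a * b ∈ A \ {a * b} := by rw [hBeq]; exact habA
  exact this.2 rfl

end Aux2

section Transfer
variable {S S' : Type*} [Semigroup S] [Semigroup S']

lemma phi_transfer
    (ψ : Set S → Set S')
    (hne : ∀ A : Set S, A.Nonempty → (ψ A).Nonempty)
    (hinj : ∀ A B : Set S, A.Nonempty → B.Nonempty → ψ A = ψ B → A = B)
    (hsurj : ∀ A' : Set S', A'.Nonempty → ∃ A : Set S, A.Nonempty ∧ ψ A = A')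
    (hmul : ∀ A B : Set S, A.Nonempty → B.Nonempty → ψ (A * B) = ψ A * ψ B)
    {A : Set S} (hA : A.Nonempty) : PhiA2 A ↔ PhiA2 (ψ A) := by
  constructor
  · rintro ⟨p1, p2, p3, p4⟩
    refine ⟨?_, ?_, ?_, ?_⟩
    · rw [← hmul A A hA hA, p1]
    · intro B' hB' hBB' hAB'
      obtain ⟨B, hBne, rfl⟩ := hsurj B' hB'
      have hBB : B * B = A := by
        apply hinj _ _ (hBne.mul hBne) hA
        rw [hmul B B hBne hBne, hBB']
      have hAB : A * B = A := by
        apply hinj _ _ (hA.mul hBne) hA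
        rw [hmul A B hA hBne, hAB']
      rw [p2 B hBne hBB hAB]
    · intro B' hB' hBBB' hAB'
      obtain ⟨B, hBne, rfl⟩ := hsurj B' hB'
      have hBBB : B * B * B = A := by
        apply hinj _ _ ((hBne.mul hBne).mul hBne) hA
        rw [hmul (B * B) B (hBne.mul hBne) hBne, hmul B B hBne hBne, hBBB']
      have hAB : A * B = A := by
        apply hinj _ _ (hA.mul hBne) hA
        rw [hmul A B hA hBne, hAB']
      rw [p3 B hBne hBBB hAB]
    · intro B' hB' hAB' hBA' hB3' hBB'
      obtain ⟨B, hBne, rfl⟩ := hsurj B' hB'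
      have hAB : A * B = A := by
        apply hinj _ _ (hA.mul hBne) hA
        rw [hmul A B hA hBne, hAB']
      have hBA : B * A = A := by
        apply hinj _ _ (hBne.mul hA) hA
        rw [hmul B A hBne hA, hBA']
      have hB3 : B * B * B = B := by
        apply hinj _ _ ((hBne.mul hBne).mul hBne) hBne
        rw [hmul (B * B) B (hBne.mul hBne) hBne, hmul B B hBne hBne, hB3']
      have hBB : B * B ≠ B := by
        intro h
        apply hBB'
        rw [← hmul B B hBne hBne, h]
      obtain ⟨C, hCne, hCneA, hCC, hCB, hBC, hCA, hAC⟩ := p4 B hBne hAB hBA hB3 hBB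
      refine ⟨ψ C, hne C hCne, ?_, ?_, ?_, ?_, ?_, ?_⟩
      · intro h; exact hCneA (hinj _ _ hCne hA h)
      · rw [← hmul C C hCne hCne, hCC]
      · rw [← hmul C B hCne hBne, hCB]
      · rw [← hmul B C hBne hCne, hBC]
      · rw [← hmul C A hCne hA, hCA]
      · rw [← hmul A C hA hCne, hAC]
  · rintro ⟨p1, p2, p3, p4⟩
    refine ⟨?_, ?_, ?_, ?_⟩
    · apply hinj _ _ (hA.mul hA) hA
      rw [hmul A A hA hA, p1]
    · intro B hBne hBB hAB
      apply hinj _ _ hBne hA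
      apply p2 (ψ B) (hne B hBne)
      · rw [← hmul B B hBne hBne, hBB]
      · rw [← hmul A B hA hBne, hAB]
    · intro B hBne hBBB hAB
      apply hinj _ _ hBne hA
      apply p3 (ψ B) (hne B hBne)
      · rw [← hmul B B hBne hBne, ← hmul (B * B) B (hBne.mul hBne) hBne, hBBB]
      · rw [← hmul A B hA hBne, hAB]
    · intro B hBne hAB hBA hB3 hBB
      have q1 : ψ A * ψ B = ψ A := by rw [← hmul A B hA hBne, hAB]
      have q2 : ψ B * ψ A = ψ A := by rw [← hmul B A hBne hA, hBA]
      have q3 : ψ B * ψ B * ψ B = ψ B := by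
        rw [← hmul B B hBne hBne, ← hmul (B * B) B (hBne.mul hBne) hBne, hB3]
      have q4 : ψ B * ψ B ≠ ψ B := by
        intro h
        apply hBB
        apply hinj _ _ (hBne.mul hBne) hBne
        rw [hmul B B hBne hBne, h]
      obtain ⟨C', hC'ne, hC'neA, hCC, hCB, hBC, hCA, hAC⟩ :=
        p4 (ψ B) (hne B hBne) q1 q2 q3 q4
      obtain ⟨C, hCne, rfl⟩ := hsurj C' hC'ne
      refine ⟨C, hCne, ?_, ?_, ?_, ?_, ?_, ?_⟩
      · intro h; apply hC'neA; rw [h]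
      · apply hinj _ _ (hCne.mul hCne) hCne
        rw [hmul C C hCne hCne, hCC]
      · apply hinj _ _ (hCne.mul hBne) hCne
        rw [hmul C B hCne hBne, hCB]
      · apply hinj _ _ (hBne.mul hCne) hCne
        rw [hmul B C hBne hCne, hBC]
      · apply hinj _ _ (hCne.mul hA) hA
        rw [hmul C A hCne hA, hCA]
      · apply hinj _ _ (hA.mul hCne) hA
        rw [hmul A C hA hCne, hAC]

end Transfer

/-- An isomorphism of the power semigroups of two completely regular
semigroups preserves the property of belonging to `A₂`; hence it restricts to
a bijection from `A₂(S)` onto `A₂(S')`. -/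
theorem psi_restricts_to_A2
    {S S' : Type*} [Semigroup S] [Semigroup S']
    (hS : CompletelyRegular S) (hS' : CompletelyRegular S')
    (ψ : Set S → Set S')
    (hne : ∀ A : Set S, A.Nonempty → (ψ A).Nonempty)
    (hinj : ∀ A B : Set S, A.Nonempty → B.Nonempty → ψ A = ψ B → A = B)
    (hsurj : ∀ A' : Set S', A'.Nonempty → ∃ A : Set S, A.Nonempty ∧ ψ A = A')
    (hmul : ∀ A B : Set S, A.Nonempty → B.Nonempty → ψ (A * B) = ψ A * ψ B) :
    (∀ A : Set S, A.Nonempty → (IsA2 A ↔ IsA2 (ψ A))) ∧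
    ∃ g : {A : Set S // IsA2 A} → {A' : Set S' // IsA2 A'},
      Function.Bijective g ∧ ∀ A : {A : Set S // IsA2 A}, (g A : Set S') = ψ (A : Set S) := by
  have iffpart : ∀ A : Set S, A.Nonempty → (IsA2 A ↔ IsA2 (ψ A)) := by
    intro A hA
    constructor
    · intro h
      exact phi_isA2 hS' (hne A hA)
        ((phi_transfer ψ hne hinj hsurj hmul hA).mp (isA2_phi hS h))
    · intro h
      exact phi_isA2 hS hA
        ((phi_transfer ψ hne hinj hsurj hmul hA).mpr (isA2_phi hS' h))
  refine ⟨iffpart, fun p => ⟨ψ p.1, (iffpart p.1 p.2.1).mp p.2⟩, ⟨?_, ?_⟩, fun p => rfl⟩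
  · intro p q h
    apply Subtype.ext
    exact hinj _ _ p.2.1 q.2.1 (congrArg Subtype.val h)
  · rintro ⟨A', h'⟩
    obtain ⟨A, hAne, hψ⟩ := hsurj A' h'.1
    have hA2 : IsA2 A := (iffpart A hAne).mpr (by rw [hψ]; exact h')
    exact ⟨⟨A, hA2⟩, Subtype.ext hψ⟩
end

section
/- Let S be a completely regular semigroup, let A ∈ A₂(S), and let B be a nonempty subset of S with B*B = B and A*B = B*A = A (i.e., A ≤ B in the natural order on idempotents of the power semigroup). Then every element b ∈ B that is 𝓓-related in S to some element of A belongs to A. In particular, if every element of B is 𝓓-related to some element of A, then B ⊆ A. -/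
open Pointwise

/-- Green's relation `𝓓`. -/
def dRel {S : Type*} [Semigroup S] (a b : S) : Prop :=
  ∃ c : S, lIdeal a = lIdeal c ∧ rIdeal c = rIdeal b

/-- If `A ∈ A₂(S)` and `B` is a nonempty idempotent subset with
`A * B = B * A = A` (i.e. `A ≤ B`), then every element of `B` that is
`𝓓`-related to an element of `A` lies in `A`; in particular if every element
of `B` is `𝓓`-related to an element of `A`, then `B ⊆ A`. -/
theorem a2_below_idempotent
    {S : Type*} [Semigroup S] (hS : CompletelyRegular S)
    (A B : Set S) (hA : IsA2 A) (hB : B.Nonempty) (hBB : B * B = B)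
    (hAB : A * B = A) (hBA : B * A = A) :
    (∀ b ∈ B, (∃ a ∈ A, dRel b a) → b ∈ A) ∧
      ((∀ b ∈ B, ∃ a ∈ A, dRel b a) → B ⊆ A) := by
  have key : ∀ b ∈ B, (∃ a ∈ A, dRel b a) → b ∈ A := by
    rintro b hb ⟨a, ha, c, hL, hR⟩
    -- a is idempotent
    have haa : a * a = a := by
      have h := hA.2 a ha a ha
      simpa using h
    -- b ∈ Sb = Sc : b = γ * c
    obtain ⟨x, hx1, hx2⟩ := hS b
    have hbSb : b ∈ lIdeal b := ⟨b * x, hx1.symm⟩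
    rw [hL] at hbSb
    obtain ⟨γ, hγ⟩ := hbSb
    -- commuting inverse y of c
    obtain ⟨y, hy1, hy2⟩ := hS c
    -- e := y * c, an idempotent-like element with c * e = c
    set e : S := y * c with he
    have heR : e ∈ rIdeal a := by
      rw [← hR]; exact ⟨y, hy2⟩
    obtain ⟨w, hw⟩ := heR
    simp only at hw hγ
    -- a * e = e
    have hae : a * e = e := by
      calc a * e = a * (a * w) := by rw [hw]
        _ = (a * a) * w := by rw [mul_assoc]
        _ = a * w := by rw [haa]
        _ = e := hw
    -- c * e = c
    have hce : c * e = c := by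
      calc c * e = (c * y) * c := by rw [he, mul_assoc]
        _ = c := by rw [← hy1]
    -- b * e = b
    have hbe : b * e = b := by
      calc b * e = γ * (c * e) := by rw [← hγ, mul_assoc]
        _ = γ * c := by rw [hce]
        _ = b := hγ
    -- (b*a)*e = b
    have hbae : (b * a) * e = b := by
      calc (b * a) * e = b * (a * e) := by rw [mul_assoc]
        _ = b * e := by rw [hae]
        _ = b := hbe
    -- b * a ∈ A and a * b ∈ A
    have hbaA : b * a ∈ A := by rw [← hBA]; exact Set.mul_mem_mul hb ha
    have habA : a * b ∈ A := by rw [← hAB]; exact Set.mul_mem_mul ha hb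
    -- b*a is idempotent
    have hbaba : (b * a) * (b * a) = b * a := by
      have h := hA.2 (b * a) hbaA (b * a) hbaA
      simpa using h
    -- (b*a)*b = b
    have hbab : (b * a) * b = b := by
      calc (b * a) * b = (b * a) * ((b * a) * e) := by rw [hbae]
        _ = ((b * a) * (b * a)) * e := (mul_assoc (b*a) (b*a) e).symm
        _ = (b * a) * e := by rw [hbaba]
        _ = b := hbae
    -- b = (b*a)*(a*b)
    have hkey : (b * a) * (a * b) = b := by
      calc (b * a) * (a * b) = b * ((a * a) * b) := by
            rw [mul_assoc, mul_assoc]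
        _ = b * (a * b) := by rw [haa]
        _ = (b * a) * b := by rw [mul_assoc]
        _ = b := hbab
    have h := hA.2 (b * a) hbaA (a * b) habA
    rw [hkey] at h
    rcases h with h | h
    · rw [h]; exact hbaA
    · rw [h]; exact habA
  exact ⟨key, fun h b hb => key b hb (h b hb)⟩
end

section
/- Let S be a completely regular semigroup, let E ⊆ S be a left zero subsemigroup (nonempty and satisfying x*y = x for all x, y ∈ E), and let e ∈ E. Then the 𝓗-class of the element E in the power semigroup P(S) is exactly { E*{a} : a ∈ H_e(S) }, where H_e(S) = { x ∈ S : x*S = e*S and S*x = S*e } and E*{a} = { f*a : f ∈ E }. -/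
open Pointwise

/-- Green's relation `𝓡` in the power semigroup `P(S)` (whose elements are the
nonempty subsets of `S`). -/
def pR {S : Type*} [Semigroup S] (A B : Set S) : Prop :=
  (A = B ∨ ∃ C : Set S, C.Nonempty ∧ A = B * C) ∧
  (B = A ∨ ∃ C : Set S, C.Nonempty ∧ B = A * C)

/-- Green's relation `𝓛` in the power semigroup `P(S)`. -/
def pL {S : Type*} [Semigroup S] (A B : Set S) : Prop :=
  (A = B ∨ ∃ C : Set S, C.Nonempty ∧ A = C * B) ∧
  (B = A ∨ ∃ C : Set S, C.Nonempty ∧ B = C * A)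

/-- Green's relation `𝓗` in the power semigroup `P(S)`. -/
def pH {S : Type*} [Semigroup S] (A B : Set S) : Prop :=
  pR A B ∧ pL A B

section Aux

variable {S : Type*} [Semigroup S]

/-- A left zero set is a (sub)semigroup: `E * E = E`. -/
lemma leftZero_mul_self (E : Set S) (hE : ∀ x ∈ E, ∀ y ∈ E, x * y = x) :
    E * E = E := by
  ext z
  constructor
  · rintro ⟨x, hx, y, hy, rfl⟩
    show x * y ∈ E
    rwa [hE x hx y hy]
  · intro hz
    exact ⟨z, hz, z, hz, hE z hz z hz⟩

/-- `E * {e} = E` for `e` in a left zero set `E`. -/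
lemma leftZero_mul_singleton (E : Set S) (hE : ∀ x ∈ E, ∀ y ∈ E, x * y = x)
    {e : S} (he : e ∈ E) : E * {e} = E := by
  rw [Set.mul_singleton]
  ext z
  simp only [Set.mem_image]
  constructor
  · rintro ⟨x, hx, rfl⟩
    rwa [hE x hx e he]
  · intro hz
    exact ⟨z, hz, hE z hz e he⟩

/-- If `b` absorbs every element of `E` on the right, then `{b} * E = {b}`. -/
lemma singleton_mul_absorb (E : Set S) (hEne : E.Nonempty) {b : S}
    (hb : ∀ g ∈ E, b * g = b) : ({b} : Set S) * E = {b} := by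
  obtain ⟨g₀, hg₀⟩ := hEne
  rw [Set.singleton_mul]
  ext z
  simp only [Set.mem_image, Set.mem_singleton_iff]
  constructor
  · rintro ⟨x, hx, rfl⟩
    exact hb x hx
  · rintro rfl
    exact ⟨g₀, hg₀, hb g₀ hg₀⟩

/-- The backward inclusion: for `a ∈ H_e`, the set `E * {a}` is a nonempty set
`𝓗`-related to `E` in the power semigroup. -/
lemma backward_mem (hS : CompletelyRegular S)
    (E : Set S) (hEne : E.Nonempty) (hE : ∀ x ∈ E, ∀ y ∈ E, x * y = x)
    (e : S) (he : e ∈ E) (a : S)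
    (har : rIdeal a = rIdeal e) (hal : lIdeal a = lIdeal e) :
    (E * ({a} : Set S)).Nonempty ∧ pH (E * ({a} : Set S)) E := by
  obtain ⟨x, hx1, hx2⟩ := hS a
  have hee : e * e = e := hE e he e he
  -- `a ∈ lIdeal e`, hence `a * e = a`.
  have haL : a ∈ lIdeal e := by
    rw [← hal]; exact ⟨a * x, hx1.symm⟩
  obtain ⟨s, hs⟩ := haL
  replace hs : s * e = a := hs
  have hae : a * e = a := by
    rw [← hs, mul_assoc, hee]
  -- `a ∈ rIdeal e`, hence `e * a = a`.
  have haR : a ∈ rIdeal e := by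
    rw [← har]
    refine ⟨x * a, ?_⟩
    show a * (x * a) = a
    rw [← mul_assoc, ← hx1]
  obtain ⟨m, hm⟩ := haR
  replace hm : e * m = a := hm
  have hea : e * a = a := by
    rw [← hm, ← mul_assoc, hee]
  -- `e ∈ rIdeal a`: `a * n = e`.
  have heRa : e ∈ rIdeal a := by rw [har]; exact ⟨e, hee⟩
  obtain ⟨n, hn⟩ := heRa
  replace hn : a * n = e := hn
  -- `e ∈ lIdeal a`: `n'' * a = e`.
  have heLa : e ∈ lIdeal a := by rw [hal]; exact ⟨e, hee⟩
  obtain ⟨n'', hn''⟩ := heLa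
  replace hn'' : n'' * a = e := hn''
  -- right inverse `a'' := n * e` : `a * a'' = e`.
  have haa'' : a * (n * e) = e := by
    rw [← mul_assoc, hn, hee]
  -- left inverse `a' := n'' * e` : `a' * a = e` and `a'` absorbs `E`.
  have ha'a : (n'' * e) * a = e := by
    rw [mul_assoc, hea, hn'']
  have ha'g : ∀ g ∈ E, (n'' * e) * g = n'' * e := by
    intro g hg
    rw [mul_assoc, hE e he g hg]
  -- `a` absorbs `E` on the right.
  have hag : ∀ g ∈ E, a * g = a := by
    intro g hg
    rw [← hae, mul_assoc, hE e he g hg]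
  obtain ⟨f₀, hf₀⟩ := hEne
  refine ⟨⟨f₀ * a, f₀, hf₀, a, rfl, rfl⟩, ⟨?_, ?_⟩, ?_, ?_⟩
  · -- pR, first component
    exact Or.inr ⟨{a}, ⟨a, rfl⟩, rfl⟩
  · -- pR, second: E = (E * {a}) * {n * e}
    refine Or.inr ⟨{n * e}, ⟨n * e, rfl⟩, ?_⟩
    rw [mul_assoc, Set.singleton_mul_singleton, haa'',
      leftZero_mul_singleton E hE he]
  · -- pL, first: E * {a} = (E * {a}) * E
    refine Or.inr ⟨E * {a}, ⟨f₀ * a, f₀, hf₀, a, rfl, rfl⟩, ?_⟩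
    rw [mul_assoc, singleton_mul_absorb E ⟨f₀, hf₀⟩ hag]
  · -- pL, second: E = (E * {n'' * e}) * (E * {a})
    refine Or.inr ⟨E * {n'' * e}, ⟨f₀ * (n'' * e), f₀, hf₀, n'' * e, rfl, rfl⟩, ?_⟩
    rw [mul_assoc, ← mul_assoc ({n'' * e} : Set S) E,
      singleton_mul_absorb E ⟨f₀, hf₀⟩ ha'g, Set.singleton_mul_singleton, ha'a,
      leftZero_mul_singleton E hE he]

/-- The forward direction, after reducing the four `pR`/`pL` conditions to
explicit product decompositions. -/
lemma forward_mem (hS : CompletelyRegular S)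
    (E : Set S) (hE : ∀ x ∈ E, ∀ y ∈ E, x * y = x)
    (e : S) (he : e ∈ E)
    (A : Set S) (hAne : A.Nonempty)
    (C₁ C₂ C₃ C₄ : Set S) (hC₂ne : C₂.Nonempty)
    (h1 : A = E * C₁) (h2 : E = A * C₂) (h3 : A = C₃ * E) (h4 : E = C₄ * A) :
    ∃ a : S, (rIdeal a = rIdeal e ∧ lIdeal a = lIdeal e) ∧ E * ({a} : Set S) = A := by
  have hEE : E * E = E := leftZero_mul_self E hE
  have hee : e * e = e := hE e he e he
  -- Every element of `A` absorbs `E` on the right.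
  have F1 : ∀ x ∈ A, ∀ g ∈ E, x * g = x := by
    intro x hx g hg
    rw [h3] at hx
    obtain ⟨c, -, h', hh', rfl⟩ := hx
    show (c * h') * g = c * h'
    rw [mul_assoc, hE h' hh' g hg]
  -- Every element of `A` has a left identity from `E`.
  have F2 : ∀ x ∈ A, ∃ f ∈ E, f * x = x := by
    intro x hx
    rw [h1] at hx
    obtain ⟨f, hf, c, -, rfl⟩ := hx
    refine ⟨f, hf, ?_⟩
    show f * (f * c) = f * c
    rw [← mul_assoc, hE f hf f hf]
  -- products `A * C₂` and `C₄ * A` land in `E`.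
  have F3 : ∀ x ∈ A, ∀ c ∈ C₂, x * c ∈ E := by
    intro x hx c hc
    rw [h2]; exact ⟨x, hx, c, hc, rfl⟩
  have F4 : ∀ d ∈ C₄, ∀ x ∈ A, d * x ∈ E := by
    intro d hd x hx
    rw [h4]; exact ⟨d, hd, x, hx, rfl⟩
  -- `E * A = A`.
  have F5 : E * A = A := by
    conv_lhs => rw [h1]
    rw [← mul_assoc, hEE, ← h1]
  -- write `e = d * z` with `d ∈ C₄`, `z ∈ A`; set `t := e * d`.
  have he' : e ∈ C₄ * A := by rw [← h4]; exact he
  obtain ⟨d, hd, z, hz, hdz⟩ := he'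
  -- `t * x = e` for every `x ∈ A`.
  have ht : ∀ x ∈ A, (e * d) * x = e := by
    intro x hx
    rw [mul_assoc]
    exact hE e he (d * x) (F4 d hd x hx)
  obtain ⟨w, hw1, hw2⟩ := hS (e * d)
  obtain ⟨x₀, hx₀⟩ := hAne
  -- `(e*d*w) * e = e`.
  have hge : ((e * d) * w) * e = e := by
    calc ((e * d) * w) * e = ((e * d) * w) * ((e * d) * x₀) := by rw [ht x₀ hx₀]
      _ = (((e * d) * w) * (e * d)) * x₀ := (mul_assoc _ _ _).symm
      _ = (e * d) * x₀ := by rw [← hw1]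
      _ = e := ht x₀ hx₀
  -- key: `e * x = w * e` for all `x ∈ A`.
  have key : ∀ x ∈ A, e * x = w * e := by
    intro x hx
    have hu : e * x ∈ A := by rw [← F5]; exact ⟨e, he, x, hx, rfl⟩
    have htu : (e * d) * (e * x) = e := ht _ hu
    have heu : e * (e * x) = e * x := by rw [← mul_assoc, hee]
    calc e * x = e * (e * x) := heu.symm
      _ = (((e * d) * w) * e) * (e * x) := by rw [hge]
      _ = ((e * d) * w) * (e * (e * x)) := by rw [mul_assoc]
      _ = ((e * d) * w) * (e * x) := by rw [heu]
      _ = (w * (e * d)) * (e * x) := by rw [hw2]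
      _ = w * ((e * d) * (e * x)) := by rw [mul_assoc]
      _ = w * e := by rw [htu]
  -- the representative `a := e * x₀`.
  have ha : e * x₀ ∈ A := by rw [← F5]; exact ⟨e, he, x₀, hx₀, rfl⟩
  have keyA : ∀ x ∈ A, e * x = e * x₀ := by
    intro x hx
    rw [key x hx, key x₀ hx₀]
  have hea : e * (e * x₀) = e * x₀ := by rw [← mul_assoc, hee]
  have hae : (e * x₀) * e = e * x₀ := F1 _ ha e he
  -- `(e * x₀) * c = e` for `c ∈ C₂`.
  obtain ⟨c, hc⟩ := hC₂ne
  have hac : (e * x₀) * c = e := by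
    conv_lhs => rw [← hea]
    rw [mul_assoc]
    exact hE e he ((e * x₀) * c) (F3 _ ha c hc)
  have hta : (e * d) * (e * x₀) = e := ht _ ha
  refine ⟨e * x₀, ⟨?_, ?_⟩, ?_⟩
  · -- rIdeal (e*x₀) = rIdeal e
    apply Set.eq_of_subset_of_subset
    · rintro _ ⟨s, rfl⟩
      exact ⟨x₀ * s, (mul_assoc e x₀ s).symm⟩
    · rintro _ ⟨s, rfl⟩
      refine ⟨c * s, ?_⟩
      show (e * x₀) * (c * s) = e * s
      rw [← mul_assoc, hac]
  · -- lIdeal (e*x₀) = lIdeal e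
    apply Set.eq_of_subset_of_subset
    · rintro _ ⟨s, rfl⟩
      refine ⟨s * (e * x₀), ?_⟩
      show (s * (e * x₀)) * e = s * (e * x₀)
      rw [mul_assoc, hae]
    · rintro _ ⟨s, rfl⟩
      refine ⟨s * (e * d), ?_⟩
      show (s * (e * d)) * (e * x₀) = s * e
      rw [mul_assoc, hta]
  · -- E * {e * x₀} = A
    apply Set.eq_of_subset_of_subset
    · rintro _ ⟨f, hf, b, rfl, rfl⟩
      rw [← F5]
      exact ⟨f, hf, e * x₀, ha, rfl⟩
    · intro y hy
      obtain ⟨f, hf, hfy⟩ := F2 y hy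
      refine ⟨f, hf, e * x₀, rfl, ?_⟩
      show f * (e * x₀) = y
      rw [← keyA y hy, ← mul_assoc, hE f hf e he, hfy]

end Aux

/-- For a left zero subsemigroup `E` of a completely regular semigroup `S` and
`e ∈ E`, the `𝓗`-class of `E` in the power semigroup `P(S)` is exactly
`{ E * {a} : a ∈ H_e(S) }`. -/
theorem Hclass_of_left_zero_subsemigroup
    {S : Type*} [Semigroup S] (hS : CompletelyRegular S)
    (E : Set S) (hEne : E.Nonempty) (hE : ∀ x ∈ E, ∀ y ∈ E, x * y = x)
    (e : S) (he : e ∈ E) :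
    {A : Set S | A.Nonempty ∧ pH A E}
      = (fun a => E * ({a} : Set S)) ''
          {x : S | rIdeal x = rIdeal e ∧ lIdeal x = lIdeal e} := by
  ext A
  simp only [Set.mem_setOf_eq, Set.mem_image]
  constructor
  · rintro ⟨hAne, ⟨hR1, hR2⟩, hL1, hL2⟩
    have hEe : E * {e} = E := leftZero_mul_singleton E hE he
    have hEE : E * E = E := leftZero_mul_self E hE
    obtain ⟨C₁, h1⟩ : ∃ C₁ : Set S, A = E * C₁ := by
      rcases hR1 with h | ⟨C, -, h⟩
      · exact ⟨{e}, by rw [h, hEe]⟩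
      · exact ⟨C, h⟩
    obtain ⟨C₂, hC₂ne, h2⟩ : ∃ C₂ : Set S, C₂.Nonempty ∧ E = A * C₂ := by
      rcases hR2 with h | ⟨C, hCne, h⟩
      · exact ⟨{e}, ⟨e, rfl⟩, by rw [← h, hEe]⟩
      · exact ⟨C, hCne, h⟩
    obtain ⟨C₃, h3⟩ : ∃ C₃ : Set S, A = C₃ * E := by
      rcases hL1 with h | ⟨C, -, h⟩
      · exact ⟨E, by rw [h, hEE]⟩
      · exact ⟨C, h⟩
    obtain ⟨C₄, h4⟩ : ∃ C₄ : Set S, E = C₄ * A := by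
      rcases hL2 with h | ⟨C, -, h⟩
      · exact ⟨E, by rw [← h, hEE]⟩
      · exact ⟨C, h⟩
    obtain ⟨a, hmem, hEq⟩ :=
      forward_mem hS E hE e he A hAne C₁ C₂ C₃ C₄ hC₂ne h1 h2 h3 h4
    exact ⟨a, hmem, hEq⟩
  · rintro ⟨a, ⟨har, hal⟩, rfl⟩
    obtain ⟨hne, hH⟩ := backward_mem hS E hEne hE e he a har hal
    exact ⟨hne, hH⟩
end

section
/- Let S be a completely regular semigroup and let a₁, a₂ lie in a 𝓓-class D that is a left zero or a right zero semigroup. If a₁ ρ a₂, then for every b ∈ S whose 𝓓-class is strictly below D one has a₁*b = a₂*b and b*a₁ = b*a₂. -/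
open Pointwise

/-- `x` is maximal for the natural partial order `x ≤ y ↔ ∃ idempotents e f,
x = e*y = y*f`. -/
def IsMaxNatural {S : Type*} [Semigroup S] (x : S) : Prop :=
  ∀ y : S, (∃ e f : S, e * e = e ∧ f * f = f ∧ x = e * y ∧ x = y * f) → x = y

/-- The relation `ρ` on a `𝓓`-class that is a left or right zero semigroup:
`a₁ ρ a₂` iff they are both maximal (or equal), they conjugate every element
strictly below equally, and are conjugated by every element strictly above
equally. -/
def rhoRel {S : Type*} [Semigroup S] (a₁ a₂ : S) : Prop :=
  ((IsMaxNatural a₁ ∧ IsMaxNatural a₂) ∨ a₁ = a₂) ∧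
  (∀ b : S, dRel (a₁ * b) b → ¬ dRel a₁ b → a₁ * b * a₁ = a₂ * b * a₂) ∧
  (∀ c : S, dRel (a₁ * c) a₁ → ¬ dRel a₁ c → c * a₁ * c = c * a₂ * c)

lemma mem_rIdeal_iff {S : Type*} [Semigroup S] {a w : S} :
    w ∈ rIdeal a ↔ ∃ s, a * s = w := Iff.rfl

lemma mem_lIdeal_iff {S : Type*} [Semigroup S] {a w : S} :
    w ∈ lIdeal a ↔ ∃ s, s * a = w := Iff.rfl

lemma dRel_refl {S : Type*} [Semigroup S] (a : S) : dRel a a := ⟨a, rfl, rfl⟩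

lemma dRel_symm {S : Type*} [Semigroup S] (hS : CompletelyRegular S) {a b : S}
    (h : dRel a b) : dRel b a := by
  obtain ⟨c, hL, hR⟩ := h
  obtain ⟨xa, hxa1, hxa2⟩ := hS a
  obtain ⟨xb, hxb1, hxb2⟩ := hS b
  obtain ⟨xc, hxc1, hxc2⟩ := hS c
  have ha : a ∈ lIdeal c := hL ▸ mem_lIdeal_iff.2 ⟨a * xa, hxa1.symm⟩
  obtain ⟨s, hs⟩ := mem_lIdeal_iff.1 ha   -- s * c = a
  have hc : c ∈ lIdeal a := hL.symm ▸ mem_lIdeal_iff.2 ⟨c * xc, hxc1.symm⟩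
  obtain ⟨t, ht⟩ := mem_lIdeal_iff.1 hc   -- t * a = c
  have hb : b ∈ rIdeal c :=
    hR ▸ mem_rIdeal_iff.2 ⟨xb * b, by rw [← mul_assoc]; exact hxb1.symm⟩
  obtain ⟨e, he⟩ := mem_rIdeal_iff.1 hb   -- c * e = b
  have hc' : c ∈ rIdeal b :=
    hR.symm ▸ mem_rIdeal_iff.2 ⟨xc * c, by rw [← mul_assoc]; exact hxc1.symm⟩
  obtain ⟨f, hf⟩ := mem_rIdeal_iff.1 hc'  -- b * f = c
  have hae : a * e * f = a := by
    rw [← hs, mul_assoc s c e, he, mul_assoc s b f, hf]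
  have hb_eq : t * (a * e) = b := by
    rw [← mul_assoc, ht, he]
  have hae_b : a * e = s * b := by
    rw [← hs, mul_assoc, he]
  refine ⟨a * e, ?_, ?_⟩
  · ext w
    simp only [mem_lIdeal_iff]
    constructor
    · rintro ⟨g, rfl⟩
      exact ⟨g * t, by rw [mul_assoc, hb_eq]⟩
    · rintro ⟨g, rfl⟩
      exact ⟨g * s, by rw [hae_b, mul_assoc]⟩
  · ext w
    simp only [mem_rIdeal_iff]
    constructor
    · rintro ⟨g, rfl⟩
      exact ⟨e * g, by rw [← mul_assoc]⟩
    · rintro ⟨g, rfl⟩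
      exact ⟨f * g, by rw [← mul_assoc, hae]⟩

/-- If `a₁, a₂` lie in a `𝓓`-class `D` that is a left or right zero semigroup
and `a₁ ρ a₂`, then `a₁ * b = a₂ * b` and `b * a₁ = b * a₂` for every `b`
whose `𝓓`-class is strictly below `D`. -/
theorem rho_related_act_equally_below
    {S : Type*} [Semigroup S] (hS : CompletelyRegular S)
    (a₁ a₂ : S) (hDrel : dRel a₁ a₂)
    (hD : (∀ x y : S, dRel x a₁ → dRel y a₁ → x * y = x) ∨
          (∀ x y : S, dRel x a₁ → dRel y a₁ → x * y = y))
    (hrho : rhoRel a₁ a₂) :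
    ∀ b : S, dRel (a₁ * b) b → ¬ dRel a₁ b → a₁ * b = a₂ * b ∧ b * a₁ = b * a₂ := by
  intro b hb1 hb2
  have E := hrho.2.1 b hb1 hb2
  have d11 : dRel a₁ a₁ := dRel_refl a₁
  have d21 : dRel a₂ a₁ := dRel_symm hS hDrel
  rcases hD with hZ | hZ
  · -- left zero case
    have e11 : a₁ * a₁ = a₁ := hZ a₁ a₁ d11 d11
    have e22 : a₂ * a₂ = a₂ := hZ a₂ a₂ d21 d21
    have e12 : a₁ * a₂ = a₁ := hZ a₁ a₂ d11 d21
    have e21 : a₂ * a₁ = a₂ := hZ a₂ a₁ d21 d11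
    set u := a₁ * b with hu
    set v := a₂ * b with hv
    set p := b * a₁ with hp
    set q := b * a₂ with hq
    -- E : u * a₁ = v * a₂
    -- Part 1 : u = v
    obtain ⟨x, hx1, hx2⟩ := hS u
    have key1 : u * u * x = u := by
      rw [mul_assoc u u x, hx2, ← mul_assoc u x u]; exact hx1.symm
    have key2 : u * a₁ * u = u * u := by
      rw [hu, mul_assoc (a₁ * b) a₁ (a₁ * b), ← mul_assoc a₁ a₁ b, e11]
    have hv2 : a₂ * u = v := by
      rw [hu, ← mul_assoc, e21, hv]
    have hv3 : a₂ * v = v := by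
      rw [hv, ← mul_assoc, e22]
    have E2 : v * a₁ = v * a₂ := by
      calc v * a₁ = a₂ * u * a₁ := by rw [hv2]
        _ = a₂ * (u * a₁) := mul_assoc a₂ u a₁
        _ = a₂ * (v * a₂) := by rw [E]
        _ = a₂ * v * a₂ := (mul_assoc a₂ v a₂).symm
        _ = v * a₂ := by rw [hv3]
    have huv : u * a₁ = v * a₁ := E.trans E2.symm
    have part1 : u = v := by
      calc u = u * u * x := key1.symm
        _ = u * a₁ * u * x := by rw [key2]
        _ = u * a₁ * (u * x) := mul_assoc (u * a₁) u x
        _ = v * a₁ * (u * x) := by rw [huv]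
        _ = a₂ * u * a₁ * (u * x) := by rw [hv2]
        _ = a₂ * (u * a₁ * u * x) := by simp only [mul_assoc]
        _ = a₂ * (u * u * x) := by rw [key2]
        _ = a₂ * u := by rw [key1]
        _ = v := hv2
    -- Part 2 : p = q
    have hab : a₂ * b = a₁ * b := by
      rw [← hu, ← hv]; exact part1.symm
    obtain ⟨y, hy1, hy2⟩ := hS p
    obtain ⟨z, hz1, hz2⟩ := hS q
    have keyp : y * p * p = p := by
      rw [← hy2]; exact hy1.symm
    have keyp2 : p * a₁ * p = p * p := by
      rw [hp, mul_assoc b a₁ a₁, e11]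
    have ha1u : a₁ * u = u := by rw [hu, ← mul_assoc, e11]
    have ha1v : a₁ * v = u := by rw [hu, hv, ← mul_assoc, e12]
    have hu12 : u * a₁ = u * a₂ := by
      have h : a₁ * (u * a₁) = a₁ * (v * a₂) := by rw [E]
      rw [← mul_assoc a₁ u a₁, ← mul_assoc a₁ v a₂, ha1u, ha1v] at h
      exact h
    have Ea1 : a₁ * p = a₁ * q := by
      rw [hp, hq, ← mul_assoc a₁ b a₁, ← mul_assoc a₁ b a₂, ← hu, hu12]
    have qq : q * q = p * q := by
      rw [hp, hq, mul_assoc b a₂ (b * a₂), ← mul_assoc a₂ b a₂, hab,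
        mul_assoc b a₁ (b * a₂), ← mul_assoc a₁ b a₂]
    have key3 : y * p * a₁ * p = p := by
      rw [mul_assoc y p a₁, mul_assoc y (p * a₁) p, keyp2, ← mul_assoc y p p]
      exact keyp
    have T1 : y * p * a₁ * q = p := by
      rw [mul_assoc (y * p) a₁ q, ← Ea1, ← mul_assoc (y * p) a₁ p]
      exact key3
    have keyq : q * q * z = q := by
      rw [mul_assoc q q z, hz2, ← mul_assoc q z q]; exact hz1.symm
    have q_pw : q = p * (q * z) := by
      rw [← mul_assoc p q z, ← qq]; exact keyq.symm
    have T2' : y * p * a₁ * (p * (q * z)) = p * (q * z) := by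
      rw [← mul_assoc (y * p * a₁) p (q * z), key3]
    have T2 : y * p * a₁ * q = q := by
      rw [q_pw]; exact T2'
    exact ⟨part1, T1.symm.trans T2⟩
  · -- right zero case
    have e11 : a₁ * a₁ = a₁ := hZ a₁ a₁ d11 d11
    have e22 : a₂ * a₂ = a₂ := hZ a₂ a₂ d21 d21
    have e21 : a₂ * a₁ = a₁ := hZ a₂ a₁ d21 d11
    have e12 : a₁ * a₂ = a₂ := hZ a₁ a₂ d11 d21
    set u := a₁ * b with hu
    set v := a₂ * b with hv
    set p := b * a₁ with hp
    set q := b * a₂ with hq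
    -- E : u * a₁ = v * a₂
    -- Part A : p = q
    obtain ⟨y, hy1, hy2⟩ := hS p
    have keyp : y * p * p = p := by
      rw [← hy2]; exact hy1.symm
    have keyp2 : p * a₁ * p = p * p := by
      rw [hp, mul_assoc b a₁ a₁, e11]
    have keyA3 : y * p * a₁ * p = p := by
      rw [mul_assoc y p a₁, mul_assoc y (p * a₁) p, keyp2, ← mul_assoc y p p]
      exact keyp
    have h2 : u * a₁ * a₂ = v * a₂ * a₂ := by rw [E]
    rw [mul_assoc u a₁ a₂, e12, mul_assoc v a₂ a₂, e22] at h2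
    -- h2 : u * a₂ = v * a₂
    have hA0 : u * a₁ = u * a₂ := E.trans h2.symm
    have hA : a₁ * p = a₁ * q := by
      rw [hp, hq, ← mul_assoc a₁ b a₁, ← mul_assoc a₁ b a₂, ← hu, hA0]
    have q_eq : q = p * a₂ := by
      rw [hp, hq, mul_assoc b a₁ a₂, e12]
    have partA : p = q := by
      calc p = y * p * a₁ * p := keyA3.symm
        _ = y * p * (a₁ * p) := mul_assoc (y * p) a₁ p
        _ = y * p * (a₁ * q) := by rw [hA]
        _ = y * p * a₁ * q := (mul_assoc (y * p) a₁ q).symm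
        _ = y * p * a₁ * (p * a₂) := by rw [q_eq]
        _ = y * p * a₁ * p * a₂ := (mul_assoc (y * p * a₁) p a₂).symm
        _ = p * a₂ := by rw [keyA3]
        _ = q := q_eq.symm
    -- Part B : u = v
    have hba : b * a₁ = b * a₂ := by
      rw [← hp, ← hq]; exact partA
    obtain ⟨x, hx1, hx2⟩ := hS u
    obtain ⟨z, hz1, hz2⟩ := hS v
    have keyB1 : u * u * x = u := by
      rw [mul_assoc u u x, hx2, ← mul_assoc u x u]; exact hx1.symm
    have keyB2 : u * a₁ * u = u * u := by
      rw [hu, mul_assoc (a₁ * b) a₁ (a₁ * b), ← mul_assoc a₁ a₁ b, e11]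
    have keyB3 : u * a₁ * (u * x) = u := by
      rw [← mul_assoc (u * a₁) u x, keyB2]
      exact keyB1
    have hB : u * a₁ = v * a₁ := by
      have h3 : u * a₁ * a₁ = v * a₂ * a₁ := by rw [E]
      rw [mul_assoc u a₁ a₁, e11, mul_assoc v a₂ a₁, e21] at h3
      exact h3
    have keyz : z * v * v = v := by
      rw [← hz2]; exact hz1.symm
    have vv : v * v = v * u := by
      rw [hu, hv, mul_assoc a₂ b (a₂ * b), ← mul_assoc b a₂ b, ← hba,
        mul_assoc b a₁ b, ← mul_assoc a₂ b (a₁ * b)]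
    have v_su : v = z * v * u := by
      calc v = z * v * v := keyz.symm
        _ = z * (v * v) := mul_assoc z v v
        _ = z * (v * u) := by rw [vv]
        _ = z * v * u := (mul_assoc z v u).symm
    have hvT : v * (a₁ * (u * x)) = v := by
      rw [v_su, mul_assoc (z * v) u (a₁ * (u * x)), ← mul_assoc u a₁ (u * x), keyB3]
    have partB : u = v := by
      have : v = u := by
        calc v = v * (a₁ * (u * x)) := hvT.symm
          _ = v * a₁ * (u * x) := (mul_assoc v a₁ (u * x)).symm
          _ = u * a₁ * (u * x) := by rw [← hB]
          _ = u := keyB3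
      exact this.symm
    exact ⟨partB, partA⟩
end
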